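/- arXiv:2209.00348 — 6 statements merged into one kernel-verified Lean document; each statement's English description precedes it below -/
import Mathlib

section
/- Let (X,d) be a doubling metric space with doubling constant D ≥ 1. For every ε, t > 0 there exists δ₀ = δ₀(ε,D,t) > 0 such that for all δ ∈ (0,δ₀]: if P ⊆ B(x₀,1) ⊆ X is a δ-separated set satisfying |P ∩ B(x,r)| ≤ C r^t |P| for all x ∈ X and r ≥ δ, then P can be written as a disjoint union P = P₁ ∪ … ∪ P_N with N ≤ C|P|δ^{t−ε}, where each P_j satisfies |P_j ∩ B(x,r)| ≤ (r/δ)^t for all x ∈ X and r ≥ δ. -/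
open Metric MeasureTheory Set
open scoped ENNReal NNReal RealInnerProductSpace

noncomputable section

abbrev E2 := EuclideanSpace ℝ (Fin 2)

/-- Radial projection `π_x(y) = (y-x)/|y-x|`. -/
def radProj {E : Type*} [NormedAddCommGroup E] [NormedSpace ℝ E] (x y : E) : E :=
  ‖y - x‖⁻¹ • (y - x)

/-- A subset of a real vector space is an affine line. -/
def IsAffineLine {E : Type*} [AddCommGroup E] [Module ℝ E] (ℓ : Set E) : Prop :=
  ∃ a v : E, v ≠ 0 ∧ ℓ = {p | ∃ t : ℝ, p = a + t • v}

/-- The (topological) support of a measure. -/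
def msupport {E : Type*} [PseudoMetricSpace E] [MeasurableSpace E] (μ : Measure E) : Set E :=
  {x | ∀ r : ℝ, 0 < r → 0 < μ (ball x r)}

/-- `(μ,ν)` has `(t,K,c)`-thin tubes. -/
def ThinTubesWith (μ ν : Measure E2) (t K c : ℝ) : Prop :=
  ∃ G : Set (E2 × E2), MeasurableSet G ∧ G ⊆ (msupport μ) ×ˢ (msupport ν) ∧
    ENNReal.ofReal c ≤ (μ.prod ν) G ∧
    ∀ x ∈ msupport μ, ∀ r : ℝ, 0 < r → ∀ ℓ : Set E2, IsAffineLine ℓ →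
      x ∈ cthickening r ℓ →
      ν (cthickening r ℓ ∩ {y | (x, y) ∈ G}) ≤ ENNReal.ofReal (K * r ^ t)

/-- `(μ,ν)` has `t`-thin tubes. -/
def ThinTubes (μ ν : Measure E2) (t : ℝ) : Prop :=
  ∃ K c : ℝ, 0 < K ∧ 0 < c ∧ ThinTubesWith μ ν t K c

section
open Filter

section Aux
open scoped Classical

variable {X : Type*} [MetricSpace X] [DecidableEq X]

set_option linter.unusedSectionVars false

/-- Katz–Tao property for a finset. -/
def KTprop (δ t : ℝ) (S : Finset X) : Prop :=
  ∀ (x : X) (r : ℝ), δ ≤ r →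
    ((S.filter (fun p => dist p x ≤ r)).card : ℝ) ≤ (r / δ) ^ t

lemma ncard_sep_eq (S : Finset X) (x : X) (r : ℝ) :
    ({p ∈ (S : Set X) | p ∈ closedBall x r}).ncard
      = (S.filter (fun p => dist p x ≤ r)).card := by
  rw [← Set.ncard_coe_finset]
  congr 1
  ext p
  simp [Metric.mem_closedBall]

lemma KTprop_singleton {δ t : ℝ} (hδ : 0 < δ) (ht : 0 ≤ t) (q : X) :
    KTprop δ t ({q} : Finset X) := by
  intro x r hr
  have h1 : (1:ℝ) ≤ r / δ := (one_le_div hδ).2 hr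
  have : (1:ℝ) ≤ (r / δ) ^ t := by
    calc (1:ℝ) = (1:ℝ) ^ t := (Real.one_rpow t).symm
    _ ≤ (r / δ) ^ t := Real.rpow_le_rpow zero_le_one h1 ht
  refine le_trans ?_ this
  have : (Finset.filter (fun p => dist p x ≤ r) {q}).card ≤ ({q} : Finset X).card :=
    Finset.card_le_card (Finset.filter_subset _ _)
  simpa using (Nat.cast_le (α := ℝ)).2 this

lemma mem_foldr_union (L : List (Finset X)) (a : X) :
    a ∈ L.foldr (· ∪ ·) ∅ ↔ ∃ S ∈ L, a ∈ S := by
  induction L with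
  | nil => simp
  | cons S L ih => simp [ih]

/-- Greedy extraction of maximal Katz–Tao subsets. -/
lemma extract (δ t : ℝ) (hδ : 0 < δ) (ht : 0 < t) :
    ∀ (n : ℕ) (Q : Finset X), Q.card ≤ n → ∃ L : List (Finset X),
      (∀ S ∈ L, S.Nonempty ∧ S ⊆ Q ∧ KTprop δ t S) ∧
      (Q = L.foldr (· ∪ ·) ∅) ∧
      List.Pairwise (fun S T => Disjoint S T ∧ ∀ p ∈ T, ¬ KTprop δ t (insert p S)) L := by
  intro n
  induction n with
  | zero =>
    intro Q hQ
    have : Q = ∅ := Finset.card_eq_zero.1 (Nat.le_zero.1 hQ)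
    exact ⟨[], by simp, by simp [this], by simp⟩
  | succ n ih =>
    intro Q hQ
    rcases Q.eq_empty_or_nonempty with hQe | ⟨q, hq⟩
    · exact ⟨[], by simp, by simp [hQe], by simp⟩
    · set 𝒮 : Finset (Finset X) := Q.powerset.filter (fun S => S.Nonempty ∧ KTprop δ t S) with h𝒮
      have hmem : ({q} : Finset X) ∈ 𝒮 := by
        rw [h𝒮, Finset.mem_filter, Finset.mem_powerset]
        exact ⟨Finset.singleton_subset_iff.2 hq, ⟨q, Finset.mem_singleton_self q⟩,
          KTprop_singleton hδ ht.le q⟩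
      obtain ⟨S, hS𝒮, hSmax⟩ := Finset.exists_max_image 𝒮 Finset.card ⟨_, hmem⟩
      rw [h𝒮, Finset.mem_filter, Finset.mem_powerset] at hS𝒮
      obtain ⟨hSQ, hSne, hSKT⟩ := hS𝒮
      have hmaxp : ∀ p ∈ Q \ S, ¬ KTprop δ t (insert p S) := by
        intro p hp hKT
        rw [Finset.mem_sdiff] at hp
        have hmem' : insert p S ∈ 𝒮 := by
          rw [h𝒮, Finset.mem_filter, Finset.mem_powerset]
          exact ⟨Finset.insert_subset hp.1 hSQ, Finset.insert_nonempty _ _, hKT⟩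
        have := hSmax _ hmem'
        rw [Finset.card_insert_of_notMem hp.2] at this
        omega
      have hcard : (Q \ S).card ≤ n := by
        have h1 : (Q \ S).card < Q.card := by
          apply Finset.card_lt_card
          constructor
          · exact Finset.sdiff_subset
          · intro hsub
            obtain ⟨s, hs⟩ := hSne
            have := hsub (hSQ hs)
            rw [Finset.mem_sdiff] at this
            exact this.2 hs
        omega
      obtain ⟨L, hL1, hL2, hL3⟩ := ih (Q \ S) hcard
      refine ⟨S :: L, ?_, ?_, ?_⟩
      · intro T hT
        rcases List.mem_cons.1 hT with rfl | hT
        · exact ⟨hSne, hSQ, hSKT⟩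
        · obtain ⟨h1, h2, h3⟩ := hL1 T hT
          exact ⟨h1, h2.trans Finset.sdiff_subset, h3⟩
      · show Q = S ∪ L.foldr (· ∪ ·) ∅
        rw [← hL2]
        rw [Finset.union_comm]
        exact (Finset.sdiff_union_of_subset hSQ).symm
      · refine List.Pairwise.cons ?_ hL3
        intro T hT
        have hTsub : T ⊆ Q \ S := (hL1 T hT).2.1
        constructor
        · exact Finset.disjoint_left.2 fun a ha haT =>
            (Finset.mem_sdiff.1 (hTsub haT)).2 ha
        · intro p hp
          exact hmaxp p (hTsub hp)

lemma cover_pow (D : ℕ)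
    (hdoub : ∀ (x : X) (r : ℝ), 0 < r → ∃ F : Finset X, F.card ≤ D ∧
      ball x r ⊆ ⋃ y ∈ F, ball y (r / 2)) :
    ∀ (k : ℕ) (x : X) (r : ℝ), 0 < r → ∃ F : Finset X, F.card ≤ D ^ k ∧
      ball x r ⊆ ⋃ y ∈ F, ball y (r / 2 ^ k) := by
  intro k
  induction k with
  | zero =>
    intro x r hr
    exact ⟨{x}, by simp, by simp⟩
  | succ k ih =>
    intro x r hr
    obtain ⟨F, hFcard, hFcov⟩ := ih x r hr
    have hs : (0:ℝ) < r / 2 ^ k := by positivity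
    have h2 : ∀ y ∈ F, ∃ G : Finset X, G.card ≤ D ∧
        ball y (r / 2 ^ k) ⊆ ⋃ z ∈ G, ball z (r / 2 ^ k / 2) :=
      fun y _ => hdoub y _ hs
    choose! f hf1 hf2 using h2
    refine ⟨F.biUnion f, ?_, ?_⟩
    · calc (F.biUnion f).card ≤ ∑ y ∈ F, (f y).card := Finset.card_biUnion_le
      _ ≤ ∑ _y ∈ F, D := Finset.sum_le_sum hf1
      _ = F.card * D := by rw [Finset.sum_const, smul_eq_mul]
      _ ≤ D ^ k * D := Nat.mul_le_mul_right _ hFcard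
      _ = D ^ (k + 1) := by ring
    · intro a ha
      obtain ⟨y, hy, hay⟩ := by simpa using hFcov ha
      have := hf2 y hy hay
      obtain ⟨z, hz, haz⟩ := by simpa using this
      simp only [Set.mem_iUnion]
      refine ⟨z, Finset.mem_biUnion.2 ⟨y, hy, hz⟩, ?_⟩
      have : r / 2 ^ k / 2 = r / 2 ^ (k+1) := by ring
      rwa [← this]

lemma card_le_of_sep (D : ℕ)
    (hdoub : ∀ (x : X) (r : ℝ), 0 < r → ∃ F : Finset X, F.card ≤ D ∧
      ball x r ⊆ ⋃ y ∈ F, ball y (r / 2))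
    (δ : ℝ) (hδ : 0 < δ) (k : ℕ) (hk : 4 / δ ≤ 2 ^ k)
    (x₀ : X) (P : Finset X) (hP1 : (↑P : Set X) ⊆ closedBall x₀ 1)
    (hsep : ∀ p ∈ P, ∀ q ∈ P, p ≠ q → δ ≤ dist p q) : P.card ≤ D ^ k := by
  obtain ⟨F, hFcard, hFcov⟩ := cover_pow D hdoub k x₀ 2 (by norm_num)
  have hrad : (2:ℝ) / 2 ^ k ≤ δ / 2 := by
    rw [div_le_div_iff₀ (by positivity) (by norm_num)]
    have h2k : (0:ℝ) < 2 ^ k := by positivity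
    rw [div_le_iff₀ hδ] at hk
    nlinarith
  have hmem : ∀ p ∈ P, ∃ y ∈ F, p ∈ ball y (2 / 2 ^ k) := by
    intro p hp
    have : p ∈ ball x₀ 2 := by
      have := hP1 hp
      rw [mem_closedBall] at this
      rw [mem_ball]
      linarith
    simpa using hFcov this
  choose! φ hφ1 hφ2 using hmem
  have hinj : Set.InjOn φ ↑P := by
    intro p hp q hq hpq
    by_contra hne
    have h1 := hφ2 p hp
    have h2 := hφ2 q hq
    rw [mem_ball] at h1 h2
    rw [hpq] at h1
    have : dist p q < δ := by
      calc dist p q ≤ dist p (φ q) + dist (φ q) q := dist_triangle _ _ _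
      _ = dist p (φ q) + dist q (φ q) := by rw [dist_comm (φ q) q]
      _ < 2 / 2 ^ k + 2 / 2 ^ k := by linarith
      _ ≤ δ / 2 + δ / 2 := by linarith
      _ = δ := by ring
    exact absurd (hsep p hp q hq hne) (not_le.2 this)
  calc P.card ≤ F.card := Finset.card_le_card_of_injOn φ (fun p hp => hφ1 p hp) hinj
  _ ≤ D ^ k := hFcard

end Aux

lemma exists_delta0 (ε : ℝ) (hε : 0 < ε) (A B : ℝ) :
    ∃ δ₀ : ℝ, 0 < δ₀ ∧ ∀ δ : ℝ, 0 < δ → δ ≤ δ₀ →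
      δ ≤ 1/2 ∧ δ ^ ε * (A + B * (-Real.log δ)) ≤ 1 := by
  have h1 : Tendsto (fun x : ℝ => x ^ ε) (nhdsWithin 0 (Set.Ioi 0)) (nhds 0) := by
    have hc : ContinuousAt (fun x : ℝ => x ^ ε) 0 :=
      Real.continuousAt_rpow_const 0 ε (Or.inr hε.le)
    have := hc.tendsto
    rw [Real.zero_rpow hε.ne'] at this
    exact this.mono_left nhdsWithin_le_nhds
  have h2 : Tendsto (fun x : ℝ => Real.log x * x ^ ε) (nhdsWithin 0 (Set.Ioi 0)) (nhds 0) :=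
    tendsto_log_mul_rpow_nhdsGT_zero hε
  have hF : Tendsto (fun x : ℝ => x ^ ε * (A + B * (-Real.log x)))
      (nhdsWithin 0 (Set.Ioi 0)) (nhds 0) := by
    have heq : (fun x : ℝ => x ^ ε * (A + B * (-Real.log x)))
        = (fun x : ℝ => A * x ^ ε + B * (-(Real.log x * x ^ ε))) := by
      funext x; ring
    rw [heq]
    have := ((h1.const_mul A).add ((h2.neg).const_mul B))
    simpa using this
  have hev : ∀ᶠ x in nhdsWithin (0:ℝ) (Set.Ioi 0),
      x ^ ε * (A + B * (-Real.log x)) < 1 :=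
    hF.eventually_lt_const (by norm_num : (0:ℝ) < 1)
  have hev2 : ∀ᶠ x in nhdsWithin (0:ℝ) (Set.Ioi 0), x < 1/2 := by
    have : Set.Iio (1/2 : ℝ) ∈ nhds (0:ℝ) := Iio_mem_nhds (by norm_num)
    exact eventually_nhdsWithin_of_eventually_nhds this
  have := hev.and hev2
  rw [eventually_iff, mem_nhdsGT_iff_exists_Ioc_subset] at this
  obtain ⟨u, hu, hsub⟩ := this
  refine ⟨u, hu, fun δ hδ hδu => ?_⟩
  have := hsub ⟨hδ, hδu⟩
  exact ⟨this.2.le, this.1.le⟩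

end

set_option maxHeartbeats 2000000

/-- Decomposition of a `(δ,t,C)`-set in a doubling metric space into few Katz–Tao
`(δ,t,1)`-sets. -/
theorem katz_tao_decomposition {X : Type*} [MetricSpace X] [DecidableEq X]
    (D : ℕ) (hD : 1 ≤ D)
    (hdoub : ∀ (x : X) (r : ℝ), 0 < r → ∃ F : Finset X, F.card ≤ D ∧
      ball x r ⊆ ⋃ y ∈ F, ball y (r / 2))
    (ε t : ℝ) (hε : 0 < ε) (ht : 0 < t) :
    ∃ δ₀ : ℝ, 0 < δ₀ ∧ ∀ δ : ℝ, 0 < δ → δ ≤ δ₀ →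
      ∀ C : ℝ, 0 < C → ∀ (x₀ : X) (P : Finset X),
        (↑P : Set X) ⊆ closedBall x₀ 1 →
        (∀ p ∈ P, ∀ q ∈ P, p ≠ q → δ ≤ dist p q) →
        (∀ (x : X) (r : ℝ), δ ≤ r →
          (({p ∈ (P : Set X) | p ∈ closedBall x r}).ncard : ℝ) ≤ C * r ^ t * P.card) →
        ∃ (N : ℕ) (parts : Fin N → Finset X),
          ((N : ℝ) ≤ C * P.card * δ ^ (t - ε)) ∧
          (∀ i j : Fin N, i ≠ j → Disjoint (parts i) (parts j)) ∧
          (P = Finset.univ.biUnion parts) ∧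
          (∀ (i : Fin N) (x : X) (r : ℝ), δ ≤ r →
            (({p ∈ (parts i : Set X) | p ∈ closedBall x r}).ncard : ℝ) ≤ (r / δ) ^ t) := by
  classical
  set c1 : ℝ := Real.logb 2 D with hc1def
  have hc1 : 0 ≤ c1 := Real.logb_nonneg (by norm_num) (by exact_mod_cast hD)
  -- constants for the asymptotic bound
  set A : ℝ := 1 + 2*(4:ℝ)^t*(1 + (1/t)*(1 + 3*c1)) with hAdef
  set B : ℝ := 2*(4:ℝ)^t*((1/t)*c1/Real.log 2) with hBdef
  obtain ⟨δ₀, hδ₀pos, hδ₀⟩ := exists_delta0 ε hε A B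
  refine ⟨δ₀, hδ₀pos, ?_⟩
  intro δ hδ hδδ₀ C hC x₀ P hPball hsep hP
  obtain ⟨hδhalf, hδsmall⟩ := hδ₀ δ hδ hδδ₀
  have hδ1 : δ ≤ 1 := by linarith
  -- extraction
  obtain ⟨L, hL1, hL2, hL3⟩ := extract δ t hδ ht P.card P le_rfl
  set N := L.length with hNdef
  set S : ℕ → Finset X := fun i => L.getD i ∅ with hSdef
  have hSget : ∀ i (h : i < N), S i = L.get ⟨i, h⟩ := fun i h => by
    show L.getD i ∅ = _
    simp [List.getD_eq_getElem?_getD, List.getElem?_eq_getElem h]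
  have hSmem : ∀ i, i < N → S i ∈ L := by
    intro i h
    rw [hSget i h]
    exact List.get_mem L ⟨i, h⟩
  have hSprops : ∀ i, i < N → (S i).Nonempty ∧ S i ⊆ P ∧ KTprop δ t (S i) :=
    fun i h => hL1 _ (hSmem i h)
  have hrel : ∀ i j : ℕ, i < j → ∀ (hj : j < N),
      Disjoint (S i) (S j) ∧ ∀ q ∈ S j, ¬ KTprop δ t (insert q (S i)) := by
    intro i j hij hj
    have hi : i < N := lt_trans hij hj
    have := List.pairwise_iff_get.mp hL3 ⟨i, hi⟩ ⟨j, hj⟩ (by exact hij)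
    rwa [← hSget i hi, ← hSget j hj] at this
  have hPmem : ∀ a, a ∈ P ↔ ∃ i : Fin N, a ∈ S i := by
    intro a
    rw [hL2, mem_foldr_union]
    constructor
    · rintro ⟨T, hT, haT⟩
      obtain ⟨i, hi⟩ := List.mem_iff_get.1 hT
      refine ⟨⟨i.1, i.2⟩, ?_⟩
      have hST : S i.1 = T := by rw [hSget i.1 i.2]; exact hi
      show a ∈ S i.1
      rw [hST]
      exact haT
    · rintro ⟨i, hi⟩
      exact ⟨S i, hSmem i i.2, hi⟩
  refine ⟨N, fun i => S i, ?_, ?_, ?_, ?_⟩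
  · -- the cardinality bound
    rcases Nat.eq_zero_or_pos N with hN0 | hNpos
    · rw [hN0]
      norm_num
      positivity
    · -- pick a point in the last set
      obtain ⟨p, hplast⟩ := (hSprops (N-1) (by omega)).1
      have hpP : p ∈ P := (hSprops (N-1) (by omega)).2.1 hplast
      -- 1 ≤ C δ^t |P|
      have h1 : (1:ℝ) ≤ C * δ ^ t * P.card := by
        have hcount := hP p δ le_rfl
        rw [ncard_sep_eq] at hcount
        have hple : 1 ≤ (P.filter (fun q => dist q p ≤ δ)).card := by
          refine Finset.card_pos.2 ⟨p, ?_⟩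
          simp [hpP, dist_self, hδ.le]
        have : (1:ℝ) ≤ ((P.filter (fun q => dist q p ≤ δ)).card : ℝ) := by
          exact_mod_cast hple
        linarith
    -- doubling cardinality bound
      set k : ℕ := ⌈Real.logb 2 (4/δ)⌉₊ with hkdef
      have h4δ : (1:ℝ) ≤ 4/δ := by
        rw [le_div_iff₀ hδ]; linarith
      have hlogb0 : 0 ≤ Real.logb 2 (4/δ) := Real.logb_nonneg (by norm_num) h4δ
      have hk4 : 4/δ ≤ (2:ℝ) ^ k := by
        have h1' : 4/δ = (2:ℝ) ^ (Real.logb 2 (4/δ)) :=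
          (Real.rpow_logb (by norm_num) (by norm_num) (by linarith)).symm
        have h2' : (2:ℝ) ^ (Real.logb 2 (4/δ)) ≤ (2:ℝ) ^ ((k:ℝ)) :=
          Real.rpow_le_rpow_of_exponent_le (by norm_num) (Nat.le_ceil _)
        rw [h1']
        calc (2:ℝ) ^ (Real.logb 2 (4/δ)) ≤ (2:ℝ) ^ ((k:ℝ)) := h2'
        _ = (2:ℝ) ^ k := by rw [Real.rpow_natCast]
      have hcardP : P.card ≤ D ^ k := card_le_of_sep D hdoub δ hδ k hk4 x₀ P hPball hsep
      have hkreal : (k:ℝ) ≤ Real.logb 2 (4/δ) + 1 := (Nat.ceil_lt_add_one hlogb0).le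
      -- per-index scale data
      have key : ∀ i ∈ Finset.range (N-1), ∃ j : ℕ,
          (((2:ℝ)^j) ^ t < (P.card:ℝ) + 1) ∧
          (((2:ℝ)^j) ^ t / 2 ≤ (((S i).filter (fun q => dist q p ≤ 4*δ*2^j)).card : ℝ)) := by
        intro i hi
        rw [Finset.mem_range] at hi
        have hiN : i < N := by omega
        have hKTi := (hSprops i hiN).2.2
        have hnKT := (hrel i (N-1) hi (by omega)).2 p hplast
        rw [KTprop] at hnKT
        push_neg at hnKT
        obtain ⟨x, r, hr, hlt⟩ := hnKT
        have hrpos : 0 < r := lt_of_lt_of_le hδ hr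
        have hrd1 : (1:ℝ) ≤ r/δ := (one_le_div hδ).2 hr
        -- p must be in the ball
        have hpx : dist p x ≤ r := by
          by_contra h
          rw [Finset.filter_insert, if_neg h] at hlt
          exact absurd (hKTi x r hr) (not_le.2 hlt)
        rw [Finset.filter_insert, if_pos hpx] at hlt
        set c : ℕ := ((S i).filter (fun q => dist q x ≤ r)).card with hcdef
        have hlt' : (r/δ) ^ t < (c:ℝ) + 1 := by
          have := Finset.card_insert_le p ((S i).filter (fun q => dist q x ≤ r))
          have h2 : ((insert p ((S i).filter (fun q => dist q x ≤ r))).card : ℝ) ≤ (c:ℝ) + 1 := by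
            exact_mod_cast this
          linarith
        have hrdt1 : (1:ℝ) ≤ (r/δ) ^ t := Real.one_le_rpow hrd1 ht.le
        have hcpos : 1 ≤ c := by
          by_contra h
          push_neg at h
          interval_cases c
          · simp at hlt'; linarith
        set n : ℕ := ⌊r/δ⌋₊ with hndef
        have hn1 : 1 ≤ n := Nat.le_floor (by exact_mod_cast hrd1)
        set j : ℕ := Nat.log 2 n with hjdef
        have h2jn : (2:ℕ)^j ≤ n := Nat.pow_log_le_self 2 (by omega)
        have h2j : (2:ℝ)^j ≤ r/δ := by
          calc (2:ℝ)^j = ((2^j : ℕ) : ℝ) := by push_cast; ring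
          _ ≤ (n:ℝ) := by exact_mod_cast h2jn
          _ ≤ r/δ := Nat.floor_le (by positivity)
        have hj2 : r/δ < (2:ℝ)^(j+1) := by
          have h1' : n < 2^(j+1) := Nat.lt_pow_succ_log_self (by norm_num) n
          have h2' : (n:ℝ) + 1 ≤ (2:ℝ)^(j+1) := by
            have : (n+1 : ℕ) ≤ 2^(j+1) := h1'
            calc (n:ℝ) + 1 = ((n+1 : ℕ) : ℝ) := by push_cast; ring
            _ ≤ ((2^(j+1) : ℕ) : ℝ) := by exact_mod_cast this
            _ = (2:ℝ)^(j+1) := by push_cast; ring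
          calc r/δ < (n:ℝ) + 1 := Nat.lt_floor_add_one _
          _ ≤ (2:ℝ)^(j+1) := h2'
        set b : ℝ := ((2:ℝ)^j) ^ t with hbdef
        have hbpos : 0 < b := Real.rpow_pos_of_pos (by positivity) t
        have hbt : b ≤ (r/δ) ^ t := Real.rpow_le_rpow (by positivity) h2j ht.le
        have hcP : c ≤ P.card := by
          calc c ≤ (S i).card := Finset.card_le_card (Finset.filter_subset _ _)
          _ ≤ P.card := Finset.card_le_card (hSprops i hiN).2.1
        refine ⟨j, ?_, ?_⟩
        · calc b ≤ (r/δ) ^ t := hbt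
          _ < (c:ℝ) + 1 := hlt'
          _ ≤ (P.card:ℝ) + 1 := by exact_mod_cast (by omega : c + 1 ≤ P.card + 1)
        · -- b/2 ≤ card of bigger filter
          have hsub : (S i).filter (fun q => dist q x ≤ r)
              ⊆ (S i).filter (fun q => dist q p ≤ 4*δ*2^j) := by
            intro q hq
            rw [Finset.mem_filter] at hq ⊢
            refine ⟨hq.1, ?_⟩
            have h2r : r ≤ 2*δ*2^j := by
              have : r = δ * (r/δ) := by field_simp
              rw [this]
              have := hj2
              have h2exp : (2:ℝ)^(j+1) = 2*2^j := by ring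
              nlinarith [hδ]
            calc dist q p ≤ dist q x + dist x p := dist_triangle _ _ _
            _ = dist q x + dist p x := by rw [dist_comm x p]
            _ ≤ r + r := add_le_add hq.2 hpx
            _ ≤ 4*δ*2^j := by linarith
          have hcc : (c:ℝ) ≤ (((S i).filter (fun q => dist q p ≤ 4*δ*2^j)).card : ℝ) := by
            exact_mod_cast Finset.card_le_card hsub
          have hbc : b/2 ≤ (c:ℝ) := by
            rcases le_or_gt b 2 with hb2 | hb2
            · have : (1:ℝ) ≤ (c:ℝ) := by exact_mod_cast hcpos
              linarith
            · have : b - 1 < (c:ℝ) := by linarith [hbt, hlt']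
              linarith
          linarith
      choose! jf hjf1 hjf2 using key
      -- scales bounded
      set m : ℕ := ⌊((P.card:ℝ)+1) ^ (1/t)⌋₊ with hmdef
      set K₀ : ℕ := Nat.log 2 m + 1 with hK₀def
      have hy0 : (0:ℝ) ≤ (P.card:ℝ) := Nat.cast_nonneg _
      have hy1 : (1:ℝ) ≤ ((P.card:ℝ)+1) := by linarith
      have hyt1 : (1:ℝ) ≤ ((P.card:ℝ)+1) ^ (1/t) := Real.one_le_rpow hy1 (by positivity)
      have hm1 : 1 ≤ m := by
        rw [hmdef]
        exact Nat.le_floor (by exact_mod_cast hyt1)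
      have hscale : ∀ i ∈ Finset.range (N-1), jf i < K₀ := by
        intro i hi
        have h1' := hjf1 i hi
        have h2' : (2:ℝ)^(jf i) ≤ ((P.card:ℝ)+1) ^ (1/t) := by
          have h3' := Real.rpow_le_rpow (by positivity) h1'.le
            (by positivity : (0:ℝ) ≤ 1/t)
          rw [one_div]
          rwa [one_div, Real.rpow_rpow_inv (by positivity) ht.ne'] at h3'
        have h4' : (2:ℕ)^(jf i) ≤ m := by
          rw [hmdef]
          exact Nat.le_floor (by push_cast; exact h2')
        have h5' : jf i ≤ Nat.log 2 m := (Nat.le_log_iff_pow_le (by norm_num) (by omega)).2 h4'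
        omega
      -- fiber bound
      set M : ℝ := 2*(4:ℝ)^t*(C*δ^t*P.card) with hMdef
      have h4tpos : (0:ℝ) < (4:ℝ)^t := Real.rpow_pos_of_pos (by norm_num) t
      have hfib : ∀ jj : ℕ, (((Finset.range (N-1)).filter (fun i => jf i = jj)).card : ℝ) ≤ M := by
        intro jj
        set I := (Finset.range (N-1)).filter (fun i => jf i = jj) with hIdef
        set R : ℝ := 4*δ*2^jj with hRdef
        have hRδ : δ ≤ R := by
          have h1' : (1:ℝ) ≤ 4*2^jj := by
            have : (1:ℝ) ≤ (2:ℝ)^jj := one_le_pow₀ (by norm_num)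
            linarith
          calc δ = δ * 1 := by ring
          _ ≤ δ * (4*2^jj) := by nlinarith
          _ = R := by rw [hRdef]; ring
        set T : ℕ → Finset X := fun i => (S i).filter (fun q => dist q p ≤ R) with hTdef
        set b : ℝ := ((2:ℝ)^jj) ^ t with hbdef
        have hbpos : 0 < b := Real.rpow_pos_of_pos (by positivity) t
        have hIrange : ∀ i ∈ I, i ∈ Finset.range (N-1) := fun i hi =>
          (Finset.mem_filter.1 hi).1
        have hdisjT : ∀ i ∈ I, ∀ i' ∈ I, i ≠ i' → Disjoint (T i) (T i') := by
          intro i hi i' hi' hne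
          have hiN : i < N - 1 := Finset.mem_range.1 (hIrange i hi)
          have hi'N : i' < N - 1 := Finset.mem_range.1 (hIrange i' hi')
          have hdisj : Disjoint (S i) (S i') := by
            rcases lt_or_gt_of_ne hne with h | h
            · exact (hrel i i' h (by omega)).1
            · exact ((hrel i' i h (by omega)).1).symm
          exact hdisj.mono (Finset.filter_subset _ _) (Finset.filter_subset _ _)
        have hsum : ∑ i ∈ I, (T i).card = (I.biUnion T).card := (Finset.card_biUnion hdisjT).symm
        have hbsub : I.biUnion T ⊆ P.filter (fun q => dist q p ≤ R) := by
          intro q hq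
          obtain ⟨i, hi, hqT⟩ := Finset.mem_biUnion.1 hq
          rw [Finset.mem_filter] at hqT ⊢
          have hiN : i < N := by
            have := Finset.mem_range.1 (hIrange i hi); omega
          exact ⟨(hSprops i hiN).2.1 hqT.1, hqT.2⟩
        have hPcount : ((P.filter (fun q => dist q p ≤ R)).card : ℝ) ≤ C * R^t * P.card := by
          rw [← ncard_sep_eq]
          exact hP p R hRδ
        have hlow : ∀ i ∈ I, b/2 ≤ ((T i).card : ℝ) := by
          intro i hi
          have h1' := hjf2 i (hIrange i hi)
          have h2' : jf i = jj := (Finset.mem_filter.1 hi).2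
          rw [h2'] at h1'
          exact h1'
        have hsum2 : (I.card : ℝ) * (b/2) ≤ ∑ i ∈ I, ((T i).card : ℝ) := by
          have := Finset.card_nsmul_le_sum I (fun i => ((T i).card : ℝ)) (b/2) hlow
          rwa [nsmul_eq_mul] at this
        have hsum3 : ∑ i ∈ I, ((T i).card : ℝ) ≤ C * R^t * P.card := by
          calc ∑ i ∈ I, ((T i).card : ℝ) = ((∑ i ∈ I, (T i).card : ℕ) : ℝ) := by push_cast; ring
          _ = ((I.biUnion T).card : ℝ) := by rw [hsum]
          _ ≤ ((P.filter (fun q => dist q p ≤ R)).card : ℝ) := by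
              exact_mod_cast Finset.card_le_card hbsub
          _ ≤ C * R^t * P.card := hPcount
        have hRt : R ^ t = (4:ℝ)^t * δ^t * b := by
          rw [hRdef, hbdef]
          rw [show (4*δ*2^jj : ℝ) = (4*δ)*2^jj by ring]
          rw [Real.mul_rpow (by positivity) (by positivity),
            Real.mul_rpow (by norm_num) hδ.le]
        have hfinal : (I.card : ℝ) * (b/2) ≤ (M/2) * b := by
          calc (I.card : ℝ) * (b/2) ≤ C * R^t * P.card := le_trans hsum2 hsum3
          _ = (M/2) * b := by rw [hRt, hMdef]; ring
        have : (I.card : ℝ) ≤ M := by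
          have hb2 : (0:ℝ) < b/2 := by linarith
          have := (mul_le_mul_iff_of_pos_right hb2).1 (by linarith [hfinal] : (I.card : ℝ) * (b/2) ≤ M * (b/2))
          exact this
        exact this
      -- total bound
      have htotal : ((N:ℝ) - 1) ≤ (K₀:ℝ) * M := by
        have hsub : Finset.range (N-1) ⊆ (Finset.range K₀).biUnion
            (fun jj => (Finset.range (N-1)).filter (fun i => jf i = jj)) := by
          intro i hi
          exact Finset.mem_biUnion.2 ⟨jf i, Finset.mem_range.2 (hscale i hi),
            Finset.mem_filter.2 ⟨hi, rfl⟩⟩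
        have h1' : (N - 1 : ℕ) ≤ ∑ jj ∈ Finset.range K₀,
            ((Finset.range (N-1)).filter (fun i => jf i = jj)).card := by
          calc (N - 1 : ℕ) = (Finset.range (N-1)).card := by rw [Finset.card_range]
          _ ≤ ((Finset.range K₀).biUnion
              (fun jj => (Finset.range (N-1)).filter (fun i => jf i = jj))).card :=
            Finset.card_le_card hsub
          _ ≤ ∑ jj ∈ Finset.range K₀,
              ((Finset.range (N-1)).filter (fun i => jf i = jj)).card :=
            Finset.card_biUnion_le
        have hsumcast : (((N - 1 : ℕ)):ℝ) ≤ ∑ jj ∈ Finset.range K₀,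
            (((Finset.range (N-1)).filter (fun i => jf i = jj)).card : ℝ) := by
          rw [← Nat.cast_sum]
          exact_mod_cast h1'
        have h2' : (((N-1 : ℕ)):ℝ) ≤ (K₀:ℝ) * M := by
          refine hsumcast.trans ?_
          calc ∑ jj ∈ Finset.range K₀,
              (((Finset.range (N-1)).filter (fun i => jf i = jj)).card : ℝ)
              ≤ ∑ _jj ∈ Finset.range K₀, M := Finset.sum_le_sum (fun jj _ => hfib jj)
          _ = (K₀:ℝ) * M := by rw [Finset.sum_const, nsmul_eq_mul, Finset.card_range]
        have : ((N:ℝ) - 1) = (((N-1 : ℕ)):ℝ) := by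
          rw [Nat.cast_sub hNpos]; norm_num
        rw [this]
        exact h2'
      -- bound K₀
      have hK₀ : (K₀:ℝ) ≤ 1 + (1/t)*(1 + (3 + (-Real.log δ)/Real.log 2)*c1) := by
        have hlog2pos : (0:ℝ) < Real.log 2 := Real.log_pos (by norm_num)
        have hDpos : (0:ℝ) < (D:ℝ) := by exact_mod_cast hD
        have hDk1 : (1:ℝ) ≤ ((D:ℝ))^k := one_le_pow₀ (by exact_mod_cast hD)
        have s1 : ((Nat.log 2 m : ℕ) : ℝ) ≤ Real.logb 2 m := Real.natLog_le_logb m 2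
        have s2 : Real.logb 2 m ≤ Real.logb 2 (((P.card:ℝ)+1) ^ (1/t)) := by
          apply Real.logb_le_logb_of_le (by norm_num)
            (by exact_mod_cast hm1 : (0:ℝ) < (m:ℝ))
          exact Nat.floor_le (by positivity)
        have s3 : Real.logb 2 (((P.card:ℝ)+1) ^ (1/t)) = (1/t) * Real.logb 2 ((P.card:ℝ)+1) :=
          Real.logb_rpow_eq_mul_logb_of_pos (by positivity)
        have s4 : Real.logb 2 ((P.card:ℝ)+1) ≤ Real.logb 2 (2*((D:ℝ))^k) := by
          apply Real.logb_le_logb_of_le (by norm_num) (by positivity)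
          have : (P.card : ℝ) ≤ ((D:ℝ))^k := by exact_mod_cast hcardP
          linarith
        have s5 : Real.logb 2 (2*((D:ℝ))^k) = 1 + (k:ℝ)*c1 := by
          rw [Real.logb_mul (by norm_num) (by positivity), Real.logb_self_eq_one (by norm_num), Real.logb_pow]
        have s6 : Real.logb 2 (4/δ) = 2 + (-Real.log δ)/Real.log 2 := by
          rw [div_eq_mul_inv, Real.logb_mul (by norm_num) (by positivity)]
          have h4 : Real.logb 2 (4:ℝ) = 2 := by
            rw [show (4:ℝ) = 2^(2:ℕ) by norm_num, Real.logb_pow,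
              Real.logb_self_eq_one (by norm_num)]
            norm_num
          rw [h4, Real.logb, Real.log_inv]
        have s7 : (k:ℝ) ≤ 3 + (-Real.log δ)/Real.log 2 := by
          rw [s6] at hkreal
          linarith
        have s8 : (k:ℝ)*c1 ≤ (3 + (-Real.log δ)/Real.log 2)*c1 := by
          apply mul_le_mul_of_nonneg_right s7 hc1
        have hchain : ((Nat.log 2 m : ℕ) : ℝ) ≤ (1/t)*(1 + (3 + (-Real.log δ)/Real.log 2)*c1) := by
          have h1t : (0:ℝ) ≤ 1/t := by positivity
          calc ((Nat.log 2 m : ℕ) : ℝ) ≤ Real.logb 2 m := s1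
          _ ≤ (1/t) * Real.logb 2 ((P.card:ℝ)+1) := by rw [← s3]; exact s2
          _ ≤ (1/t) * (1 + (k:ℝ)*c1) := by
              apply mul_le_mul_of_nonneg_left _ h1t
              rw [← s5]; exact s4
          _ ≤ (1/t) * (1 + (3 + (-Real.log δ)/Real.log 2)*c1) := by
              apply mul_le_mul_of_nonneg_left _ h1t
              linarith
        rw [hK₀def]
        push_cast
        linarith
      -- assemble
      set G : ℝ := 1 + (1/t)*(1 + (3 + (-Real.log δ)/Real.log 2)*c1) with hGdef
      have hGpos : 0 ≤ G := le_trans (by positivity : (0:ℝ) ≤ (K₀:ℝ)) hK₀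
      have hNbound : (N:ℝ) ≤ (C*δ^t*P.card) * (1 + 2*(4:ℝ)^t*G) := by
        have hMexp : M = 2*(4:ℝ)^t*(C*δ^t*P.card) := hMdef
        have hK₀M : (K₀:ℝ)*M ≤ G * (2*(4:ℝ)^t*(C*δ^t*P.card)) := by
          rw [hMexp]
          apply mul_le_mul_of_nonneg_right hK₀
          positivity
        have hCpos : (0:ℝ) ≤ C*δ^t*P.card := by positivity
        calc (N:ℝ) ≤ 1 + (K₀:ℝ)*M := by linarith [htotal]
        _ ≤ (C*δ^t*P.card) + G * (2*(4:ℝ)^t*(C*δ^t*P.card)) := by linarith [h1, hK₀M]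
        _ = (C*δ^t*P.card) * (1 + 2*(4:ℝ)^t*G) := by ring
      -- the asymptotic bound
      have hAB : A + B * (-Real.log δ) = 1 + 2*(4:ℝ)^t*G := by
        rw [hAdef, hBdef, hGdef]
        field_simp
        ring
      have hδε : (1 + 2*(4:ℝ)^t*G) ≤ δ ^ (-ε) := by
        have hδεpos : (0:ℝ) < δ ^ ε := Real.rpow_pos_of_pos hδ ε
        have hZ : A + B * (-Real.log δ) ≤ (δ ^ ε)⁻¹ := by
          rw [← one_div, le_div_iff₀ hδεpos]
          calc (A + B * (-Real.log δ)) * δ ^ ε = δ ^ ε * (A + B * (-Real.log δ)) := by ring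
          _ ≤ 1 := hδsmall
        rw [Real.rpow_neg hδ.le, ← hAB]
        exact hZ
      calc (N:ℝ) ≤ (C*δ^t*P.card) * (1 + 2*(4:ℝ)^t*G) := hNbound
      _ ≤ (C*δ^t*P.card) * δ^(-ε) := by
          apply mul_le_mul_of_nonneg_left hδε (by positivity)
      _ = C * P.card * δ^(t-ε) := by
          rw [show t - ε = t + (-ε) by ring, Real.rpow_add hδ]
          ring
  · -- disjointness
    intro i j hij
    rcases lt_trichotomy (i:ℕ) (j:ℕ) with h | h | h
    · exact (hrel i j h j.2).1
    · exact absurd (Fin.ext h) hij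
    · exact ((hrel j i h i.2).1).symm
  · -- union
    ext a
    rw [Finset.mem_biUnion]
    rw [hPmem a]
    constructor
    · rintro ⟨i, hi⟩; exact ⟨i, Finset.mem_univ i, hi⟩
    · rintro ⟨i, _, hi⟩; exact ⟨i, hi⟩
  · -- Katz–Tao property of parts
    intro i x r hr
    rw [ncard_sep_eq]
    exact (hSprops i i.2).2.2 x r hr
end
end

section
/- Let s ∈ (0,1], let ℓ ⊆ ℝ² be an affine line, and let μ, ν be Borel probability measures on ℝ² with separated supports such that spt(μ) ⊆ ℓ, spt(ν) ⊆ ℝ² \ ℓ, and both satisfy the Frostman condition μ(B(x,r)) ≲ r^s, ν(B(x,r)) ≲ r^s for all x and r > 0. Then for every 0 ≤ σ < s, the pair (μ,ν) has σ-thin tubes: there exist K, c > 0 and a Borel set G ⊆ spt(μ) × spt(ν) with (μ×ν)(G) ≥ c such that for every x ∈ spt(μ), ν(T ∩ G|_x) ≤ K r^σ for all r > 0 and all r-tubes T containing x. -/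
open Metric MeasureTheory Set
open scoped ENNReal NNReal RealInnerProductSpace

noncomputable section

/-! ### Auxiliary plane-geometry lemmas -/

def cross (p q : E2) : ℝ := p 0 * q 1 - p 1 * q 0
def dotp (p q : E2) : ℝ := p 0 * q 0 + p 1 * q 1

lemma sub_apply' (p q : E2) (i : Fin 2) : (p - q) i = p i - q i := rfl
lemma add_apply' (p q : E2) (i : Fin 2) : (p + q) i = p i + q i := rfl
lemma smul_apply' (t : ℝ) (p : E2) (i : Fin 2) : (t • p) i = t * p i := rfl

lemma norm_sq_eq (p : E2) : ‖p‖ ^ 2 = p 0 ^ 2 + p 1 ^ 2 := by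
  rw [EuclideanSpace.norm_eq]
  rw [Real.sq_sqrt (by positivity)]
  simp [Fin.sum_univ_two, sq]

lemma abs_cross_le (p q : E2) : |cross p q| ≤ ‖p‖ * ‖q‖ := by
  have hb : (‖p‖*‖q‖) ^ 2 = (p 0 ^ 2 + p 1 ^ 2) * (q 0 ^ 2 + q 1 ^ 2) := by
    rw [mul_pow, norm_sq_eq, norm_sq_eq]
  have hpq : 0 ≤ ‖p‖ * ‖q‖ := by positivity
  rw [abs_le]
  simp only [cross]
  constructor <;> nlinarith [sq_nonneg (p 0 * q 0 + p 1 * q 1)]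

lemma abs_dotp_le (p q : E2) : |dotp p q| ≤ ‖p‖ * ‖q‖ := by
  have hb : (‖p‖*‖q‖) ^ 2 = (p 0 ^ 2 + p 1 ^ 2) * (q 0 ^ 2 + q 1 ^ 2) := by
    rw [mul_pow, norm_sq_eq, norm_sq_eq]
  have hpq : 0 ≤ ‖p‖ * ‖q‖ := by positivity
  rw [abs_le]
  simp only [dotp]
  constructor <;> nlinarith [sq_nonneg (p 0 * q 1 - p 1 * q 0)]

lemma lagrange (p u : E2) (hu : ‖u‖ = 1) : dotp p u ^ 2 + cross p u ^ 2 = ‖p‖ ^ 2 := by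
  have h2 := norm_sq_eq u
  rw [hu] at h2
  simp only [cross, dotp]
  rw [norm_sq_eq]
  nlinarith [h2]

lemma cross_decomp (p q u : E2) (hu : ‖u‖ = 1) :
    cross p q = cross p u * dotp q u - dotp p u * cross q u := by
  have h2 := norm_sq_eq u
  rw [hu] at h2
  simp only [cross, dotp]
  linear_combination (p 0 * q 1 - p 1 * q 0) * h2

lemma cross_sub (p q w : E2) : cross (p - q) w = cross p w - cross q w := by
  simp only [cross, sub_apply']; ring

lemma cross_add_smul (p q w : E2) (t : ℝ) :
    cross p (q + t • w) = cross p q + t * cross p w := by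
  simp only [cross, add_apply', smul_apply']; ring

lemma cross_self_smul (u : E2) (t : ℝ) : cross (t • u) u = 0 := by
  simp only [cross, smul_apply']; ring

lemma norm_unit_vec {v : E2} (hv : v ≠ 0) : ‖‖v‖⁻¹ • v‖ = 1 := by
  have h0 : ‖v‖ ≠ 0 := norm_ne_zero_iff.mpr hv
  rw [norm_smul, norm_inv, norm_norm]
  field_simp

lemma line_repr {a v x : E2} (hv : v ≠ 0) (hx : ∃ t : ℝ, x = a + t • v) :
    ∃ t : ℝ, x = a + t • (‖v‖⁻¹ • v) ∧ |t| = ‖x - a‖ := by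
  obtain ⟨t₀, ht₀⟩ := hx
  have h0 : ‖v‖ ≠ 0 := norm_ne_zero_iff.mpr hv
  refine ⟨t₀ * ‖v‖, ?_, ?_⟩
  · rw [ht₀]
    congr 1
    rw [smul_smul]
    congr 1
    field_simp
  · have : x - a = (t₀ * ‖v‖) • (‖v‖⁻¹ • v) := by
      rw [ht₀]
      rw [smul_smul]
      have : t₀ * ‖v‖ * ‖v‖⁻¹ = t₀ := by field_simp
      rw [this]
      abel
    rw [this, norm_smul, norm_unit_vec hv]
    simp [abs_mul]

lemma cross_le_of_mem_cthickening {a v : E2} (hv : v ≠ 0) {r : ℝ} (hr : 0 ≤ r) {z : E2}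
    (hz : z ∈ cthickening r {p : E2 | ∃ t : ℝ, p = a + t • v}) :
    |cross (z - a) (‖v‖⁻¹ • v)| ≤ r := by
  set u := ‖v‖⁻¹ • v with hu
  have hune : ‖u‖ = 1 := norm_unit_vec hv
  have hkey : ∀ p ∈ {p : E2 | ∃ t : ℝ, p = a + t • v},
      |cross (z - a) u| ≤ dist z p := by
    rintro p hp
    obtain ⟨t, ht, -⟩ := line_repr hv hp
    have h1 : cross (z - a) u = cross (z - p) u := by
      have : cross (p - a) u = 0 := by
        rw [ht]
        have : a + t • u - a = t • u := by abel
        rw [this, cross_self_smul]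
      have h2 := cross_sub (z - a) (p - a) u
      have h3 : z - a - (p - a) = z - p := by abel
      rw [h3] at h2
      rw [this, sub_zero] at h2
      linarith [h2.symm.le, h2.le]
    rw [h1]
    calc |cross (z - p) u| ≤ ‖z - p‖ * ‖u‖ := abs_cross_le _ _
      _ = dist z p := by rw [hune, mul_one, dist_eq_norm]
  have hlb : ENNReal.ofReal |cross (z - a) u| ≤ Metric.infEDist z {p : E2 | ∃ t : ℝ, p = a + t • v} := by
    rw [Metric.le_infEDist]
    intro p hp
    rw [edist_dist]
    exact ENNReal.ofReal_le_ofReal (hkey p hp)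
  have := le_trans hlb (Metric.mem_cthickening_iff.mp hz)
  rcases le_or_gt r 0 with h | h
  · have h0 : ENNReal.ofReal r = 0 := ENNReal.ofReal_eq_zero.mpr h
    rw [h0, le_zero_iff, ENNReal.ofReal_eq_zero] at this
    linarith
  · exact (ENNReal.ofReal_le_ofReal_iff h.le).mp this

/-! ### msupport lemmas -/

lemma exists_null_ball_of_not_mem_msupport {μ : Measure E2} {x : E2}
    (hx : x ∉ msupport μ) : ∃ r : ℝ, 0 < r ∧ μ (ball x r) = 0 := by
  by_contra h
  push_neg at h
  exact hx fun r hr => pos_iff_ne_zero.mpr (h r hr)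

lemma isClosed_msupport (μ : Measure E2) : IsClosed (msupport μ) := by
  rw [← isOpen_compl_iff, Metric.isOpen_iff]
  intro x hx
  obtain ⟨r, hr, h0⟩ := exists_null_ball_of_not_mem_msupport hx
  refine ⟨r / 2, by linarith, fun y hy => ?_⟩
  intro hmem
  have hpos := hmem (r / 2) (by linarith)
  have hsub : ball y (r/2) ⊆ ball x r := by
    intro w hw
    rw [mem_ball] at hw hy ⊢
    calc dist w x ≤ dist w y + dist y x := dist_triangle _ _ _
      _ < r := by linarith
  have : μ (ball y (r/2)) = 0 := measure_mono_null hsub h0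
  rw [this] at hpos
  exact lt_irrefl _ hpos

lemma msupport_compl_null (μ : Measure E2) : μ (msupport μ)ᶜ = 0 := by
  have h : ∀ x : ↥((msupport μ)ᶜ), ∃ r : ℝ, 0 < r ∧ μ (ball (x : E2) r) = 0 :=
    fun x => exists_null_ball_of_not_mem_msupport x.2
  choose rad hrad hball using h
  obtain ⟨T, hTc, hTeq⟩ := TopologicalSpace.isOpen_iUnion_countable
    (fun x : ↥((msupport μ)ᶜ) => ball (x : E2) (rad x)) (fun x => isOpen_ball)
  have hcover : (msupport μ)ᶜ ⊆ ⋃ i ∈ T, ball (i : E2) (rad i) := by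
    rw [hTeq]
    intro x hx
    exact mem_iUnion.mpr ⟨⟨x, hx⟩, mem_ball_self (hrad _)⟩
  refine measure_mono_null hcover ?_
  exact (measure_biUnion_null_iff hTc).mpr fun i _ => hball i


lemma neg_apply' (p : E2) (i : Fin 2) : (-p) i = -(p i) := rfl

lemma cross_neg (p q : E2) : cross (-p) q = - cross p q := by
  simp only [cross, neg_apply']; ring

/-! ### Elementary real estimates -/

lemma min_rpow_bound {M t s' σ' : ℝ} (hM : 1 ≤ M) (ht : 0 < t) (hσ : 0 < σ') (hs : σ' ≤ s') :
    min 1 (M * t ^ s') ≤ M * min 1 (t ^ σ') := by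
  rcases le_or_gt 1 t with h | h
  · have h1 : (1:ℝ) ≤ t ^ σ' := Real.one_le_rpow h hσ.le
    rw [min_eq_left h1]
    calc min 1 (M * t ^ s') ≤ 1 := min_le_left _ _
      _ ≤ M * 1 := by linarith
  · have h1 : t ^ s' ≤ t ^ σ' := Real.rpow_le_rpow_of_exponent_ge ht h.le hs
    have h2 : t ^ σ' < 1 := Real.rpow_lt_one ht.le h hσ
    rw [min_eq_right h2.le]
    calc min 1 (M * t ^ s') ≤ M * t ^ s' := min_le_right _ _
      _ ≤ M * t ^ σ' := by nlinarith

lemma min_le_rpow {w α : ℝ} (hw : 0 ≤ w) (hα0 : 0 < α) (hα1 : α ≤ 1) :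
    min 1 w ≤ w ^ α := by
  rcases eq_or_lt_of_le hw with h | h
  · rw [← h, Real.zero_rpow hα0.ne']
    simp
  rcases le_or_gt 1 w with h1 | h1
  · calc min 1 w ≤ 1 := min_le_left _ _
      _ ≤ w ^ α := Real.one_le_rpow h1 hα0.le
  · calc min 1 w ≤ w := min_le_right _ _
      _ = w ^ (1:ℝ) := (Real.rpow_one w).symm
      _ ≤ w ^ α := Real.rpow_le_rpow_of_exponent_ge h h1.le hα1

lemma null_singleton_of_frostman {ν : Measure E2} {C s : ℝ} (hC : 0 < C) (hs : 0 < s)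
    (hF : ∀ (x : E2) (r : ℝ), 0 < r → ν (closedBall x r) ≤ ENNReal.ofReal (C * r ^ s))
    (y : E2) : ν {y} = 0 := by
  refine le_antisymm ?_ zero_le
  refine ENNReal.le_of_forall_pos_le_add (fun e he _ => ?_)
  rw [zero_add]
  set r : ℝ := ((e : ℝ) / C) ^ (s⁻¹ : ℝ) with hrdef
  have hec : (0:ℝ) < (e : ℝ) / C := div_pos he hC
  have hr : 0 < r := Real.rpow_pos_of_pos hec _
  have h1 : ν {y} ≤ ν (closedBall y r) := measure_mono (by simp [hr.le])
  have h2 : C * r ^ s = (e : ℝ) := by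
    rw [hrdef, ← Real.rpow_mul hec.le, inv_mul_cancel₀ hs.ne', Real.rpow_one]
    field_simp
  calc ν {y} ≤ ENNReal.ofReal (C * r ^ s) := h1.trans (hF y r hr)
    _ = (e : ℝ≥0∞) := by rw [h2]; simp

/-! ### Energy bound -/

lemma energy_bound {ν : Measure E2} [IsProbabilityMeasure ν] {Cν s σ' σ'' : ℝ}
    (hCν : 1 ≤ Cν) (hs : 0 < s) (hσ'' : 0 < σ'') (h1 : σ'' < σ') (h2 : σ'' ≤ s)
    (hF : ∀ (x : E2) (r : ℝ), 0 < r → ν (closedBall x r) ≤ ENNReal.ofReal (Cν * r ^ s))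
    (z : E2) {r : ℝ} (hr : 0 < r) :
    ∫⁻ y, ENNReal.ofReal (min 1 ((r / ‖y - z‖) ^ σ')) ∂ν ≤
      ENNReal.ofReal ((Cν ^ (σ''/s) * 2 ^ σ'' * (1 - 2 ^ (-(σ' - σ'')))⁻¹) * r ^ σ'') := by
  have hσ' : 0 < σ' := hσ''.trans h1
  set α : ℝ := σ''/s with hα
  have hα0 : 0 < α := div_pos hσ'' hs
  have hα1 : α ≤ 1 := by rw [hα, div_le_one hs]; exact h2
  set D : ℝ := σ' - σ'' with hD
  have hD0 : 0 < D := by rw [hD]; linarith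
  set q : ℝ := (2:ℝ) ^ (-D) with hq
  have hq0 : 0 < q := Real.rpow_pos_of_pos (by norm_num) _
  have hq1 : q < 1 := by
    rw [hq]
    exact Real.rpow_lt_one_of_one_lt_of_neg (by norm_num) (by linarith)
  -- pointwise domination
  have hpt : ∀ y : E2, ENNReal.ofReal (min 1 ((r / ‖y - z‖) ^ σ')) ≤
      ∑' k : ℕ, (closedBall z (2^(k+1) * r)).indicator
        (fun _ => ENNReal.ofReal ((2:ℝ) ^ (-((k:ℝ) * σ')))) y := by
    intro y
    set d : ℝ := ‖y - z‖ with hd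
    have hd0 : 0 ≤ d := norm_nonneg _
    rcases le_or_gt d (2*r) with hcase | hcase
    · -- k = 0 term dominates
      refine le_trans ?_ (ENNReal.le_tsum 0)
      have hmem : y ∈ closedBall z (2^(0+1) * r) := by
        rw [mem_closedBall, dist_eq_norm]
        simpa using hcase
      rw [Set.indicator_of_mem hmem]
      refine ENNReal.ofReal_le_ofReal ?_
      calc min 1 ((r / d) ^ σ') ≤ 1 := min_le_left _ _
        _ = (2:ℝ) ^ (-(((0:ℕ):ℝ) * σ')) := by norm_num
    · have hd0' : 0 < d := lt_trans (by positivity) hcase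
      set c : ℝ := d / r with hc
      have hc2 : 2 < c := by rw [hc, lt_div_iff₀ hr]; linarith
      set k : ℕ := ⌊Real.logb 2 c⌋₊ with hk
      have hlogpos : 1 ≤ Real.logb 2 c := by
        rw [show (1:ℝ) = Real.logb 2 2 by simp]
        exact Real.logb_le_logb_of_le (by norm_num) (by norm_num) hc2.le
      have hk1 : 1 ≤ k := by
        rw [hk]
        exact Nat.le_floor (by exact_mod_cast hlogpos)
      have h2k : (2:ℝ) ^ (k:ℝ) ≤ c := by
        have := Nat.floor_le (le_trans zero_le_one hlogpos)
        calc (2:ℝ) ^ (k:ℝ) ≤ (2:ℝ) ^ (Real.logb 2 c) :=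
              Real.rpow_le_rpow_of_exponent_le (by norm_num) (by exact_mod_cast this)
          _ = c := Real.rpow_logb (by norm_num) (by norm_num) (by linarith)
      have h2k' : c < (2:ℝ) ^ ((k:ℝ) + 1) := by
        have := Nat.lt_floor_add_one (Real.logb 2 c)
        calc c = (2:ℝ) ^ (Real.logb 2 c) :=
              (Real.rpow_logb (by norm_num) (by norm_num) (by linarith)).symm
          _ < (2:ℝ) ^ ((k:ℝ) + 1) := by
              apply Real.rpow_lt_rpow_of_exponent_lt (by norm_num)
              exact_mod_cast this
      refine le_trans ?_ (ENNReal.le_tsum k)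
      have hdcr : d = c * r := by rw [hc]; field_simp
      have he : (2:ℝ) ^ ((k:ℝ)+1) = (2:ℝ) ^ (k+1) := by
        rw [← Real.rpow_natCast 2 (k+1)]
        push_cast
        ring_nf
      have hmem : y ∈ closedBall z (2^(k+1) * r) := by
        rw [mem_closedBall, dist_eq_norm, ← hd]
        calc d = c * r := hdcr
          _ ≤ (2:ℝ)^((k:ℝ)+1) * r := (mul_le_mul_of_nonneg_right h2k'.le hr.le)
          _ = 2^(k+1) * r := by rw [he]
      rw [Set.indicator_of_mem hmem]
      refine ENNReal.ofReal_le_ofReal ?_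
      have hpk : (0:ℝ) < (2:ℝ)^(k:ℝ) := Real.rpow_pos_of_pos (by norm_num) _
      have h2kr : (2:ℝ)^(k:ℝ) * r ≤ d := by
        calc (2:ℝ)^(k:ℝ) * r ≤ c * r := mul_le_mul_of_nonneg_right h2k hr.le
          _ = d := hdcr.symm
      have hrd : r / d ≤ ((2:ℝ) ^ (k:ℝ))⁻¹ := by
        rw [div_le_iff₀ hd0', inv_mul_eq_div, le_div_iff₀ hpk]
        nlinarith
      calc min 1 ((r/d) ^ σ') ≤ (r/d) ^ σ' := min_le_right _ _
        _ ≤ (((2:ℝ) ^ (k:ℝ))⁻¹) ^ σ' := Real.rpow_le_rpow (by positivity) hrd hσ'.le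
        _ = (2:ℝ) ^ (-((k:ℝ) * σ')) := by
            rw [← Real.rpow_neg (by norm_num : (0:ℝ) ≤ 2), ← Real.rpow_mul (by norm_num)]
            ring_nf
  have hsα : s * α = σ'' := by rw [hα]; field_simp
  have hν1 : ∀ S : Set E2, ν S ≤ 1 := fun S => prob_le_one
  set c0 : ℝ := Cν ^ α * 2 ^ σ'' * r ^ σ'' with hc0
  have hc0' : 0 ≤ c0 := by
    rw [hc0]; positivity
  calc ∫⁻ y, ENNReal.ofReal (min 1 ((r / ‖y - z‖) ^ σ')) ∂ν
      ≤ ∫⁻ y, ∑' k : ℕ, (closedBall z (2^(k+1) * r)).indicator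
          (fun _ => ENNReal.ofReal ((2:ℝ) ^ (-((k:ℝ) * σ')))) y ∂ν := lintegral_mono hpt
    _ = ∑' k : ℕ, ∫⁻ y, (closedBall z (2^(k+1) * r)).indicator
          (fun _ => ENNReal.ofReal ((2:ℝ) ^ (-((k:ℝ) * σ')))) y ∂ν :=
        lintegral_tsum (fun k => (measurable_const.indicator measurableSet_closedBall).aemeasurable)
    _ = ∑' k : ℕ, ENNReal.ofReal ((2:ℝ) ^ (-((k:ℝ) * σ'))) * ν (closedBall z (2^(k+1) * r)) := by
        congr 1
        ext k
        rw [lintegral_indicator measurableSet_closedBall, setLIntegral_const]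
    _ ≤ ∑' k : ℕ, ENNReal.ofReal (c0 * q ^ k) := by
        refine ENNReal.tsum_le_tsum (fun k => ?_)
        have hρ : (0:ℝ) < 2^(k+1) * r := by positivity
        have hw : (0:ℝ) ≤ Cν * ((2:ℝ)^(k+1) * r) ^ s := by positivity
        have hν2 : ν (closedBall z (2^(k+1) * r)) ≤
            ENNReal.ofReal (min 1 (Cν * ((2:ℝ)^(k+1) * r) ^ s)) := by
          rcases le_total (1:ℝ) (Cν * ((2:ℝ)^(k+1) * r) ^ s) with hmm | hmm
          · rw [min_eq_left hmm]
            simpa using hν1 _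
          · rw [min_eq_right hmm]
            exact hF _ _ hρ
        have hν3 : ν (closedBall z (2^(k+1) * r)) ≤
            ENNReal.ofReal ((Cν * ((2:ℝ)^(k+1) * r) ^ s) ^ α) :=
          le_trans hν2 (ENNReal.ofReal_le_ofReal (min_le_rpow hw hα0 hα1))
        calc ENNReal.ofReal ((2:ℝ) ^ (-((k:ℝ) * σ'))) * ν (closedBall z (2^(k+1) * r))
            ≤ ENNReal.ofReal ((2:ℝ) ^ (-((k:ℝ) * σ'))) *
              ENNReal.ofReal ((Cν * ((2:ℝ)^(k+1) * r) ^ s) ^ α) :=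
              mul_le_mul_right hν3 _
          _ = ENNReal.ofReal ((2:ℝ) ^ (-((k:ℝ) * σ')) * (Cν * ((2:ℝ)^(k+1) * r) ^ s) ^ α) :=
              (ENNReal.ofReal_mul (by positivity)).symm
          _ = ENNReal.ofReal (c0 * q ^ k) := by
              congr 1
              have hBr : ((2:ℝ)^(k+1) : ℝ) = (2:ℝ) ^ (((k:ℝ) + 1) : ℝ) := by
                rw [show ((k:ℝ) + 1) = (((k+1 : ℕ)):ℝ) by push_cast; ring]
                rw [Real.rpow_natCast]
              rw [hBr]
              rw [Real.mul_rpow (by linarith : (0:ℝ) ≤ Cν) (by positivity)]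
              rw [Real.mul_rpow (by positivity) hr.le]
              rw [← Real.rpow_mul (by norm_num : (0:ℝ) ≤ 2)]
              rw [Real.mul_rpow (by positivity) (by positivity)]
              rw [← Real.rpow_mul (by norm_num : (0:ℝ) ≤ 2)]
              rw [← Real.rpow_mul hr.le]
              have hqk : q ^ k = (2:ℝ) ^ (-(D * (k:ℝ))) := by
                rw [← Real.rpow_natCast q k, hq, ← Real.rpow_mul (by norm_num : (0:ℝ) ≤ 2)]
                ring_nf
              have h1 : ((k:ℝ) + 1) * s * α = ((k:ℝ) + 1) * σ'' := by rw [mul_assoc, hsα]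
              rw [h1, hsα, hqk, hc0]
              rw [show ((k:ℝ)+1) * σ'' = σ'' + (k:ℝ)*σ'' by ring,
                Real.rpow_add (by norm_num : (0:ℝ) < 2)]
              rw [show -(D*(k:ℝ)) = (k:ℝ)*σ'' + -((k:ℝ)*σ') by rw [hD]; ring,
                Real.rpow_add (by norm_num : (0:ℝ) < 2)]
              ring
    _ = ENNReal.ofReal c0 * ∑' k : ℕ, (ENNReal.ofReal q) ^ k := by
        rw [← ENNReal.tsum_mul_left]
        congr 1
        ext k
        rw [← ENNReal.ofReal_pow hq0.le, ← ENNReal.ofReal_mul hc0']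
    _ = ENNReal.ofReal c0 * (1 - ENNReal.ofReal q)⁻¹ := by rw [ENNReal.tsum_geometric]
    _ = ENNReal.ofReal c0 * ENNReal.ofReal ((1 - q)⁻¹) := by
        congr 1
        rw [ENNReal.ofReal_inv_of_pos (by linarith : (0:ℝ) < 1 - q)]
        congr 1
        rw [ENNReal.ofReal_sub 1 hq0.le]
        simp
    _ = ENNReal.ofReal (c0 * (1 - q)⁻¹) := (ENNReal.ofReal_mul hc0').symm
    _ ≤ ENNReal.ofReal ((Cν ^ (σ''/s) * 2 ^ σ'' * (1 - q)⁻¹) * r ^ σ'') := by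
        refine ENNReal.ofReal_le_ofReal (le_of_eq ?_)
        rw [hc0, hα]
        ring

/-! ### Key slice bound -/

def CbDef (Cμ s σ' R δ : ℝ) : ℝ :=
  max (max 1 (Cμ * (32*R^2/δ) ^ s)) ((8*R/δ) ^ σ')

lemma CbDef_pos {Cμ s σ' R δ : ℝ} : 0 < CbDef Cμ s σ' R δ :=
  lt_of_lt_of_le one_pos (le_trans (le_max_left _ _) (le_max_left _ _))

set_option maxHeartbeats 2000000 in
lemma key_slice_bound {μ : Measure E2} [IsProbabilityMeasure μ]
    {a v : E2} (hv : v ≠ 0)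
    (hμℓ : ∀ x ∈ msupport μ, ∃ t : ℝ, x = a + t • v)
    {Cμ s σ' R δ r : ℝ} (hCμ : 1 ≤ Cμ) (hs0 : 0 < s) (hs1 : s ≤ 1)
    (hσ'0 : 0 < σ') (hσ's : σ' ≤ s)
    (hμF : ∀ (x : E2) (ρ : ℝ), 0 < ρ → μ (closedBall x ρ) ≤ ENNReal.ofReal (Cμ * ρ ^ s))
    (hR : 1 ≤ R) (haR : ‖a‖ ≤ R) (hδ : 0 < δ) (hδ1 : δ ≤ 1) (hr : 0 < r)
    {y z : E2} (hyB : δ ≤ |cross (y - a) (‖v‖⁻¹ • v)|) (hyR : ‖y‖ ≤ R)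
    (hzR : ‖z‖ ≤ R) (hzy : z ≠ y) :
    μ ({x | |cross (z - y) (x - y)| ≤ r * ‖x - y‖} ∩ (msupport μ ∩ closedBall 0 R))
      ≤ ENNReal.ofReal (CbDef Cμ s σ' R δ * min 1 ((r / ‖z - y‖) ^ σ')) := by
  set S : Set E2 := {x | |cross (z - y) (x - y)| ≤ r * ‖x - y‖} ∩
    (msupport μ ∩ closedBall 0 R) with hSdef
  set u : E2 := ‖v‖⁻¹ • v with hudef
  have hu1 : ‖u‖ = 1 := norm_unit_vec hv
  set d : ℝ := ‖z - y‖ with hd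
  have hd0 : 0 < d := by
    rw [hd, norm_pos_iff]
    exact sub_ne_zero.mpr hzy
  set g : ℝ := cross (z - y) u with hg
  set p' : ℝ := dotp (z - y) u with hp'
  set f : ℝ := cross (z - y) (a - y) with hf
  have hpg : p' ^ 2 + g ^ 2 = d ^ 2 := lagrange _ _ hu1
  set cy : ℝ := cross (y - a) u with hcy
  have hcyδ : δ ≤ |cy| := hyB
  have hfval : f = g * dotp (a - y) u + p' * cy := by
    rw [hf, cross_decomp (z - y) (a - y) u hu1]
    have h1 : cross (a - y) u = - cy := by
      rw [hcy, ← cross_neg (y - a) u, neg_sub]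
    rw [h1, ← hg, ← hp']
    ring
  have hay : ‖a - y‖ ≤ 2 * R := by
    calc ‖a - y‖ ≤ ‖a‖ + ‖y‖ := norm_sub_le _ _
      _ ≤ 2 * R := by linarith
  -- membership consequences
  have hmem : ∀ x ∈ S,
      ∃ t : ℝ, x = a + t • u ∧ |t| ≤ 2 * R ∧ |f + t * g| ≤ 2 * R * r := by
    rintro x ⟨hx1, hx2, hx3⟩
    obtain ⟨t, ht, habs⟩ := line_repr hv (hμℓ x hx2)
    have hxa : ‖x - a‖ ≤ 2 * R := by
      have hxR : ‖x‖ ≤ R := by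
        rw [mem_closedBall, dist_zero_right] at hx3
        exact hx3
      calc ‖x - a‖ ≤ ‖x‖ + ‖a‖ := norm_sub_le _ _
        _ ≤ 2 * R := by linarith
    refine ⟨t, ht, by rw [habs]; exact hxa, ?_⟩
    have hxy2R : ‖x - y‖ ≤ 2 * R := by
      have hxR : ‖x‖ ≤ R := by
        rw [mem_closedBall, dist_zero_right] at hx3
        exact hx3
      calc ‖x - y‖ ≤ ‖x‖ + ‖y‖ := norm_sub_le _ _
        _ ≤ 2 * R := by linarith
    have hcr : cross (z - y) (x - y) = f + t * g := by
      have hxy : x - y = (a - y) + t • u := by rw [ht]; abel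
      rw [hxy, cross_add_smul, ← hf, ← hg]
    have hx1' : |cross (z - y) (x - y)| ≤ r * ‖x - y‖ := hx1
    rw [hcr] at hx1'
    calc |f + t * g| ≤ r * ‖x - y‖ := hx1'
      _ ≤ r * (2 * R) := by nlinarith
      _ = 2 * R * r := by ring
  set τ : ℝ := δ * d / (16 * R) with hτ
  have hτ0 : 0 < τ := by rw [hτ]; positivity
  rcases le_or_gt τ |g| with hgτ | hgτ
  · -- Case 1 : transversal
    have hgne : g ≠ 0 := by
      intro h0
      rw [h0] at hgτ
      simp at hgτ
      linarith
    have hgpos : 0 < |g| := lt_of_lt_of_le hτ0 hgτ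
    set ρ : ℝ := 2 * R * r / |g| with hρ
    have hρ0 : 0 < ρ := by rw [hρ]; positivity
    have hsub : S ⊆ closedBall (a + (-f/g) • u) ρ := by
      intro x hx
      obtain ⟨t, ht, htR, htg⟩ := hmem x hx
      rw [mem_closedBall, dist_eq_norm]
      have hdiff : x - (a + (-f/g) • u) = (t - (-f/g)) • u := by
        rw [ht]
        rw [sub_smul]
        abel
      rw [hdiff, norm_smul, hu1, mul_one]
      rw [Real.norm_eq_abs]
      rw [hρ, le_div_iff₀ hgpos]
      have : |t - (-f/g)| * |g| = |f + t * g| := by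
        rw [← abs_mul]
        congr 1
        field_simp
        ring
      rw [this]
      exact htg
    have hL : ρ ≤ (32*R^2/δ) * (r / d) := by
      rw [hρ, div_le_iff₀ hgpos]
      have h1 : τ * ((32*R^2/δ) * (r/d)) = 2 * R * r * (τ * (16 * R) / (δ * d)) := by
        field_simp
        ring
      have h2 : τ * (16 * R) / (δ * d) = 1 := by
        rw [hτ]
        field_simp
      calc 2 * R * r = 2 * R * r * 1 := by ring
        _ = τ * ((32*R^2/δ) * (r/d)) := by rw [h1, h2]
        _ ≤ (32*R^2/δ) * (r/d) * |g| := by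
            have hpos : 0 < (32*R^2/δ) * (r/d) := by positivity
            nlinarith
    have hμ1 : μ S ≤ ENNReal.ofReal (Cμ * ((32*R^2/δ) * (r/d)) ^ s) := by
      calc μ S ≤ μ (closedBall (a + (-f/g) • u) ρ) := measure_mono hsub
        _ ≤ ENNReal.ofReal (Cμ * ρ ^ s) := hμF _ _ hρ0
        _ ≤ ENNReal.ofReal (Cμ * ((32*R^2/δ) * (r/d)) ^ s) := by
            refine ENNReal.ofReal_le_ofReal ?_
            have := Real.rpow_le_rpow hρ0.le hL hs0.le
            nlinarith
    have hμ2 : μ S ≤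
        ENNReal.ofReal (min 1 ((max 1 (Cμ * (32*R^2/δ) ^ s)) * (r/d) ^ s)) := by
      rcases le_total (1:ℝ) ((max 1 (Cμ * (32*R^2/δ) ^ s)) * (r/d) ^ s) with hc | hc
      · rw [min_eq_left hc]
        simpa using prob_le_one
      · rw [min_eq_right hc]
        refine le_trans hμ1 (ENNReal.ofReal_le_ofReal ?_)
        rw [Real.mul_rpow (by positivity) (by positivity)]
        have hmax : Cμ * (32*R^2/δ) ^ s ≤ max 1 (Cμ * (32*R^2/δ) ^ s) := le_max_right _ _
        have hrp : (0:ℝ) ≤ (r/d) ^ s := by positivity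
        nlinarith
    refine le_trans hμ2 (ENNReal.ofReal_le_ofReal ?_)
    have hM : 1 ≤ max 1 (Cμ * (32*R^2/δ) ^ s) := le_max_left _ _
    have := min_rpow_bound hM (show (0:ℝ) < r/d by positivity) hσ'0 hσ's
    calc min 1 ((max 1 (Cμ * (32*R^2/δ) ^ s)) * (r/d) ^ s)
        ≤ (max 1 (Cμ * (32*R^2/δ) ^ s)) * min 1 ((r/d) ^ σ') := this
      _ ≤ CbDef Cμ s σ' R δ * min 1 ((r/d) ^ σ') := by
          have h1 : max 1 (Cμ * (32*R^2/δ) ^ s) ≤ CbDef Cμ s σ' R δ := le_max_left _ _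
          have h2 : (0:ℝ) ≤ min 1 ((r/d) ^ σ') := le_min zero_le_one (by positivity)
          nlinarith
  · -- Case 2 : nearly parallel; the set is empty unless r is large
    by_cases hne : S.Nonempty
    · obtain ⟨x₀, hx₀⟩ := hne
      obtain ⟨t₀, ht₀, ht₀R, ht₀g⟩ := hmem x₀ hx₀
      -- lower bound |p'| ≥ d/2
      have hτd : τ ≤ d / 16 := by
        rw [hτ, div_le_div_iff₀ (by positivity) (by norm_num)]
        nlinarith
      have hp2 : p' ^ 2 ≥ d ^ 2 / 4 := by nlinarith [sq_nonneg g, sq_nonneg d, abs_nonneg g, sq_abs g]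
      have hpabs : d / 2 ≤ |p'| := by
        nlinarith [sq_abs p', abs_nonneg p', hd0]
      -- lower bound |f|
      have hfl : 3 * δ * d / 8 ≤ |f| := by
        rw [hfval]
        have h1 : |p' * cy| ≥ (d/2) * δ := by
          rw [abs_mul]
          have := abs_nonneg p'
          nlinarith
        have h2 : |g * dotp (a - y) u| ≤ τ * (2*R) := by
          rw [abs_mul]
          have h3 : |dotp (a - y) u| ≤ ‖a - y‖ := by
            calc |dotp (a - y) u| ≤ ‖a - y‖ * ‖u‖ := abs_dotp_le _ _
              _ = ‖a - y‖ := by rw [hu1, mul_one]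
          nlinarith [abs_nonneg g, abs_nonneg (dotp (a - y) u), norm_nonneg (a - y)]
        have hτR : τ * (2*R) = δ * d / 8 := by
          rw [hτ]
          field_simp
          ring
        calc 3 * δ * d / 8 = (d/2) * δ - δ * d / 8 := by ring
          _ ≤ |p' * cy| - |g * dotp (a - y) u| := by rw [hτR] at h2; linarith
          _ ≤ |g * dotp (a - y) u + p' * cy| := by
              have := abs_add_le (g * dotp (a - y) u) (p' * cy)
              have h4 : |p' * cy| ≤ |g * dotp (a - y) u + p' * cy| + |g * dotp (a - y) u| := by
                calc |p' * cy| = |(g * dotp (a - y) u + p' * cy) + (-(g * dotp (a - y) u))| := by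
                      congr 1; ring
                  _ ≤ |g * dotp (a - y) u + p' * cy| + |g * dotp (a - y) u| := by
                      refine le_trans (abs_add_le _ _) ?_
                      rw [abs_neg]
              linarith
      -- now |f + t₀ g| ≥ δ d / 4
      have hlow : δ * d / 4 ≤ |f + t₀ * g| := by
        have h1 : |t₀ * g| ≤ (2*R) * τ := by
          rw [abs_mul]
          nlinarith [abs_nonneg t₀, abs_nonneg g]
        have h2 : (2*R) * τ = δ * d / 8 := by rw [hτ]; field_simp; ring
        have h3 : |f| ≤ |f + t₀ * g| + |t₀ * g| := by
          calc |f| = |(f + t₀ * g) + (-(t₀ * g))| := by congr 1; ring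
            _ ≤ |f + t₀ * g| + |t₀ * g| := le_trans (abs_add_le _ _) (by rw [abs_neg])
        rw [h2] at h1
        linarith
      -- hence r / d ≥ δ / (8R)
      have hrd : δ / (8*R) ≤ r / d := by
        have h1 : δ * d / 4 ≤ 2 * R * r := le_trans hlow ht₀g
        rw [div_le_div_iff₀ (by positivity) hd0]
        nlinarith
      -- conclude
      have hm1 : δ / (8*R) ≤ 1 := by
        rw [div_le_one (by positivity)]
        linarith
      have hmin : (δ/(8*R)) ^ σ' ≤ min 1 ((r/d) ^ σ') := by
        refine le_min (Real.rpow_le_one (by positivity) hm1 hσ'0.le) ?_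
        exact Real.rpow_le_rpow (by positivity) hrd hσ'0.le
      have hprod : 1 ≤ CbDef Cμ s σ' R δ * min 1 ((r/d) ^ σ') := by
        have h1 : ((8*R/δ) ^ σ') * ((δ/(8*R)) ^ σ') = 1 := by
          rw [← Real.mul_rpow (by positivity) (by positivity)]
          rw [show (8*R/δ) * (δ/(8*R)) = 1 by field_simp]
          exact Real.one_rpow _
        have h2 : (8*R/δ) ^ σ' ≤ CbDef Cμ s σ' R δ := le_max_right _ _
        have h3 : (0:ℝ) ≤ (δ/(8*R)) ^ σ' := by positivity
        nlinarith [hmin, CbDef_pos (Cμ := Cμ) (s := s) (σ' := σ') (R := R) (δ := δ)]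
      calc μ S ≤ 1 := prob_le_one
        _ = ENNReal.ofReal 1 := by simp
        _ ≤ ENNReal.ofReal (CbDef Cμ s σ' R δ * min 1 ((r/d) ^ σ')) :=
            ENNReal.ofReal_le_ofReal hprod
    · rw [Set.not_nonempty_iff_eq_empty] at hne
      rw [hne]
      simp

/-! ### Tube containment -/

lemma tube_containment {a' v' : E2} (hv' : v' ≠ 0) {r R ε : ℝ} (hr : 0 < r) (hε : 0 < ε)
    {x y z : E2}
    (hx : |cross (x - a') (‖v'‖⁻¹ • v')| ≤ r) (hy : |cross (y - a') (‖v'‖⁻¹ • v')| ≤ r)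
    (hz : |cross (z - a') (‖v'‖⁻¹ • v')| ≤ r)
    (hxR : ‖x‖ ≤ R) (hyR : ‖y‖ ≤ R) (hzR : ‖z‖ ≤ R)
    (hxy : ε ≤ ‖y - x‖) :
    |cross (z - x) (y - x)| ≤ ((8 * R / ε) * r) * ‖y - x‖ := by
  set u : E2 := ‖v'‖⁻¹ • v' with hu
  have hu1 : ‖u‖ = 1 := norm_unit_vec hv'
  have h2R : ε ≤ 2 * R := by
    refine le_trans hxy ?_
    calc ‖y - x‖ ≤ ‖y‖ + ‖x‖ := norm_sub_le _ _
      _ ≤ 2 * R := by linarith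
  have hR0 : 0 < R := by linarith
  have hzx : |cross (z - x) u| ≤ 2 * r := by
    have h := cross_sub (z - a') (x - a') u
    have h2 : z - a' - (x - a') = z - x := by abel
    rw [h2] at h
    rw [h]
    calc |cross (z - a') u - cross (x - a') u| ≤ |cross (z - a') u| + |cross (x - a') u| :=
          abs_sub _ _
      _ ≤ 2 * r := by linarith
  have hyx : |cross (y - x) u| ≤ 2 * r := by
    have h := cross_sub (y - a') (x - a') u
    have h2 : y - a' - (x - a') = y - x := by abel
    rw [h2] at h
    rw [h]
    calc |cross (y - a') u - cross (x - a') u| ≤ |cross (y - a') u| + |cross (x - a') u| :=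
          abs_sub _ _
      _ ≤ 2 * r := by linarith
  have hdzx : |dotp (z - x) u| ≤ 2 * R := by
    calc |dotp (z - x) u| ≤ ‖z - x‖ * ‖u‖ := abs_dotp_le _ _
      _ = ‖z - x‖ := by rw [hu1, mul_one]
      _ ≤ ‖z‖ + ‖x‖ := norm_sub_le _ _
      _ ≤ 2 * R := by linarith
  have hdyx : |dotp (y - x) u| ≤ 2 * R := by
    calc |dotp (y - x) u| ≤ ‖y - x‖ * ‖u‖ := abs_dotp_le _ _
      _ = ‖y - x‖ := by rw [hu1, mul_one]
      _ ≤ ‖y‖ + ‖x‖ := norm_sub_le _ _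
      _ ≤ 2 * R := by linarith
  have hdec := cross_decomp (z - x) (y - x) u hu1
  have hbound : |cross (z - x) (y - x)| ≤ 8 * R * r := by
    rw [hdec]
    calc |cross (z - x) u * dotp (y - x) u - dotp (z - x) u * cross (y - x) u|
        ≤ |cross (z - x) u * dotp (y - x) u| + |dotp (z - x) u * cross (y - x) u| := abs_sub _ _
      _ = |cross (z - x) u| * |dotp (y - x) u| + |dotp (z - x) u| * |cross (y - x) u| := by
          rw [abs_mul, abs_mul]
      _ ≤ (2*r) * (2*R) + (2*R) * (2*r) := by
          have h1 := abs_nonneg (cross (z - x) u)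
          have h2 := abs_nonneg (dotp (y - x) u)
          have h3 := abs_nonneg (dotp (z - x) u)
          have h4 := abs_nonneg (cross (y - x) u)
          nlinarith
      _ = 8 * R * r := by ring
  refine le_trans hbound ?_
  have hfac : 8 * R * r = ((8 * R / ε) * r) * ε := by field_simp
  rw [hfac]
  have hpos : 0 ≤ (8 * R / ε) * r := by positivity
  nlinarith

/-! ### Tubes and measurability -/

def Tub (x y : E2) (rho : ℝ) : Set E2 := {z | |cross (z - x) (y - x)| ≤ rho * ‖y - x‖}

lemma abs_cross_symm (x y z : E2) : |cross (z - x) (y - x)| = |cross (z - y) (x - y)| := by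
  have h : cross (z - x) (y - x) = - cross (z - y) (x - y) := by
    simp only [cross, sub_apply']; ring
  rw [h, abs_neg]

lemma Tub_mono (x y : E2) {rho rho' : ℝ} (h : rho ≤ rho') : Tub x y rho ⊆ Tub x y rho' := by
  intro z hz
  simp only [Tub, mem_setOf_eq] at hz ⊢
  calc |cross (z - x) (y - x)| ≤ rho * ‖y - x‖ := hz
    _ ≤ rho' * ‖y - x‖ := by nlinarith [norm_nonneg (y - x)]

lemma measurable_coord (i : Fin 2) : Measurable fun z : E2 => z i :=
  (EuclideanSpace.proj (𝕜 := ℝ) i).continuous.measurable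

lemma measurableSet_W (r : ℝ) :
    MeasurableSet {q : (E2 × E2) × E2 | q.2 ∈ Tub q.1.1 q.1.2 r} := by
  have hx : ∀ i : Fin 2, Measurable fun q : (E2 × E2) × E2 => q.1.1 i :=
    fun i => (measurable_coord i).comp (measurable_fst.comp measurable_fst)
  have hy : ∀ i : Fin 2, Measurable fun q : (E2 × E2) × E2 => q.1.2 i :=
    fun i => (measurable_coord i).comp (measurable_snd.comp measurable_fst)
  have hz : ∀ i : Fin 2, Measurable fun q : (E2 × E2) × E2 => q.2 i :=
    fun i => (measurable_coord i).comp measurable_snd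
  have hcross : Measurable fun q : (E2 × E2) × E2 =>
      |cross (q.2 - q.1.1) (q.1.2 - q.1.1)| := by
    have : ∀ q : (E2 × E2) × E2, cross (q.2 - q.1.1) (q.1.2 - q.1.1) =
        (q.2 0 - q.1.1 0) * (q.1.2 1 - q.1.1 1) - (q.2 1 - q.1.1 1) * (q.1.2 0 - q.1.1 0) := by
      intro q; rfl
    simp only [this]
    exact (((((hz 0).sub (hx 0)).mul ((hy 1).sub (hx 1))).sub
      (((hz 1).sub (hx 1)).mul ((hy 0).sub (hx 0))))).abs
  have hnorm : Measurable fun q : (E2 × E2) × E2 => r * ‖q.1.2 - q.1.1‖ := by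
    refine measurable_const.mul ?_
    have : Continuous fun p : E2 × E2 => ‖p.2 - p.1‖ :=
      (continuous_snd.sub continuous_fst).norm
    exact (this.measurable).comp measurable_fst
  exact measurableSet_le hcross hnorm

lemma measurableSet_Tub (x y : E2) (r : ℝ) : MeasurableSet (Tub x y r) := by
  have h : Tub x y r = (fun z : E2 => (((x, y) : E2 × E2), z)) ⁻¹'
      {q : (E2 × E2) × E2 | q.2 ∈ Tub q.1.1 q.1.2 r} := rfl
  rw [h]
  exact (measurableSet_W r).preimage (measurable_const.prodMk measurable_id)

lemma measurableSet_Sz (z : E2) (r : ℝ) :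
    MeasurableSet {p : E2 × E2 | z ∈ Tub p.1 p.2 r} := by
  have h : {p : E2 × E2 | z ∈ Tub p.1 p.2 r} = (fun p : E2 × E2 => (p, z)) ⁻¹'
      {q : (E2 × E2) × E2 | q.2 ∈ Tub q.1.1 q.1.2 r} := rfl
  rw [h]
  exact (measurableSet_W r).preimage (measurable_id.prodMk measurable_const)

lemma measurableSet_slice_x (y z : E2) (r : ℝ) :
    MeasurableSet {x : E2 | z ∈ Tub x y r} := by
  have h : {x : E2 | z ∈ Tub x y r} = (fun x : E2 => ((x, y), z)) ⁻¹'
      {q : (E2 × E2) × E2 | q.2 ∈ Tub q.1.1 q.1.2 r} := rfl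
  rw [h]
  exact (measurableSet_W r).preimage
    ((measurable_id.prodMk measurable_const).prodMk measurable_const)

lemma measurable_F (ν : Measure E2) [SFinite ν] (r : ℝ) :
    Measurable fun p : E2 × E2 => ν (Tub p.1 p.2 r) := by
  exact measurable_measure_prodMk_left (measurableSet_W r)

/-! ### The integral bound -/

set_option maxHeartbeats 1000000 in
lemma integral_F_le {μ ν : Measure E2} [IsProbabilityMeasure μ] [IsProbabilityMeasure ν]
    {a v : E2} (hv : v ≠ 0)
    (hμℓ : ∀ x ∈ msupport μ, ∃ t : ℝ, x = a + t • v)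
    {Cμ Cν s σ' σ'' R δ r : ℝ} (hCμ : 1 ≤ Cμ) (hCν : 1 ≤ Cν) (hs0 : 0 < s) (hs1 : s ≤ 1)
    (hσ''0 : 0 < σ'') (hσ''σ' : σ'' < σ') (hσ''s : σ'' ≤ s) (hσ's : σ' ≤ s)
    (hμF : ∀ (x : E2) (ρ : ℝ), 0 < ρ → μ (closedBall x ρ) ≤ ENNReal.ofReal (Cμ * ρ ^ s))
    (hνF : ∀ (x : E2) (ρ : ℝ), 0 < ρ → ν (closedBall x ρ) ≤ ENNReal.ofReal (Cν * ρ ^ s))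
    (hR : 1 ≤ R) (haR : ‖a‖ ≤ R) (hδ : 0 < δ) (hδ1 : δ ≤ 1) (hr : 0 < r)
    (hBm : MeasurableSet ((msupport ν ∩ closedBall 0 R) ∩
      {z : E2 | δ ≤ |cross (z - a) (‖v‖⁻¹ • v)|})) :
    ∫⁻ p, (ν.restrict ((msupport ν ∩ closedBall 0 R) ∩
        {z : E2 | δ ≤ |cross (z - a) (‖v‖⁻¹ • v)|})) (Tub p.1 p.2 r)
      ∂((μ.restrict (msupport μ ∩ closedBall 0 R)).prod (ν.restrict
        ((msupport ν ∩ closedBall 0 R) ∩ {z : E2 | δ ≤ |cross (z - a) (‖v‖⁻¹ • v)|})))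
      ≤ ENNReal.ofReal ((CbDef Cμ s σ' R δ *
          (Cν ^ (σ''/s) * 2 ^ σ'' * (1 - 2 ^ (-(σ' - σ'')))⁻¹)) * r ^ σ'') := by
  have hσ'0 : 0 < σ' := hσ''0.trans hσ''σ'
  set A : Set E2 := msupport μ ∩ closedBall 0 R with hA
  set B : Set E2 := (msupport ν ∩ closedBall 0 R) ∩
    {z : E2 | δ ≤ |cross (z - a) (‖v‖⁻¹ • v)|} with hB
  have hAm : MeasurableSet A := (isClosed_msupport μ).measurableSet.inter measurableSet_closedBall
  set Cb : ℝ := CbDef Cμ s σ' R δ with hCb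
  have hCb0 : 0 < Cb := CbDef_pos
  set Ce : ℝ := Cν ^ (σ''/s) * 2 ^ σ'' * (1 - 2 ^ (-(σ' - σ'')))⁻¹ with hCe
  set W : Set ((E2 × E2) × E2) := {q | q.2 ∈ Tub q.1.1 q.1.2 r} with hW
  have hWm : MeasurableSet W := measurableSet_W r
  set μ' := μ.restrict A with hμ'
  set ν' := ν.restrict B with hν'
  set Pi := μ'.prod ν' with hPi
  have e1 : ∫⁻ p, ν' (Tub p.1 p.2 r) ∂Pi = ∫⁻ p, ∫⁻ z, W.indicator (1 : (E2 × E2) × E2 → ℝ≥0∞) (p, z) ∂ν' ∂Pi := by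
    refine lintegral_congr fun p => ?_
    have h : (fun z => W.indicator (1 : (E2 × E2) × E2 → ℝ≥0∞) (p, z))
        = (Tub p.1 p.2 r).indicator (1 : E2 → ℝ≥0∞) := by
      funext z
      rfl
    rw [h, lintegral_indicator_one (measurableSet_Tub _ _ _)]
  have e2 : ∫⁻ p, ∫⁻ z, W.indicator (1 : (E2 × E2) × E2 → ℝ≥0∞) (p, z) ∂ν' ∂Pi
      = ∫⁻ z, ∫⁻ p, W.indicator (1 : (E2 × E2) × E2 → ℝ≥0∞) (p, z) ∂Pi ∂ν' := by
    apply lintegral_lintegral_swap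
    exact (measurable_one.indicator hWm).aemeasurable
  have e3 : ∀ z : E2, ∫⁻ p, W.indicator (1 : (E2 × E2) × E2 → ℝ≥0∞) (p, z) ∂Pi = ∫⁻ y, μ' {x | z ∈ Tub x y r} ∂ν' := by
    intro z
    have h : (fun p : E2 × E2 => W.indicator (1 : (E2 × E2) × E2 → ℝ≥0∞) (p, z))
        = ({p : E2 × E2 | z ∈ Tub p.1 p.2 r}).indicator (1 : E2 × E2 → ℝ≥0∞) := by
      funext p
      rfl
    rw [h, lintegral_indicator_one (measurableSet_Sz z r),
      Measure.prod_apply_symm (measurableSet_Sz z r)]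
    rfl
  have hzae : ∀ᵐ z ∂ν', ∫⁻ y, μ' {x | z ∈ Tub x y r} ∂ν' ≤
      ENNReal.ofReal Cb * ENNReal.ofReal (Ce * r ^ σ'') := by
    filter_upwards [ae_restrict_mem hBm] with z hzB
    have hz0 : ν' {z} = 0 := by
      refine le_antisymm ?_ zero_le
      calc ν' {z} ≤ ν {z} := Measure.restrict_le_self _
        _ = 0 := null_singleton_of_frostman (by linarith) hs0 hνF z
    have hzne : ∀ᵐ y ∂ν', y ≠ z := by
      rw [ae_iff]
      have : {y : E2 | ¬ y ≠ z} = {z} := by ext w; simp [not_not]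
      rw [this]
      exact hz0
    have hzR : ‖z‖ ≤ R := by
      have := hzB.1.2
      rw [mem_closedBall, dist_zero_right] at this
      exact this
    have hyae : ∀ᵐ y ∂ν', μ' {x | z ∈ Tub x y r} ≤
        ENNReal.ofReal Cb * ENNReal.ofReal (min 1 ((r / ‖y - z‖) ^ σ')) := by
      filter_upwards [ae_restrict_mem hBm, hzne] with y hyB hyz
      have hyR : ‖y‖ ≤ R := by
        have := hyB.1.2
        rw [mem_closedBall, dist_zero_right] at this
        exact this
      have hset : {x : E2 | z ∈ Tub x y r}
          = {x : E2 | |cross (z - y) (x - y)| ≤ r * ‖x - y‖} := by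
        ext x
        simp only [Tub, mem_setOf_eq]
        rw [abs_cross_symm x y z, norm_sub_rev y x]
      have hkey := key_slice_bound hv hμℓ hCμ hs0 hs1 hσ'0 hσ's hμF hR haR hδ hδ1 hr
        hyB.2 hyR hzR (hyz.symm : z ≠ y)
      rw [hμ', Measure.restrict_apply' hAm, hset]
      refine le_trans hkey ?_
      rw [← ENNReal.ofReal_mul hCb0.le]
      refine ENNReal.ofReal_le_ofReal (le_of_eq ?_)
      rw [norm_sub_rev z y]
    calc ∫⁻ y, μ' {x | z ∈ Tub x y r} ∂ν'
        ≤ ∫⁻ y, ENNReal.ofReal Cb * ENNReal.ofReal (min 1 ((r / ‖y - z‖) ^ σ')) ∂ν' :=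
          lintegral_mono_ae hyae
      _ = ENNReal.ofReal Cb * ∫⁻ y, ENNReal.ofReal (min 1 ((r / ‖y - z‖) ^ σ')) ∂ν' :=
          lintegral_const_mul' _ _ ENNReal.ofReal_ne_top
      _ ≤ ENNReal.ofReal Cb * ∫⁻ y, ENNReal.ofReal (min 1 ((r / ‖y - z‖) ^ σ')) ∂ν := by
          gcongr
          exact Measure.restrict_le_self
      _ ≤ ENNReal.ofReal Cb * ENNReal.ofReal (Ce * r ^ σ'') := by
          gcongr
          exact energy_bound hCν hs0 hσ''0 hσ''σ' hσ''s hνF z hr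
  calc ∫⁻ p, ν' (Tub p.1 p.2 r) ∂Pi
      = ∫⁻ z, ∫⁻ y, μ' {x | z ∈ Tub x y r} ∂ν' ∂ν' := by
        rw [e1, e2]
        exact lintegral_congr e3
    _ ≤ ∫⁻ _, ENNReal.ofReal Cb * ENNReal.ofReal (Ce * r ^ σ'') ∂ν' :=
        lintegral_mono_ae hzae
    _ = (ENNReal.ofReal Cb * ENNReal.ofReal (Ce * r ^ σ'')) * ν' univ := lintegral_const _
    _ ≤ (ENNReal.ofReal Cb * ENNReal.ofReal (Ce * r ^ σ'')) * 1 := by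
        gcongr
        calc ν' univ ≤ ν univ := Measure.restrict_le_self _
          _ = 1 := measure_univ
    _ = ENNReal.ofReal ((Cb * Ce) * r ^ σ'') := by
        rw [mul_one, ← ENNReal.ofReal_mul hCb0.le]
        congr 1
        ring
set_option maxHeartbeats 4000000 in
/-- Kaufman-type lemma: if `spt μ ⊆ ℓ`, `spt ν ⊆ ℝ² \ ℓ`, the supports are separated, and both
measures satisfy an `s`-Frostman condition, then `(μ,ν)` has `σ`-thin tubes for all `σ < s`. -/
theorem thin_tubes_from_line (s : ℝ) (hs0 : 0 < s) (hs1 : s ≤ 1)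
    (ℓ : Set E2) (hℓ : IsAffineLine ℓ)
    (μ ν : Measure E2) [IsProbabilityMeasure μ] [IsProbabilityMeasure ν]
    (hμℓ : msupport μ ⊆ ℓ) (hνℓ : msupport ν ⊆ ℓᶜ)
    (hsep : ∃ ε : ℝ, 0 < ε ∧ ∀ x ∈ msupport μ, ∀ y ∈ msupport ν, ε ≤ dist x y)
    (hμF : ∃ C : ℝ, 0 < C ∧ ∀ (x : E2) (r : ℝ), 0 < r →
      μ (closedBall x r) ≤ ENNReal.ofReal (C * r ^ s))
    (hνF : ∃ C : ℝ, 0 < C ∧ ∀ (x : E2) (r : ℝ), 0 < r →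
      ν (closedBall x r) ≤ ENNReal.ofReal (C * r ^ s)) :
    ∀ σ : ℝ, 0 ≤ σ → σ < s → ThinTubes μ ν σ := by
  intro σ hσ0 hσs
  obtain ⟨a, v, hv, hℓeq⟩ := hℓ
  set u : E2 := ‖v‖⁻¹ • v with hudef
  have hu1 : ‖u‖ = 1 := norm_unit_vec hv
  have hμline : ∀ x ∈ msupport μ, ∃ t : ℝ, x = a + t • v := by
    intro x hx
    have h := hμℓ hx
    rw [hℓeq] at h
    exact h
  obtain ⟨ε₀, hε₀, hsepfull⟩ := hsep
  set ε : ℝ := min ε₀ 1 with hεdef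
  have hε0 : 0 < ε := lt_min hε₀ one_pos
  have hε1 : ε ≤ 1 := min_le_right _ _
  have hsep' : ∀ x ∈ msupport μ, ∀ y ∈ msupport ν, ε ≤ dist x y := fun x hx y hy =>
    le_trans (min_le_left _ _) (hsepfull x hx y hy)
  obtain ⟨Cμ₀, hCμ₀, hμF₀⟩ := hμF
  obtain ⟨Cν₀, hCν₀, hνF₀⟩ := hνF
  set Cμ : ℝ := max Cμ₀ 1 with hCμdef
  set Cν : ℝ := max Cν₀ 1 with hCνdef
  have hCμ1 : 1 ≤ Cμ := le_max_right _ _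
  have hCν1 : 1 ≤ Cν := le_max_right _ _
  have hμFr : ∀ (x : E2) (ρ : ℝ), 0 < ρ → μ (closedBall x ρ) ≤ ENNReal.ofReal (Cμ * ρ ^ s) := by
    intro x ρ hρ
    refine le_trans (hμF₀ x ρ hρ) (ENNReal.ofReal_le_ofReal ?_)
    have h1 : (0:ℝ) ≤ ρ ^ s := by positivity
    exact mul_le_mul_of_nonneg_right (le_max_left _ _) h1
  have hνFr : ∀ (x : E2) (ρ : ℝ), 0 < ρ → ν (closedBall x ρ) ≤ ENNReal.ofReal (Cν * ρ ^ s) := by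
    intro x ρ hρ
    refine le_trans (hνF₀ x ρ hρ) (ENNReal.ofReal_le_ofReal ?_)
    have h1 : (0:ℝ) ≤ ρ ^ s := by positivity
    exact mul_le_mul_of_nonneg_right (le_max_left _ _) h1
  -- measurability of the cross coordinate
  have hφm : Measurable fun z : E2 => |cross (z - a) u| := by
    have heq : (fun z : E2 => cross (z - a) u)
        = fun z : E2 => (z 0 - a 0) * u 1 - (z 1 - a 1) * u 0 := rfl
    have : Measurable fun z : E2 => cross (z - a) u := by
      rw [heq]
      exact ((((measurable_coord 0).sub measurable_const).mul measurable_const).sub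
        (((measurable_coord 1).sub measurable_const).mul measurable_const))
    exact this.abs
  -- choice of R
  have hcup : ⋃ n : ℕ, closedBall (0:E2) n = univ := by
    rw [eq_univ_iff_forall]
    intro x
    rcases exists_nat_ge ‖x‖ with ⟨n, hn⟩
    exact mem_iUnion.mpr ⟨n, by rw [mem_closedBall, dist_zero_right]; exact hn⟩
  have hmono : Monotone fun n : ℕ => closedBall (0:E2) n := fun m n hmn =>
    closedBall_subset_closedBall (by exact_mod_cast hmn)
  have hμiSup : (⨆ n : ℕ, μ (closedBall (0:E2) n)) = 1 := by
    rw [← Directed.measure_iUnion hmono.directed_le, hcup, measure_univ]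
  have hνiSup : (⨆ n : ℕ, ν (closedBall (0:E2) n)) = 1 := by
    rw [← Directed.measure_iUnion hmono.directed_le, hcup, measure_univ]
  obtain ⟨nμ, hnμ⟩ : ∃ n : ℕ, ENNReal.ofReal (3/4) < μ (closedBall (0:E2) n) := by
    rw [← lt_iSup_iff, hμiSup]
    exact ENNReal.ofReal_lt_one.mpr (by norm_num)
  obtain ⟨nν, hnν⟩ : ∃ n : ℕ, ENNReal.ofReal (7/8) < ν (closedBall (0:E2) n) := by
    rw [← lt_iSup_iff, hνiSup]
    exact ENNReal.ofReal_lt_one.mpr (by norm_num)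
  set R : ℝ := max (max (nμ:ℝ) (nν:ℝ)) (max 1 ‖a‖) with hRdef
  have hR1 : 1 ≤ R := le_trans (le_max_left _ _) (le_max_right _ _)
  have haR : ‖a‖ ≤ R := le_trans (le_max_right _ _) (le_max_right _ _)
  have hμcb : ENNReal.ofReal (3/4) ≤ μ (closedBall 0 R) :=
    le_trans hnμ.le (measure_mono (closedBall_subset_closedBall
      (le_trans (le_max_left _ _) (le_max_left _ _))))
  have hνcb : ENNReal.ofReal (7/8) ≤ ν (closedBall 0 R) :=
    le_trans hnν.le (measure_mono (closedBall_subset_closedBall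
      (le_trans (le_max_right _ _) (le_max_left _ _))))
  -- ν gives no mass to the line
  have hνline : ν {z : E2 | cross (z - a) u = 0} = 0 := by
    have hker : {z : E2 | cross (z - a) u = 0} ⊆ (msupport ν)ᶜ := by
      intro z hz
      have hzℓ : z ∈ ℓ := by
        rw [hℓeq]
        refine ⟨dotp (z - a) u * ‖v‖⁻¹, ?_⟩
        have hsm : (dotp (z - a) u * ‖v‖⁻¹) • v = dotp (z - a) u • u := by
          rw [hudef, smul_smul]
        rw [hsm]
        have hu2 : u 0 ^ 2 + u 1 ^ 2 = 1 := by
          have h := norm_sq_eq u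
          rw [hu1] at h
          linarith [h.symm]
        have hcz : (z - a) 0 * u 1 - (z - a) 1 * u 0 = 0 := hz
        have hz0 : (z - a) 0 = z 0 - a 0 := rfl
        have hz1 : (z - a) 1 = z 1 - a 1 := rfl
        rw [hz0, hz1] at hcz
        ext i
        fin_cases i
        · show z 0 = (a + dotp (z - a) u • u) 0
          have : (a + dotp (z - a) u • u) 0 = a 0 + dotp (z - a) u * u 0 := rfl
          rw [this]
          simp only [dotp, hz0, hz1]
          linear_combination (u 1) * hcz - (z 0 - a 0) * hu2
        · show z 1 = (a + dotp (z - a) u • u) 1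
          have : (a + dotp (z - a) u • u) 1 = a 1 + dotp (z - a) u * u 1 := rfl
          rw [this]
          simp only [dotp, hz0, hz1]
          linear_combination (-(u 0)) * hcz - (z 1 - a 1) * hu2
      intro hzspt
      exact (hνℓ hzspt) hzℓ
    exact measure_mono_null hker (msupport_compl_null ν)
  -- choice of δ
  have hiInter : ⋂ n : ℕ, {z : E2 | |cross (z - a) u| < 1/(n+1)}
      = {z : E2 | cross (z - a) u = 0} := by
    ext z
    simp only [mem_iInter, mem_setOf_eq]
    constructor
    · intro h
      by_contra h0
      have habs : 0 < |cross (z - a) u| := abs_pos.mpr h0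
      obtain ⟨n, hn⟩ := exists_nat_one_div_lt habs
      exact absurd (h n) (not_lt.mpr hn.le)
    · intro h n
      rw [h]
      simp only [abs_zero]
      positivity
  have hδex : ∃ n : ℕ, ν {z : E2 | |cross (z - a) u| < 1/(n+1)} < ENNReal.ofReal (1/8) := by
    have hanti : Antitone fun n : ℕ => {z : E2 | |cross (z - a) u| < 1/(n+1)} := by
      intro m n hmn z hz
      simp only [mem_setOf_eq] at hz ⊢
      have h1 : (1:ℝ)/(n+1) ≤ 1/(m+1) := by
        apply div_le_div_of_nonneg_left (by norm_num) (by positivity)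
        exact_mod_cast add_le_add_left (Nat.cast_le.mpr hmn) 1
      linarith
    have hmeas : ∀ n : ℕ, NullMeasurableSet {z : E2 | |cross (z - a) u| < 1/(n+1)} ν :=
      fun n => (measurableSet_lt hφm measurable_const).nullMeasurableSet
    have hfin : ∃ n : ℕ, ν {z : E2 | |cross (z - a) u| < 1/(n+1)} ≠ ∞ :=
      ⟨0, measure_ne_top _ _⟩
    have hInf := hanti.measure_iInter hmeas hfin
    rw [hiInter, hνline] at hInf
    by_contra hcon
    push_neg at hcon
    have : ENNReal.ofReal (1/8) ≤ ⨅ n : ℕ, ν {z : E2 | |cross (z - a) u| < 1/(n+1)} :=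
      le_iInf hcon
    rw [← hInf] at this
    have h0 : (0:ℝ≥0∞) < ENNReal.ofReal (1/8) := ENNReal.ofReal_pos.mpr (by norm_num)
    exact absurd this (not_le.mpr h0)
  obtain ⟨nδ, hnδ⟩ := hδex
  set δ : ℝ := 1/(nδ+1) with hδdef
  have hδ0 : 0 < δ := by rw [hδdef]; positivity
  have hδ1 : δ ≤ 1 := by
    rw [hδdef]
    rw [div_le_one (by positivity)]
    have : (0:ℝ) ≤ (nδ:ℝ) := Nat.cast_nonneg _
    linarith
  -- the sets A and B
  set A : Set E2 := msupport μ ∩ closedBall 0 R with hAdef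
  set B : Set E2 := (msupport ν ∩ closedBall 0 R) ∩ {z : E2 | δ ≤ |cross (z - a) u|} with hBdef
  have hAm : MeasurableSet A :=
    (isClosed_msupport μ).measurableSet.inter measurableSet_closedBall
  have hBm : MeasurableSet B :=
    (((isClosed_msupport ν).measurableSet.inter measurableSet_closedBall)).inter
      (measurableSet_le measurable_const hφm)
  have hμA : ENNReal.ofReal (3/4) ≤ μ A := by
    have hsub : closedBall (0:E2) R ⊆ A ∪ (msupport μ)ᶜ := by
      intro x hx
      by_cases h : x ∈ msupport μ
      · exact Or.inl ⟨h, hx⟩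
      · exact Or.inr h
    calc ENNReal.ofReal (3/4) ≤ μ (closedBall 0 R) := hμcb
      _ ≤ μ (A ∪ (msupport μ)ᶜ) := measure_mono hsub
      _ ≤ μ A + μ (msupport μ)ᶜ := measure_union_le _ _
      _ = μ A := by rw [msupport_compl_null μ, add_zero]
  have hνB : ENNReal.ofReal (3/4) ≤ ν B := by
    have hsub : closedBall (0:E2) R ⊆ (B ∪ (msupport ν)ᶜ) ∪
        {z : E2 | |cross (z - a) u| < δ} := by
      intro z hz
      by_cases h1 : z ∈ msupport ν
      · by_cases h2 : δ ≤ |cross (z - a) u|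
        · exact Or.inl (Or.inl ⟨⟨h1, hz⟩, h2⟩)
        · push_neg at h2
          exact Or.inr h2
      · exact Or.inl (Or.inr h1)
    have h78 : ENNReal.ofReal (7/8) ≤ ν B + ENNReal.ofReal (1/8) := by
      calc ENNReal.ofReal (7/8) ≤ ν (closedBall 0 R) := hνcb
        _ ≤ ν ((B ∪ (msupport ν)ᶜ) ∪ {z : E2 | |cross (z - a) u| < δ}) := measure_mono hsub
        _ ≤ ν (B ∪ (msupport ν)ᶜ) + ν {z : E2 | |cross (z - a) u| < δ} := measure_union_le _ _
        _ ≤ (ν B + ν (msupport ν)ᶜ) + ν {z : E2 | |cross (z - a) u| < δ} :=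
            add_le_add_left (measure_union_le _ _) _
        _ = ν B + ν {z : E2 | |cross (z - a) u| < δ} := by
            rw [msupport_compl_null ν, add_zero]
        _ ≤ ν B + ENNReal.ofReal (1/8) := add_le_add_right hnδ.le _
    have h3 := tsub_le_iff_right.mpr h78
    calc ENNReal.ofReal (3/4) = ENNReal.ofReal (7/8) - ENNReal.ofReal (1/8) := by
          rw [← ENNReal.ofReal_sub _ (by norm_num : (0:ℝ) ≤ 1/8)]
          norm_num
      _ ≤ ν B := h3
  -- exponents
  set η : ℝ := (s - σ)/3 with hηdef
  have hη0 : 0 < η := by rw [hηdef]; linarith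
  set σ'' : ℝ := σ + η with hσ''def
  set σ' : ℝ := σ + 2*η with hσ'def
  have hσ''0 : 0 < σ'' := by rw [hσ''def]; linarith
  have hσ''σ' : σ'' < σ' := by rw [hσ''def, hσ'def]; linarith
  have hσ''s : σ'' ≤ s := by rw [hσ''def, hηdef]; linarith
  have hσ's : σ' ≤ s := by rw [hσ'def, hηdef]; linarith
  have hσ'0 : 0 < σ' := hσ''0.trans hσ''σ'
  -- constants
  set Cb : ℝ := CbDef Cμ s σ' R δ with hCbdef
  have hCb0 : 0 < Cb := CbDef_pos
  set Ce : ℝ := Cν ^ (σ''/s) * 2 ^ σ'' * (1 - 2 ^ (-(σ' - σ'')))⁻¹ with hCedef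
  have h2η : (2:ℝ) ^ (-(σ' - σ'')) < 1 :=
    Real.rpow_lt_one_of_one_lt_of_neg (by norm_num) (by linarith)
  have h2η0 : (0:ℝ) < 2 ^ (-(σ' - σ'')) := Real.rpow_pos_of_pos (by norm_num) _
  have hCe0 : 0 < Ce := by
    rw [hCedef]
    apply mul_pos (mul_pos (Real.rpow_pos_of_pos (by linarith) _)
      (Real.rpow_pos_of_pos (by norm_num) _)) (inv_pos.mpr (by linarith))
  set Cq : ℝ := Cb * Ce with hCqdef
  have hCq0 : 0 < Cq := mul_pos hCb0 hCe0
  set q : ℝ := (2:ℝ) ^ (-η) with hqdef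
  have hq0 : 0 < q := Real.rpow_pos_of_pos (by norm_num) _
  have hq1 : q < 1 := Real.rpow_lt_one_of_one_lt_of_neg (by norm_num) (by linarith)
  -- dyadic radii
  set rj : ℕ → ℝ := fun j => (2:ℝ) ^ (-(j:ℝ)) with hrjdef
  have hrj0 : ∀ j, 0 < rj j := fun j => Real.rpow_pos_of_pos (by norm_num) _
  have hrj1 : ∀ j, rj j ≤ 1 := fun j =>
    Real.rpow_le_one_of_one_le_of_nonpos (by norm_num) (by simp)
  -- the product measure and bad sets
  set PP := (μ.restrict A).prod (ν.restrict B) with hPPdef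
  set F : ℕ → E2 × E2 → ℝ≥0∞ := fun j p => (ν.restrict B) (Tub p.1 p.2 (rj j)) with hFdef
  have hFm : ∀ j, Measurable (F j) := fun j => measurable_F (ν.restrict B) (rj j)
  set Bad : ℕ → Set (E2 × E2) := fun j => {p | ENNReal.ofReal (rj j ^ σ) ≤ F j p} with hBaddef
  have hBadm : ∀ j, MeasurableSet (Bad j) :=
    fun j => measurableSet_le measurable_const (hFm j)
  have hPPBad : ∀ j : ℕ, PP (Bad j) ≤ ENNReal.ofReal (Cq * q ^ j) := by
    intro j
    have hthr0 : ENNReal.ofReal (rj j ^ σ) ≠ 0 := by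
      rw [Ne, ENNReal.ofReal_eq_zero, not_le]
      have := hrj0 j
      positivity
    have hmar := meas_ge_le_lintegral_div (μ := PP) (hFm j).aemeasurable hthr0
      ENNReal.ofReal_ne_top
    have hint := integral_F_le hv hμline hCμ1 hCν1 hs0 hs1 hσ''0 hσ''σ' hσ''s hσ's
      hμFr hνFr hR1 haR hδ0 hδ1 (hrj0 j) hBm
    have hratio : (Cq * rj j ^ σ'') / (rj j ^ σ) = Cq * q ^ j := by
      have h1 : rj j ^ σ'' / rj j ^ σ = rj j ^ (σ'' - σ) := (Real.rpow_sub (hrj0 j) _ _).symm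
      have h2 : rj j ^ (σ'' - σ) = q ^ j := by
        rw [hrjdef, hqdef]
        rw [← Real.rpow_natCast ((2:ℝ) ^ (-η)) j]
        rw [← Real.rpow_mul (by norm_num : (0:ℝ) ≤ 2),
          ← Real.rpow_mul (by norm_num : (0:ℝ) ≤ 2)]
        congr 1
        rw [hσ''def]
        ring
      calc (Cq * rj j ^ σ'') / (rj j ^ σ) = Cq * (rj j ^ σ'' / rj j ^ σ) := by ring
        _ = Cq * q ^ j := by rw [h1, h2]
    calc PP (Bad j) ≤ (∫⁻ p, F j p ∂PP) / ENNReal.ofReal (rj j ^ σ) := hmar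
      _ ≤ ENNReal.ofReal ((Cb * Ce) * rj j ^ σ'') / ENNReal.ofReal (rj j ^ σ) :=
          ENNReal.div_le_div_right hint _
      _ = ENNReal.ofReal (((Cb * Ce) * rj j ^ σ'') / (rj j ^ σ)) := by
          rw [ENNReal.ofReal_div_of_pos]
          have := hrj0 j
          positivity
      _ = ENNReal.ofReal (Cq * q ^ j) := by rw [← hCqdef, hratio]
  -- choose j₀
  obtain ⟨j₀, hj₀⟩ : ∃ j₀ : ℕ, Cq * q ^ j₀ * (1 - q)⁻¹ ≤ 1/4 := by
    obtain ⟨n, hn⟩ := exists_pow_lt_of_lt_one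
      (show (0:ℝ) < (1/4) * (1 - q) / Cq by
        apply div_pos (by nlinarith) hCq0) hq1
    refine ⟨n, ?_⟩
    have h1 : Cq * q ^ n * (1 - q)⁻¹ < Cq * ((1/4) * (1 - q) / Cq) * (1 - q)⁻¹ := by
      apply mul_lt_mul_of_pos_right (mul_lt_mul_of_pos_left hn hCq0)
        (inv_pos.mpr (by linarith))
    have h2 : Cq * ((1/4) * (1 - q) / Cq) * (1 - q)⁻¹ = 1/4 := by
      have hCq' : Cq ≠ 0 := hCq0.ne'
      have hq' : (1:ℝ) - q ≠ 0 := by linarith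
      field_simp
    linarith
  set U : Set (E2 × E2) := ⋃ k : ℕ, Bad (j₀ + k) with hUdef
  have hUm : MeasurableSet U := MeasurableSet.iUnion fun k => hBadm _
  have hPPU : PP U ≤ ENNReal.ofReal (1/4) := by
    calc PP U ≤ ∑' k : ℕ, PP (Bad (j₀ + k)) := measure_iUnion_le _
      _ ≤ ∑' k : ℕ, ENNReal.ofReal ((Cq * q ^ j₀) * q ^ k) := by
          refine ENNReal.tsum_le_tsum fun k => ?_
          refine le_trans (hPPBad (j₀ + k)) (ENNReal.ofReal_le_ofReal (le_of_eq ?_))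
          rw [pow_add]
          ring
      _ = ENNReal.ofReal (Cq * q ^ j₀) * ∑' k : ℕ, (ENNReal.ofReal q) ^ k := by
          rw [← ENNReal.tsum_mul_left]
          congr 1
          funext k
          rw [← ENNReal.ofReal_pow hq0.le, ← ENNReal.ofReal_mul (by positivity)]
      _ = ENNReal.ofReal (Cq * q ^ j₀) * ENNReal.ofReal ((1 - q)⁻¹) := by
          rw [ENNReal.tsum_geometric]
          congr 1
          rw [ENNReal.ofReal_inv_of_pos (by linarith : (0:ℝ) < 1 - q)]
          congr 1
          rw [ENNReal.ofReal_sub 1 hq0.le]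
          simp
      _ = ENNReal.ofReal (Cq * q ^ j₀ * (1 - q)⁻¹) := by
          rw [← ENNReal.ofReal_mul (by positivity)]
      _ ≤ ENNReal.ofReal (1/4) := ENNReal.ofReal_le_ofReal hj₀
  set G : Set (E2 × E2) := (A ×ˢ B) \ U with hGdef
  have hGm : MeasurableSet G := (hAm.prod hBm).diff hUm
  have hGmass : ENNReal.ofReal (1/4) ≤ (μ.prod ν) G := by
    have hABsub : A ×ˢ B ⊆ G ∪ (U ∩ A ×ˢ B) := by
      intro p hp
      by_cases h : p ∈ U
      · exact Or.inr ⟨h, hp⟩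
      · exact Or.inl ⟨hp, h⟩
    have hprodAB : ENNReal.ofReal (9/16) ≤ (μ.prod ν) (A ×ˢ B) := by
      rw [Measure.prod_prod]
      calc ENNReal.ofReal (9/16) = ENNReal.ofReal (3/4) * ENNReal.ofReal (3/4) := by
            rw [← ENNReal.ofReal_mul (by norm_num)]
            norm_num
        _ ≤ μ A * ν B := mul_le_mul' hμA hνB
    have hUAB : (μ.prod ν) (U ∩ A ×ˢ B) ≤ ENNReal.ofReal (1/4) := by
      have heq : (μ.prod ν) (U ∩ A ×ˢ B) = PP U := by
        rw [hPPdef, Measure.prod_restrict, Measure.restrict_apply hUm]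
      rw [heq]
      exact hPPU
    have h1 : (μ.prod ν) (A ×ˢ B) ≤ (μ.prod ν) G + (μ.prod ν) (U ∩ A ×ˢ B) :=
      le_trans (measure_mono hABsub) (measure_union_le _ _)
    have h2 : ENNReal.ofReal (9/16) ≤ (μ.prod ν) G + ENNReal.ofReal (1/4) :=
      le_trans hprodAB (le_trans h1 (add_le_add_right hUAB _))
    have h3 := tsub_le_iff_right.mpr h2
    calc ENNReal.ofReal (1/4) ≤ ENNReal.ofReal (9/16) - ENNReal.ofReal (1/4) := by
          rw [← ENNReal.ofReal_sub _ (by norm_num : (0:ℝ) ≤ 1/4)]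
          exact ENNReal.ofReal_le_ofReal (by norm_num)
      _ ≤ (μ.prod ν) G := h3
  -- final constants
  set C₁ : ℝ := 8 * R / ε with hC₁def
  have hC₁0 : 0 < C₁ := by rw [hC₁def]; positivity
  have hC₁1 : 1 ≤ C₁ := by
    rw [hC₁def, le_div_iff₀ hε0]
    linarith
  set r₀ : ℝ := rj (j₀+1) / C₁ with hr₀def
  have hr₀0 : 0 < r₀ := div_pos (hrj0 _) hC₁0
  set K : ℝ := (2*C₁) ^ σ + (1/r₀) ^ σ with hKdef
  have hK0 : 0 < K := by
    rw [hKdef]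
    have h1 : (0:ℝ) < (2*C₁) ^ σ := Real.rpow_pos_of_pos (by linarith) _
    have h2 : (0:ℝ) < (1/r₀) ^ σ := Real.rpow_pos_of_pos (by positivity) _
    linarith
  refine ⟨K, 1/4, hK0, by norm_num, G, hGm, ?_, hGmass, ?_⟩
  · intro p hp
    exact ⟨hp.1.1.1, hp.1.2.1.1⟩
  intro x hxspt r hr ℓ' hℓ' hxT
  obtain ⟨a', v', hv', hℓ'eq⟩ := hℓ'
  by_cases hne : (cthickening r ℓ' ∩ {y | (x, y) ∈ G}).Nonempty
  swap
  · rw [Set.not_nonempty_iff_eq_empty] at hne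
    rw [hne, measure_empty]
    exact zero_le
  obtain ⟨y₀, hy₀T, hy₀G⟩ := hne
  have hxy₀G : (x, y₀) ∈ G := hy₀G
  have hxA : x ∈ A := hxy₀G.1.1
  have hy₀B : y₀ ∈ B := hxy₀G.1.2
  have hnotU : ∀ k : ℕ, (x, y₀) ∉ Bad (j₀ + k) := fun k hk =>
    hxy₀G.2 (mem_iUnion.mpr ⟨k, hk⟩)
  have hxR' : ‖x‖ ≤ R := by
    have h := hxA.2
    rwa [mem_closedBall, dist_zero_right] at h
  have hy₀R : ‖y₀‖ ≤ R := by
    have h := hy₀B.1.2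
    rwa [mem_closedBall, dist_zero_right] at h
  have hdist : ε ≤ ‖y₀ - x‖ := by
    have h := hsep' x hxspt y₀ hy₀B.1.1
    rwa [dist_eq_norm, norm_sub_rev] at h
  rcases le_or_gt r₀ r with hbig | hsmall
  · -- trivial bound for large radii
    calc ν (cthickening r ℓ' ∩ {y | (x, y) ∈ G}) ≤ 1 := prob_le_one
      _ ≤ ENNReal.ofReal (K * r ^ σ) := by
          rw [show (1:ℝ≥0∞) = ENNReal.ofReal 1 by simp]
          apply ENNReal.ofReal_le_ofReal
          have h1 : r₀ ^ σ ≤ r ^ σ := Real.rpow_le_rpow hr₀0.le hbig hσ0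
          have h2 : (1/r₀) ^ σ * r₀ ^ σ = 1 := by
            rw [← Real.mul_rpow (by positivity) hr₀0.le]
            rw [one_div_mul_cancel hr₀0.ne']
            exact Real.one_rpow _
          have h3 : (0:ℝ) ≤ (2*C₁) ^ σ := by positivity
          have h4 : (0:ℝ) ≤ (1/r₀) ^ σ := by positivity
          have h5 : (0:ℝ) ≤ r ^ σ := by positivity
          calc (1:ℝ) = (1/r₀) ^ σ * r₀ ^ σ := h2.symm
            _ ≤ (1/r₀) ^ σ * r ^ σ := mul_le_mul_of_nonneg_left h1 h4
            _ ≤ K * r ^ σ := by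
                rw [hKdef]
                exact mul_le_mul_of_nonneg_right (by linarith) h5
  · -- main case : small radii
    have hCr : 0 < C₁ * r := by positivity
    have hCrlt : C₁ * r < rj (j₀+1) := by
      rw [hr₀def] at hsmall
      rw [lt_div_iff₀ hC₁0] at hsmall
      linarith [hsmall]
    set c : ℝ := (C₁ * r)⁻¹ with hcdef
    have hc0 : 0 < c := inv_pos.mpr hCr
    have hcCr : c * (C₁ * r) = 1 := inv_mul_cancel₀ hCr.ne'
    have hc1 : (2:ℝ) ^ (((j₀:ℝ))+1) < c := by
      have hmul : (2:ℝ) ^ (((j₀:ℝ))+1) * (C₁ * r) < 1 := by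
        have h1 : (2:ℝ) ^ (((j₀:ℝ))+1) * rj (j₀+1) = 1 := by
          rw [hrjdef]
          rw [← Real.rpow_add (by norm_num : (0:ℝ) < 2)]
          rw [show ((j₀:ℝ)+1) + -(((j₀+1 : ℕ)):ℝ) = 0 by push_cast; ring]
          exact Real.rpow_zero 2
        calc (2:ℝ) ^ (((j₀:ℝ))+1) * (C₁ * r) < (2:ℝ) ^ (((j₀:ℝ))+1) * rj (j₀+1) := by
              apply mul_lt_mul_of_pos_left hCrlt (Real.rpow_pos_of_pos (by norm_num) _)
          _ = 1 := h1
      rw [hcdef, inv_eq_one_div, lt_div_iff₀ hCr]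
      exact hmul
    have hc2 : 2 < c := by
      have : (2:ℝ) = 2 ^ (1:ℝ) := (Real.rpow_one 2).symm
      rw [this]
      refine lt_of_le_of_lt ?_ hc1
      apply Real.rpow_le_rpow_of_exponent_le (by norm_num)
      have : (0:ℝ) ≤ (j₀:ℝ) := Nat.cast_nonneg _
      linarith
    have hlogb : ((j₀:ℝ))+1 ≤ Real.logb 2 c := by
      have h1 : Real.logb 2 ((2:ℝ) ^ (((j₀:ℝ))+1)) = ((j₀:ℝ))+1 :=
        Real.logb_rpow (by norm_num) (by norm_num)
      rw [← h1]
      exact Real.logb_le_logb_of_le (by norm_num)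
        (Real.rpow_pos_of_pos (by norm_num) _) hc1.le
    set j : ℕ := ⌊Real.logb 2 c⌋₊ with hjdef
    have hjge : j₀ + 1 ≤ j := by
      rw [hjdef]
      apply Nat.le_floor
      push_cast
      exact hlogb
    have hlog0 : 0 ≤ Real.logb 2 c := by
      have : (0:ℝ) ≤ (j₀:ℝ) := Nat.cast_nonneg _
      linarith
    have h2jc : (2:ℝ) ^ (j:ℝ) ≤ c := by
      calc (2:ℝ) ^ (j:ℝ) ≤ (2:ℝ) ^ (Real.logb 2 c) := by
            apply Real.rpow_le_rpow_of_exponent_le (by norm_num)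
            exact_mod_cast Nat.floor_le hlog0
        _ = c := Real.rpow_logb (by norm_num) (by norm_num) hc0
    have hc2j : c < (2:ℝ) ^ ((j:ℝ)+1) := by
      calc c = (2:ℝ) ^ (Real.logb 2 c) := (Real.rpow_logb (by norm_num) (by norm_num) hc0).symm
        _ < (2:ℝ) ^ ((j:ℝ)+1) := by
            apply Real.rpow_lt_rpow_of_exponent_lt (by norm_num)
            exact_mod_cast Nat.lt_floor_add_one (Real.logb 2 c)
    have h2j0 : (0:ℝ) < (2:ℝ) ^ (j:ℝ) := Real.rpow_pos_of_pos (by norm_num) _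
    have hrjinv : rj j = ((2:ℝ) ^ (j:ℝ))⁻¹ := by
      show (2:ℝ) ^ (-(j:ℝ)) = ((2:ℝ) ^ (j:ℝ))⁻¹
      exact Real.rpow_neg (by norm_num) _
    have hrj_ge : C₁ * r ≤ rj j := by
      rw [hrjinv, inv_eq_one_div, le_div_iff₀ h2j0]
      calc C₁ * r * (2:ℝ) ^ (j:ℝ) ≤ C₁ * r * c := by
            apply mul_le_mul_of_nonneg_left h2jc hCr.le
        _ = 1 := by rw [mul_comm]; exact hcCr
    have hrj_lt : rj j < 2 * (C₁ * r) := by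
      rw [hrjinv, inv_eq_one_div, div_lt_iff₀ h2j0]
      have h1 : (2:ℝ) ^ ((j:ℝ)+1) = 2 ^ (j:ℝ) * 2 := by
        rw [Real.rpow_add (by norm_num : (0:ℝ) < 2), Real.rpow_one]
      calc (1:ℝ) = c * (C₁ * r) := hcCr.symm
        _ < ((2:ℝ) ^ ((j:ℝ)+1)) * (C₁ * r) := mul_lt_mul_of_pos_right hc2j hCr
        _ = 2 * (C₁ * r) * (2:ℝ) ^ (j:ℝ) := by rw [h1]; ring
    -- membership facts for the tube
    have hxc : |cross (x - a') (‖v'‖⁻¹ • v')| ≤ r := by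
      apply cross_le_of_mem_cthickening hv' hr.le
      rw [← hℓ'eq]
      exact hxT
    have hy₀c : |cross (y₀ - a') (‖v'‖⁻¹ • v')| ≤ r := by
      apply cross_le_of_mem_cthickening hv' hr.le
      rw [← hℓ'eq]
      exact hy₀T
    have hsubset : cthickening r ℓ' ∩ {y | (x, y) ∈ G} ⊆ Tub x y₀ (rj j) ∩ B := by
      rintro z ⟨hzT, hzG⟩
      have hxzG : (x, z) ∈ G := hzG
      have hzB : z ∈ B := hxzG.1.2
      have hzR : ‖z‖ ≤ R := by
        have h := hzB.1.2
        rwa [mem_closedBall, dist_zero_right] at h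
      have hzc : |cross (z - a') (‖v'‖⁻¹ • v')| ≤ r := by
        apply cross_le_of_mem_cthickening hv' hr.le
        rw [← hℓ'eq]
        exact hzT
      refine ⟨?_, hzB⟩
      have htc := tube_containment hv' hr hε0 hxc hy₀c hzc hxR' hy₀R hzR hdist
      have hmemC : z ∈ Tub x y₀ (C₁ * r) := by
        show |cross (z - x) (y₀ - x)| ≤ (C₁ * r) * ‖y₀ - x‖
        calc |cross (z - x) (y₀ - x)| ≤ ((8 * R / ε) * r) * ‖y₀ - x‖ := htc
          _ = (C₁ * r) * ‖y₀ - x‖ := by rw [hC₁def]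
      exact Tub_mono x y₀ hrj_ge hmemC
    have hFle : F j (x, y₀) ≤ ENNReal.ofReal (rj j ^ σ) := by
      have hj' : j = j₀ + (j - j₀) := by omega
      have hnot : (x, y₀) ∉ Bad j := by
        rw [hj']
        exact hnotU (j - j₀)
      have : ¬ (ENNReal.ofReal (rj j ^ σ) ≤ F j (x, y₀)) := hnot
      exact (not_le.mp this).le
    calc ν (cthickening r ℓ' ∩ {y | (x, y) ∈ G})
        ≤ ν (Tub x y₀ (rj j) ∩ B) := measure_mono hsubset
      _ = F j (x, y₀) := by
          show ν (Tub x y₀ (rj j) ∩ B) = (ν.restrict B) (Tub x y₀ (rj j))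
          rw [Measure.restrict_apply' hBm]
      _ ≤ ENNReal.ofReal (rj j ^ σ) := hFle
      _ ≤ ENNReal.ofReal (K * r ^ σ) := by
          apply ENNReal.ofReal_le_ofReal
          have h1 : rj j ^ σ ≤ (2 * (C₁ * r)) ^ σ :=
            Real.rpow_le_rpow (hrj0 j).le hrj_lt.le hσ0
          have h2 : (2 * (C₁ * r)) ^ σ = (2*C₁) ^ σ * r ^ σ := by
            rw [show 2*(C₁*r) = (2*C₁)*r by ring]
            exact Real.mul_rpow (by positivity) hr.le
          have h3 : (0:ℝ) ≤ r ^ σ := by positivity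
          have h4 : (0:ℝ) ≤ (1/r₀) ^ σ := by positivity
          calc rj j ^ σ ≤ (2*C₁) ^ σ * r ^ σ := by rw [← h2]; exact h1
            _ ≤ K * r ^ σ := by
                rw [hKdef]
                exact mul_le_mul_of_nonneg_right (by linarith) h3
end
end

section
/- If μ, ν are Borel probability measures on ℝ² such that (μ,ν) has t-thin tubes for some t > 0, then there exists x ∈ spt(μ) such that the radial projection π_x(spt(ν) \ {x}) has positive t-dimensional Hausdorff measure; in particular dim_H π_x(spt(ν) \ {x}) ≥ t. -/
open Metric MeasureTheory Set
open scoped ENNReal NNReal RealInnerProductSpace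

noncomputable section

private lemma tube_limit_zero {ν : Measure E2} {K t : ℝ} (hK : 0 < K) (ht : 0 < t)
    {A : Set E2} (h : ∀ r : ℝ, 0 < r → ν A ≤ ENNReal.ofReal (K * r ^ t)) : ν A = 0 := by
  refine le_antisymm ?_ zero_le
  refine ENNReal.le_of_forall_pos_le_add fun ε hε _ => ?_
  rw [zero_add]
  have hεK : (0:ℝ) < (ε:ℝ) / K := div_pos hε hK
  set r : ℝ := ((ε:ℝ) / K) ^ (t⁻¹) with hrdef
  have hr : 0 < r := Real.rpow_pos_of_pos hεK _
  have hrt : r ^ t = (ε:ℝ) / K := by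
    rw [hrdef, ← Real.rpow_mul hεK.le, inv_mul_cancel₀ ht.ne', Real.rpow_one]
  have hKr : K * r ^ t = (ε:ℝ) := by
    rw [hrt]; field_simp
  calc ν A ≤ ENNReal.ofReal (K * r ^ t) := h r hr
    _ = (ε : ℝ≥0∞) := by rw [hKr, ENNReal.ofReal_coe_nnreal]

/-- If `(μ,ν)` has `t`-thin tubes for some `t > 0`, then there is `x ∈ spt μ` such that
`π_x(spt ν \ {x})` has positive `t`-dimensional Hausdorff measure; in particular its
Hausdorff dimension is at least `t`. -/
theorem thin_tubes_imply_large_radial_projection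
    (μ ν : Measure E2) [IsProbabilityMeasure μ] [IsProbabilityMeasure ν]
    (t : ℝ) (ht : 0 < t) (hthin : ThinTubes μ ν t) :
    ∃ x ∈ msupport μ,
      0 < μH[t] (radProj x '' (msupport ν \ {x})) ∧
      ENNReal.ofReal t ≤ dimH (radProj x '' (msupport ν \ {x})) := by
  obtain ⟨K, c, hK, hc, G, hGm, hGsub, hGc, htube⟩ := hthin
  -- choose x with ν(G|_x) > 0
  have hprod : (μ.prod ν) G = ∫⁻ x, ν (Prod.mk x ⁻¹' G) ∂μ := Measure.prod_apply hGm
  have hx : ∃ x, 0 < ν (Prod.mk x ⁻¹' G) := by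
    by_contra hcon
    push_neg at hcon
    have hz : ∀ x, ν (Prod.mk x ⁻¹' G) = 0 := fun x => le_antisymm (hcon x) zero_le
    rw [hprod] at hGc
    simp only [hz, lintegral_zero, nonpos_iff_eq_zero] at hGc
    exact absurd hGc (ENNReal.ofReal_pos.mpr hc).ne'
  obtain ⟨x, hxpos⟩ := hx
  set Gx : Set E2 := Prod.mk x ⁻¹' G with hGxdef
  have hGxm : MeasurableSet Gx := measurable_prodMk_left hGm
  have hxsupp : x ∈ msupport μ := by
    obtain ⟨y, hy⟩ := nonempty_of_measure_ne_zero hxpos.ne'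
    exact (hGsub hy).1
  have hGxsupp : ∀ y ∈ Gx, y ∈ msupport ν := fun y hy => (hGsub hy).2
  refine ⟨x, hxsupp, ?_⟩
  -- tube estimate for sets contained in thickenings of lines through x
  have key : ∀ (A ℓ : Set E2), IsAffineLine ℓ → x ∈ ℓ → ∀ r : ℝ, 0 < r →
      A ⊆ cthickening r ℓ → A ⊆ Gx → ν A ≤ ENNReal.ofReal (K * r ^ t) := by
    intro A ℓ hℓ hxℓ r hr hA hAG
    refine le_trans (measure_mono ?_) (htube x hxsupp r hr ℓ hℓ (self_subset_cthickening ℓ hxℓ))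
    exact fun y hy => ⟨hA hy, hAG hy⟩
  have hline0 : ∀ (A ℓ : Set E2), IsAffineLine ℓ → x ∈ ℓ → A ⊆ ℓ → A ⊆ Gx → ν A = 0 := by
    intro A ℓ hℓ hxℓ hA hAG
    refine tube_limit_zero hK ht fun r hr => key A ℓ hℓ hxℓ r hr ?_ hAG
    exact hA.trans (self_subset_cthickening ℓ)
  -- a fixed line through x
  have hvline : IsAffineLine {p : E2 | ∃ s : ℝ, p = x + s • (EuclideanSpace.single 0 (1:ℝ))} :=
    ⟨x, _, norm_ne_zero_iff.mp (by rw [EuclideanSpace.norm_single]; norm_num), rfl⟩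
  have hxv : x ∈ {p : E2 | ∃ s : ℝ, p = x + s • (EuclideanSpace.single 0 (1:ℝ))} :=
    ⟨0, by simp⟩
  -- remove the point x
  have hx0 : ν (Gx ∩ {x}) = 0 := by
    refine hline0 _ _ hvline hxv ?_ inter_subset_left
    rintro y ⟨-, rfl⟩; exact hxv
  have hdiffpos : 0 < ν (Gx \ {x}) := by
    have : ν Gx ≤ ν (Gx \ {x}) + ν (Gx ∩ {x}) := by
      refine (measure_mono ?_).trans (measure_union_le _ _)
      intro y hy
      by_cases h : y = x
      · exact Or.inr ⟨hy, h⟩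
      · exact Or.inl ⟨hy, h⟩
    rw [hx0, add_zero] at this
    exact lt_of_lt_of_le hxpos this
  -- find an annulus with positive measure
  set A : ℕ → Set E2 := fun n =>
    Gx ∩ {y | ((n:ℝ)+1)⁻¹ ≤ dist y x} ∩ closedBall x ((n:ℝ)+1) with hAdef
  have hUnion : Gx \ {x} ⊆ ⋃ n, A n := by
    intro y ⟨hyG, hyx⟩
    have hd : 0 < dist y x := dist_pos.mpr hyx
    obtain ⟨n, hn⟩ := exists_nat_gt (max (dist y x) (dist y x)⁻¹)
    refine mem_iUnion.mpr ⟨n, ⟨hyG, ?_⟩, ?_⟩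
    · have h1 : (dist y x)⁻¹ ≤ (n:ℝ) + 1 :=
        le_trans ((le_max_right _ _).trans hn.le) (by linarith)
      calc ((n:ℝ)+1)⁻¹ ≤ ((dist y x)⁻¹)⁻¹ :=
            inv_anti₀ (inv_pos.mpr hd) h1
        _ = dist y x := inv_inv _
    · exact mem_closedBall.mpr (le_trans ((le_max_left _ _).trans hn.le) (by linarith))
  have hAnpos : ∃ n, 0 < ν (A n) := by
    by_contra hcon
    push_neg at hcon
    have : ν (⋃ n, A n) = 0 :=
      measure_iUnion_null fun n => le_antisymm (hcon n) zero_le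
    exact absurd (le_trans (measure_mono hUnion) this.le) (by simpa using hdiffpos.ne')
  obtain ⟨n, hSpos⟩ := hAnpos
  set δ : ℝ := ((n:ℝ)+1)⁻¹ with hδdef
  set R : ℝ := (n:ℝ)+1 with hRdef
  have hδpos : 0 < δ := by positivity
  have hRpos : 0 < R := by positivity
  set S : Set E2 := A n with hSdef
  have hSsub : ∀ y ∈ S, y ∈ Gx ∧ δ ≤ dist y x ∧ dist y x ≤ R := by
    rintro y ⟨⟨h1, h2⟩, h3⟩
    exact ⟨h1, h2, mem_closedBall.mp h3⟩
  have hSne : ∀ y ∈ S, y ≠ x := by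
    intro y hy h
    have := (hSsub y hy).2.1
    rw [h, dist_self] at this
    exact absurd this (not_le.mpr hδpos)
  -- the radial projection and the pushforward measure
  set f : E2 → E2 := radProj x with hfdef
  have hfm : Measurable f := by
    have h1 : Measurable fun y : E2 => y - x := measurable_id.sub measurable_const
    exact (h1.norm.inv).smul h1
  set σ : Measure E2 := Measure.map f (ν.restrict S) with hσdef
  set C : ℝ≥0∞ := ENNReal.ofReal (K * R ^ t) with hCdef
  have hC0 : C ≠ 0 := by
    rw [hCdef]
    exact (ENNReal.ofReal_pos.mpr (by positivity)).ne'
  have hCtop : C ≠ ⊤ := ENNReal.ofReal_ne_top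
  -- the key Frostman estimate
  have hfrostman : ∀ s : Set E2, EMetric.diam s ≤ 1 → σ s ≤ C * EMetric.diam s ^ t := by
    intro s hs
    have hdiamne : EMetric.diam s ≠ ⊤ := (hs.trans_lt ENNReal.one_lt_top).ne
    set d : ℝ := (EMetric.diam s).toReal with hddef
    have hd0 : 0 ≤ d := ENNReal.toReal_nonneg
    set u : Set E2 := closure s with hudef
    have hum : MeasurableSet u := isClosed_closure.measurableSet
    have hσs : σ s ≤ ν (f ⁻¹' u ∩ S) := by
      calc σ s ≤ σ u := measure_mono subset_closure
        _ = (ν.restrict S) (f ⁻¹' u) := Measure.map_apply hfm hum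
        _ = ν (f ⁻¹' u ∩ S) := Measure.restrict_apply (hfm hum)
    rcases (f ⁻¹' u ∩ S).eq_empty_or_nonempty with hemp | ⟨y0, hy0u, hy0S⟩
    · rw [hemp] at hσs
      simp only [measure_empty, nonpos_iff_eq_zero] at hσs
      rw [hσs]; exact zero_le
    · set e0 : E2 := f y0 with he0def
      have hy0x : y0 ≠ x := hSne y0 hy0S
      have hy0nz : y0 - x ≠ 0 := sub_ne_zero.mpr hy0x
      have he0norm : ‖e0‖ = 1 := by
        rw [he0def, hfdef]
        simp only [radProj, norm_smul, norm_inv, norm_norm]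
        exact inv_mul_cancel₀ (norm_ne_zero_iff.mpr hy0nz)
      have he0nz : e0 ≠ 0 := by
        intro h; rw [h, norm_zero] at he0norm; norm_num at he0norm
      set ℓ : Set E2 := {p | ∃ s : ℝ, p = x + s • e0} with hℓdef
      have hℓline : IsAffineLine ℓ := ⟨x, e0, he0nz, rfl⟩
      have hxℓ : x ∈ ℓ := ⟨0, by simp⟩
      -- the preimage is in a tube of width R * d around ℓ
      have hincl : f ⁻¹' u ∩ S ⊆ cthickening (R * d) ℓ := by
        rintro y ⟨hyu, hyS⟩
        obtain ⟨hyG, hyδ, hyR⟩ := hSsub y hyS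
        have hynz : y - x ≠ 0 := sub_ne_zero.mpr (hSne y hyS)
        have hfydist : dist (f y) e0 ≤ d := by
          have h1 : edist (f y) e0 ≤ EMetric.diam u := EMetric.edist_le_diam_of_mem hyu hy0u
          have h2 : EMetric.diam u = EMetric.diam s := by
            rw [hudef]; exact EMetric.diam_closure s
          rw [h2] at h1
          rw [dist_edist, hddef]
          exact ENNReal.toReal_mono hdiamne h1
        have hrepr : y - x = ‖y - x‖ • f y := by
          rw [hfdef]
          simp only [radProj, smul_smul]
          rw [mul_inv_cancel₀ (norm_ne_zero_iff.mpr hynz), one_smul]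
        have hdist : dist y (x + ‖y - x‖ • e0) ≤ R * d := by
          rw [dist_eq_norm]
          have : y - (x + ‖y - x‖ • e0) = ‖y - x‖ • (f y - e0) := by
            rw [smul_sub, ← hrepr]; abel
          rw [this, norm_smul, Real.norm_eq_abs, abs_of_nonneg (norm_nonneg _)]
          have h3 : ‖y - x‖ ≤ R := by rwa [← dist_eq_norm]
          have h4 : ‖f y - e0‖ ≤ d := by rw [← dist_eq_norm]; exact hfydist
          exact mul_le_mul h3 h4 (norm_nonneg _) hRpos.le
        exact mem_cthickening_of_dist_le y (x + ‖y - x‖ • e0) _ ℓ ⟨‖y - x‖, rfl⟩ hdist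
      have hsubGx : f ⁻¹' u ∩ S ⊆ Gx := fun y hy => (hSsub y hy.2).1
      rcases eq_or_lt_of_le hd0 with hd | hd
      · -- d = 0 : the set lies on a line, measure zero
        have h0 : ν (f ⁻¹' u ∩ S) = 0 := by
          refine tube_limit_zero hK ht fun r hr => key _ ℓ hℓline hxℓ r hr ?_ hsubGx
          refine hincl.trans (cthickening_mono ?_ ℓ)
          rw [← hd, mul_zero]; exact hr.le
        calc σ s ≤ ν (f ⁻¹' u ∩ S) := hσs
          _ = 0 := h0
          _ ≤ _ := zero_le
      · -- d > 0 : apply the tube estimate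
        have hRd : 0 < R * d := mul_pos hRpos hd
        have hest := key _ ℓ hℓline hxℓ (R * d) hRd hincl hsubGx
        have heq : ENNReal.ofReal (K * (R * d) ^ t) = C * EMetric.diam s ^ t := by
          rw [Real.mul_rpow hRpos.le hd0, ← mul_assoc, ENNReal.ofReal_mul (by positivity),
            hCdef, ← ENNReal.ofReal_rpow_of_pos hd, hddef, ENNReal.ofReal_toReal hdiamne]
        calc σ s ≤ ν (f ⁻¹' u ∩ S) := hσs
          _ ≤ ENNReal.ofReal (K * (R * d) ^ t) := hest
          _ = C * EMetric.diam s ^ t := heq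
  -- mass distribution principle
  have hmass : C⁻¹ • σ ≤ μH[t] := by
    refine MeasureTheory.Measure.le_hausdorffMeasure t _ 1 one_pos fun s hs => ?_
    have h1 := hfrostman s hs
    calc (C⁻¹ • σ) s = C⁻¹ * σ s := rfl
      _ ≤ C⁻¹ * (C * EMetric.diam s ^ t) := mul_le_mul_right h1 _
      _ = (C⁻¹ * C) * EMetric.diam s ^ t := by ring
      _ = EMetric.diam s ^ t := by rw [ENNReal.inv_mul_cancel hC0 hCtop, one_mul]
  set T : Set E2 := radProj x '' (msupport ν \ {x}) with hTdef
  -- σ T ≥ ν S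
  have hSsubT : S ⊆ f ⁻¹' T := by
    intro y hy
    exact ⟨y, ⟨hGxsupp y (hSsub y hy).1, hSne y hy⟩, rfl⟩
  have hσT : ν S ≤ σ T := by
    calc ν S = (ν.restrict S) S := (Measure.restrict_apply_self ν S).symm
      _ ≤ (ν.restrict S) (f ⁻¹' T) := measure_mono hSsubT
      _ ≤ σ T := Measure.le_map_apply hfm.aemeasurable T
  have hμHT : 0 < μH[t] T := by
    have h1 : C⁻¹ * σ T ≤ μH[t] T := hmass T
    refine lt_of_lt_of_le ?_ h1
    refine ENNReal.mul_pos (ENNReal.inv_ne_zero.mpr hCtop) ?_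
    exact (lt_of_lt_of_le hSpos hσT).ne'
  refine ⟨hμHT, ?_⟩
  -- dimension bound
  have htnn : (t.toNNReal : ℝ) = t := Real.coe_toNNReal t ht.le
  have hne : μH[(t.toNNReal : ℝ)] T ≠ 0 := by rw [htnn]; exact hμHT.ne'
  have := le_dimH_of_hausdorffMeasure_ne_zero hne
  rwa [ENNReal.ofReal]
end
end

section
/- Let W = ℝ^{d−1} × {0} ⊆ ℝ^d and define F(x̄, x_d) = (x̄, 1)/x_d for x_d ≠ 0. Then for every w ∈ ℝ^{d−1} and every line ℓ through (w,0) not contained in W, the image F(ℓ \ W) is contained in a line parallel to the vector (w,1); consequently, for every compact K ⊆ ℝ^d \ W and every w ∈ ℝ^{d−1}, dim_H π_{(w,0)}(K) = dim_H P_{V(w)}(F(K)), where V(w) = (w,1)^⊥ and P_{V(w)} is the orthogonal projection onto V(w). -/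
open Metric MeasureTheory Set
open scoped ENNReal NNReal RealInnerProductSpace

noncomputable section

abbrev Ed (d : ℕ) := EuclideanSpace ℝ (Fin d)

/-- Append a last coordinate to a vector. -/
def snocE {d : ℕ} (w : Ed d) (a : ℝ) : Ed (d + 1) :=
  (WithLp.equiv 2 (Fin (d + 1) → ℝ)).symm (Fin.snoc ((WithLp.equiv 2 (Fin d → ℝ)) w) a)

/-- The hyperplane `W = ℝ^{d} × {0} ⊆ ℝ^{d+1}`. -/
def Wset (d : ℕ) : Set (Ed (d + 1)) := {x | x (Fin.last d) = 0}

/-- The projective map `F(x̄, x_d) = (x̄, 1)/x_d`. -/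
def Fmap {d : ℕ} (x : Ed (d + 1)) : Ed (d + 1) :=
  (x (Fin.last d))⁻¹ •
    ((WithLp.equiv 2 (Fin (d + 1) → ℝ)).symm
      (Function.update ((WithLp.equiv 2 (Fin (d + 1) → ℝ)) x) (Fin.last d) 1))

/-- Explicit orthogonal projection onto `v^⊥`. -/
def perpProj {d : ℕ} (v : Ed (d + 1)) (x : Ed (d + 1)) : Ed (d + 1) :=
  x - ((‖v‖ ^ 2)⁻¹ * ⟪x, v⟫) • v

section Aux

variable {d : ℕ}

/-- The last basis vector of `ℝ^{d+1}`. -/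
def ud (d : ℕ) : Ed (d + 1) := EuclideanSpace.single (Fin.last d) (1:ℝ)

lemma ud_apply_last : ud d (Fin.last d) = 1 := by
  simp [ud, EuclideanSpace.single_apply]

lemma snocE_apply_last (w : Ed d) (a : ℝ) : snocE w a (Fin.last d) = a := by
  simp [snocE, PiLp.toLp_apply, WithLp.equiv_apply, Fin.snoc_last]

lemma snocE_add_ud (w : Ed d) : snocE w 0 + ud d = snocE w 1 := by
  ext i
  refine Fin.lastCases ?_ (fun j => ?_) i
  · simp [snocE, ud, PiLp.add_apply, PiLp.toLp_apply, Fin.snoc_last,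
      EuclideanSpace.single_apply]
  · simp [snocE, ud, PiLp.add_apply, PiLp.toLp_apply, Fin.snoc_castSucc,
      EuclideanSpace.single_apply, (Fin.castSucc_lt_last j).ne]

lemma coord_abs_le_norm (z : Ed (d + 1)) (i : Fin (d + 1)) : |z i| ≤ ‖z‖ := by
  have h := abs_real_inner_le_norm z (EuclideanSpace.single i (1:ℝ))
  rw [EuclideanSpace.inner_single_right] at h
  simpa [EuclideanSpace.norm_single] using h

lemma Fmap_eq {y : Ed (d + 1)} (hy : y (Fin.last d) ≠ 0) :
    Fmap y = (y (Fin.last d))⁻¹ • y + ((y (Fin.last d))⁻¹ - 1) • ud d := by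
  have hupd : (WithLp.equiv 2 (Fin (d + 1) → ℝ)).symm
      (Function.update ((WithLp.equiv 2 (Fin (d + 1) → ℝ)) y) (Fin.last d) 1)
      = y + (1 - y (Fin.last d)) • ud d := by
    ext i
    by_cases h : i = Fin.last d
    · subst h
      simp [PiLp.toLp_apply, WithLp.equiv_apply, Function.update_self,
        PiLp.add_apply, PiLp.smul_apply, ud, EuclideanSpace.single_apply]
    · simp [PiLp.toLp_apply, WithLp.equiv_apply, Function.update_of_ne h,
        PiLp.add_apply, PiLp.smul_apply, ud, EuclideanSpace.single_apply, h]
  rw [Fmap, hupd, smul_add, smul_smul]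
  congr 1
  rw [mul_sub, mul_one, inv_mul_cancel₀ hy]

end Aux
section Aux2

variable {d : ℕ}

lemma perpProj_sub (v a b : Ed (d + 1)) :
    perpProj v (a - b) = perpProj v a - perpProj v b := by
  simp only [perpProj, inner_sub_left]
  module

lemma perpProj_smul (v : Ed (d + 1)) (t : ℝ) (a : Ed (d + 1)) :
    perpProj v (t • a) = t • perpProj v a := by
  simp only [perpProj, real_inner_smul_left]
  module

lemma perpProj_add (v a b : Ed (d + 1)) :
    perpProj v (a + b) = perpProj v a + perpProj v b := by
  simp only [perpProj, inner_add_left]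
  module

lemma perpProj_self {v : Ed (d + 1)} (hv : v ≠ 0) : perpProj v v = 0 := by
  have h : ‖v‖ ≠ 0 := norm_ne_zero_iff.mpr hv
  rw [perpProj, real_inner_self_eq_norm_sq, inv_mul_cancel₀ (by positivity), one_smul, sub_self]

lemma perpProj_norm_le (v z : Ed (d + 1)) : ‖perpProj v z‖ ≤ 2 * ‖z‖ := by
  by_cases hv : v = 0
  · simp only [perpProj, hv, inner_zero_right, mul_zero, zero_smul, sub_zero]
    linarith [norm_nonneg z]
  · have h : ‖v‖ ≠ 0 := norm_ne_zero_iff.mpr hv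
    have h2 : ‖perpProj v z‖ ≤ ‖z‖ + ‖((‖v‖ ^ 2)⁻¹ * ⟪z, v⟫) • v‖ := norm_sub_le _ _
    have h3 : ‖((‖v‖ ^ 2)⁻¹ * ⟪z, v⟫) • v‖ ≤ ‖z‖ := by
      rw [norm_smul, Real.norm_eq_abs, abs_mul, abs_inv, abs_of_nonneg (by positivity : (0:ℝ) ≤ ‖v‖ ^ 2)]
      have h4 : |⟪z, v⟫| ≤ ‖z‖ * ‖v‖ := abs_real_inner_le_norm z v
      calc (‖v‖ ^ 2)⁻¹ * |⟪z, v⟫| * ‖v‖ ≤ (‖v‖ ^ 2)⁻¹ * (‖z‖ * ‖v‖) * ‖v‖ := by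
            gcongr
        _ = ‖z‖ := by field_simp
    linarith

lemma perpProj_lip (v a b : Ed (d + 1)) :
    ‖perpProj v a - perpProj v b‖ ≤ 2 * ‖a - b‖ := by
  rw [← perpProj_sub]; exact perpProj_norm_le v (a - b)

lemma perpProj_apply_last {w : Ed d} (z : Ed (d + 1)) :
    perpProj (snocE w 1) z (Fin.last d)
      = z (Fin.last d) - (‖snocE w 1‖ ^ 2)⁻¹ * ⟪z, snocE w 1⟫ := by
  rw [perpProj]
  simp [PiLp.sub_apply, PiLp.smul_apply, snocE_apply_last]

end Aux2
section Aux3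

variable {d : ℕ}

/-- The map on directions corresponding to `P ∘ F`. -/
def gmap (w : Ed d) (e : Ed (d + 1)) : Ed (d + 1) :=
  perpProj (snocE w 1) ((e (Fin.last d))⁻¹ • e) - perpProj (snocE w 1) (ud d)

def Amap (w : Ed d) (z : Ed (d + 1)) : Ed (d + 1) :=
  (z + perpProj (snocE w 1) (ud d)) +
    (1 - (z + perpProj (snocE w 1) (ud d)) (Fin.last d)) • snocE w 1

def hmap (w : Ed d) (z : Ed (d + 1)) : Ed (d + 1) := ‖Amap w z‖⁻¹ • Amap w z

lemma snocE_one_ne_zero (w : Ed d) : snocE w 1 ≠ 0 := by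
  intro h
  have h1 : snocE w 1 (Fin.last d) = (0 : Ed (d + 1)) (Fin.last d) := by rw [h]
  rw [snocE_apply_last] at h1
  simp at h1

lemma snocE_zero_eq (w : Ed d) : snocE w 0 = snocE w 1 - ud d := by
  rw [← snocE_add_ud w]; abel

lemma perpProj_snocE_zero (w : Ed d) :
    perpProj (snocE w 1) (snocE w 0) = -perpProj (snocE w 1) (ud d) := by
  rw [snocE_zero_eq, perpProj_sub, perpProj_self (snocE_one_ne_zero w), zero_sub]

lemma PF_eq_g (w : Ed d) {y : Ed (d + 1)} (hy : y (Fin.last d) ≠ 0)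
    (hyx : y ≠ snocE w 0) :
    perpProj (snocE w 1) (Fmap y) = gmap w (radProj (snocE w 0) y) := by
  set x := snocE w 0 with hxdef
  have hr : ‖y - x‖ ≠ 0 := norm_ne_zero_iff.mpr (sub_ne_zero.mpr hyx)
  have hlast : (radProj x y) (Fin.last d) = ‖y - x‖⁻¹ * y (Fin.last d) := by
    simp [radProj, PiLp.smul_apply, PiLp.sub_apply, hxdef, snocE_apply_last]
  have hz : ((radProj x y) (Fin.last d))⁻¹ • radProj x y
      = (y (Fin.last d))⁻¹ • (y - x) := by
    rw [hlast, radProj, smul_smul]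
    congr 1
    field_simp
  rw [gmap, hz, perpProj_smul, perpProj_sub, hxdef, perpProj_snocE_zero,
    Fmap_eq hy, perpProj_add, perpProj_smul, perpProj_smul]
  module

lemma Amap_gmap (w : Ed d) {e : Ed (d + 1)} (he : e (Fin.last d) ≠ 0) :
    Amap w (gmap w e) = (e (Fin.last d))⁻¹ • e := by
  set v := snocE w 1 with hv
  set z := (e (Fin.last d))⁻¹ • e with hz
  have h1 : gmap w e + perpProj v (ud d) = perpProj v z := by rw [gmap]; abel
  have hzl : z (Fin.last d) = 1 := by
    rw [hz, PiLp.smul_apply, smul_eq_mul, inv_mul_cancel₀ he]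
  have h2 : (perpProj v z) (Fin.last d) = 1 - (‖v‖ ^ 2)⁻¹ * ⟪z, v⟫ := by
    rw [hv, perpProj_apply_last, ← hv, hzl]
  rw [Amap, h1, h2, perpProj]
  module

lemma hmap_gmap (w : Ed d) {e : Ed (d + 1)} (he1 : ‖e‖ = 1) (he : e (Fin.last d) ≠ 0) :
    hmap w (gmap w e) = (|e (Fin.last d)| * (e (Fin.last d))⁻¹) • e := by
  rw [hmap, Amap_gmap w he, norm_smul, Real.norm_eq_abs, he1, mul_one, abs_inv,
    inv_inv, smul_smul]

end Aux3
section Aux4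

variable {d : ℕ}

lemma Amap_apply_last (w : Ed d) (z : Ed (d + 1)) : Amap w z (Fin.last d) = 1 := by
  simp [Amap, PiLp.add_apply, PiLp.smul_apply, snocE_apply_last]

lemma one_le_norm_Amap (w : Ed d) (z : Ed (d + 1)) : 1 ≤ ‖Amap w z‖ := by
  have h := coord_abs_le_norm (Amap w z) (Fin.last d)
  rwa [Amap_apply_last, abs_one] at h

lemma Amap_lip (w : Ed d) (a b : Ed (d + 1)) :
    ‖Amap w a - Amap w b‖ ≤ (1 + ‖snocE w 1‖) * ‖a - b‖ := by
  have hab : (a + perpProj (snocE w 1) (ud d)) (Fin.last d)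
      - (b + perpProj (snocE w 1) (ud d)) (Fin.last d) = (a - b) (Fin.last d) := by
    simp [PiLp.add_apply, PiLp.sub_apply]
  have key : Amap w a - Amap w b = (a - b) - ((a - b) (Fin.last d)) • snocE w 1 := by
    rw [Amap, Amap, ← hab]
    module
  rw [key]
  have h1 : ‖(a - b) - ((a - b) (Fin.last d)) • snocE w 1‖
      ≤ ‖a - b‖ + |(a - b) (Fin.last d)| * ‖snocE w 1‖ := by
    refine (norm_sub_le _ _).trans ?_
    rw [norm_smul, Real.norm_eq_abs]
  have h2 : |(a - b) (Fin.last d)| ≤ ‖a - b‖ := coord_abs_le_norm _ _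
  have h3 : (0:ℝ) ≤ ‖snocE w 1‖ := norm_nonneg _
  nlinarith

lemma normalize_lip {a b : Ed (d + 1)} (ha : 1 ≤ ‖a‖) (hb : 1 ≤ ‖b‖) :
    ‖‖a‖⁻¹ • a - ‖b‖⁻¹ • b‖ ≤ 2 * ‖a - b‖ := by
  have ha0 : (0:ℝ) < ‖a‖ := lt_of_lt_of_le one_pos ha
  have hb0 : (0:ℝ) < ‖b‖ := lt_of_lt_of_le one_pos hb
  have key : ‖a‖⁻¹ • a - ‖b‖⁻¹ • b = ‖a‖⁻¹ • (a - b) + (‖a‖⁻¹ - ‖b‖⁻¹) • b := by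
    module
  have h1 : ‖‖a‖⁻¹ • a - ‖b‖⁻¹ • b‖
      ≤ ‖a‖⁻¹ * ‖a - b‖ + |‖a‖⁻¹ - ‖b‖⁻¹| * ‖b‖ := by
    rw [key]
    refine (norm_add_le _ _).trans ?_
    rw [norm_smul, norm_smul, Real.norm_eq_abs, Real.norm_eq_abs,
      abs_of_pos (inv_pos.mpr ha0)]
  have h2 : |‖a‖⁻¹ - ‖b‖⁻¹| * ‖b‖ ≤ ‖a - b‖ := by
    have e1 : ‖a‖⁻¹ - ‖b‖⁻¹ = (‖b‖ - ‖a‖) * (‖a‖⁻¹ * ‖b‖⁻¹) := by field_simp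
    rw [e1, abs_mul, abs_of_pos (by positivity : (0:ℝ) < ‖a‖⁻¹ * ‖b‖⁻¹)]
    have e2 : |‖b‖ - ‖a‖| ≤ ‖a - b‖ := by
      rw [norm_sub_rev]; exact abs_norm_sub_norm_le b a
    have e3 : ‖a‖⁻¹ * ‖b‖⁻¹ * ‖b‖ ≤ 1 := by
      rw [mul_assoc, inv_mul_cancel₀ hb0.ne', mul_one]
      exact inv_le_one_of_one_le₀ ha
    calc |‖b‖ - ‖a‖| * (‖a‖⁻¹ * ‖b‖⁻¹) * ‖b‖
        = |‖b‖ - ‖a‖| * (‖a‖⁻¹ * ‖b‖⁻¹ * ‖b‖) := by ring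
      _ ≤ ‖a - b‖ * 1 := mul_le_mul e2 e3 (by positivity) (norm_nonneg _)
      _ = ‖a - b‖ := mul_one _
  have h3 : ‖a‖⁻¹ * ‖a - b‖ ≤ ‖a - b‖ := by
    have : ‖a‖⁻¹ ≤ 1 := inv_le_one_of_one_le₀ ha
    nlinarith [norm_nonneg (a - b)]
  linarith

lemma hmap_lip (w : Ed d) (a b : Ed (d + 1)) :
    ‖hmap w a - hmap w b‖ ≤ (2 * (1 + ‖snocE w 1‖)) * ‖a - b‖ := by
  calc ‖hmap w a - hmap w b‖ ≤ 2 * ‖Amap w a - Amap w b‖ :=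
        normalize_lip (one_le_norm_Amap w a) (one_le_norm_Amap w b)
    _ ≤ 2 * ((1 + ‖snocE w 1‖) * ‖a - b‖) := by
        have := Amap_lip w a b; linarith
    _ = (2 * (1 + ‖snocE w 1‖)) * ‖a - b‖ := by ring

lemma gmap_lip (w : Ed d) {δ : ℝ} (hδ : 0 < δ) {a b : Ed (d + 1)}
    (ha1 : ‖a‖ = 1) (hb1 : ‖b‖ = 1)
    (hda : δ ≤ |a (Fin.last d)|) (hdb : δ ≤ |b (Fin.last d)|) :
    ‖gmap w a - gmap w b‖ ≤ (2 * (δ⁻¹ + δ⁻¹ * δ⁻¹)) * ‖a - b‖ := by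
  have hal : a (Fin.last d) ≠ 0 := by
    intro h; rw [h, abs_zero] at hda; linarith
  have hbl : b (Fin.last d) ≠ 0 := by
    intro h; rw [h, abs_zero] at hdb; linarith
  set za := (a (Fin.last d))⁻¹ • a with hza
  set zb := (b (Fin.last d))⁻¹ • b with hzb
  have hg : gmap w a - gmap w b = perpProj (snocE w 1) za - perpProj (snocE w 1) zb := by
    rw [gmap, gmap]; abel
  have key : za - zb = (a (Fin.last d))⁻¹ • (a - b)
      + ((a (Fin.last d))⁻¹ - (b (Fin.last d))⁻¹) • b := by
    rw [hza, hzb]; module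
  have hzab : ‖za - zb‖ ≤ (δ⁻¹ + δ⁻¹ * δ⁻¹) * ‖a - b‖ := by
    rw [key]
    have t1 : ‖(a (Fin.last d))⁻¹ • (a - b)‖ ≤ δ⁻¹ * ‖a - b‖ := by
      rw [norm_smul, Real.norm_eq_abs, abs_inv]
      gcongr
    have t2 : ‖((a (Fin.last d))⁻¹ - (b (Fin.last d))⁻¹) • b‖ ≤ δ⁻¹ * δ⁻¹ * ‖a - b‖ := by
      rw [norm_smul, Real.norm_eq_abs, hb1, mul_one]
      have e1 : (a (Fin.last d))⁻¹ - (b (Fin.last d))⁻¹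
          = (b (Fin.last d) - a (Fin.last d)) * ((a (Fin.last d))⁻¹ * (b (Fin.last d))⁻¹) := by
        field_simp
      rw [e1, abs_mul, abs_mul, abs_inv, abs_inv]
      have e2 : |b (Fin.last d) - a (Fin.last d)| ≤ ‖a - b‖ := by
        have := coord_abs_le_norm (a - b) (Fin.last d)
        rw [PiLp.sub_apply] at this
        rw [abs_sub_comm]
        exact this
      have e3 : |a (Fin.last d)|⁻¹ ≤ δ⁻¹ := by gcongr
      have e4 : |b (Fin.last d)|⁻¹ ≤ δ⁻¹ := by gcongr
      calc |b (Fin.last d) - a (Fin.last d)| * (|a (Fin.last d)|⁻¹ * |b (Fin.last d)|⁻¹)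
          ≤ ‖a - b‖ * (δ⁻¹ * δ⁻¹) := by
            refine mul_le_mul e2 (mul_le_mul e3 e4 (by positivity) (by positivity))
              (by positivity) (norm_nonneg _)
        _ = δ⁻¹ * δ⁻¹ * ‖a - b‖ := by ring
    calc ‖(a (Fin.last d))⁻¹ • (a - b) + ((a (Fin.last d))⁻¹ - (b (Fin.last d))⁻¹) • b‖
        ≤ ‖(a (Fin.last d))⁻¹ • (a - b)‖ + ‖((a (Fin.last d))⁻¹ - (b (Fin.last d))⁻¹) • b‖ :=
          norm_add_le _ _
      _ ≤ δ⁻¹ * ‖a - b‖ + δ⁻¹ * δ⁻¹ * ‖a - b‖ := add_le_add t1 t2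
      _ = (δ⁻¹ + δ⁻¹ * δ⁻¹) * ‖a - b‖ := by ring
  calc ‖gmap w a - gmap w b‖ = ‖perpProj (snocE w 1) za - perpProj (snocE w 1) zb‖ := by
        rw [hg]
    _ ≤ 2 * ‖za - zb‖ := perpProj_lip _ _ _
    _ ≤ 2 * ((δ⁻¹ + δ⁻¹ * δ⁻¹) * ‖a - b‖) := by
        have := hzab; linarith
    _ = (2 * (δ⁻¹ + δ⁻¹ * δ⁻¹)) * ‖a - b‖ := by ring

end Aux4
section Aux5

lemma key_dim {d : ℕ} (w : Ed d) (K : Set (Ed (d + 1))) (hc : IsCompact K)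
    (hK : K ⊆ (Wset d)ᶜ) (ε : ℝ) (hε : ε = 1 ∨ ε = -1)
    (hsgn : ∀ y ∈ K, 0 ≤ ε * y (Fin.last d)) :
    dimH (radProj (snocE w 0) '' K)
      = dimH ((fun y => perpProj (snocE w 1) (Fmap y)) '' K) := by
  rcases Set.eq_empty_or_nonempty K with rfl | hne
  · simp
  set x := snocE w 0 with hxdef
  have hxW : x (Fin.last d) = 0 := snocE_apply_last w 0
  have hyprop : ∀ y ∈ K, y (Fin.last d) ≠ 0 := fun y hy h => hK hy h
  have hyx : ∀ y ∈ K, y ≠ x := by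
    intro y hy h; exact hyprop y hy (h ▸ hxW)
  have hr : ∀ y ∈ K, ‖y - x‖ ≠ 0 :=
    fun y hy => norm_ne_zero_iff.mpr (sub_ne_zero.mpr (hyx y hy))
  set φ : Ed (d + 1) → ℝ := fun y => |y (Fin.last d)| / ‖y - x‖ with hφ
  have hφcont : ContinuousOn φ K := by
    apply ContinuousOn.div
    · exact (continuous_abs.comp
        (EuclideanSpace.proj (Fin.last d) : Ed (d + 1) →L[ℝ] ℝ).continuous).continuousOn
    · exact ((continuous_id.sub continuous_const).norm).continuousOn
    · exact fun y hy => hr y hy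
  obtain ⟨y₀, hy₀, hmin⟩ := hc.exists_isMinOn hne hφcont
  set δ := φ y₀ with hδdef
  have hδ : 0 < δ := by
    rw [hδdef, hφ]
    exact div_pos (abs_pos.mpr (hyprop y₀ hy₀))
      (lt_of_le_of_ne (norm_nonneg _) (Ne.symm (hr y₀ hy₀)))
  set S := radProj x '' K with hS
  have hSnorm : ∀ e ∈ S, ‖e‖ = 1 := by
    rintro e ⟨y, hy, rfl⟩
    rw [radProj, norm_smul, Real.norm_eq_abs, abs_inv, abs_norm,
      inv_mul_cancel₀ (hr y hy)]
  have hSlast : ∀ y ∈ K, (radProj x y) (Fin.last d) = ‖y - x‖⁻¹ * y (Fin.last d) := by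
    intro y hy
    simp [radProj, PiLp.smul_apply, PiLp.sub_apply, hxdef, snocE_apply_last]
  have hSδ : ∀ e ∈ S, δ ≤ |e (Fin.last d)| := by
    rintro e ⟨y, hy, rfl⟩
    rw [hSlast y hy, abs_mul, abs_inv, abs_norm]
    calc δ ≤ φ y := (isMinOn_iff.mp hmin) y hy
      _ = ‖y - x‖⁻¹ * |y (Fin.last d)| := by simp [hφ, div_eq_inv_mul]
  have hhg : ∀ e ∈ S, hmap w (gmap w e) = ε • e := by
    rintro e heS
    have he1 : ‖e‖ = 1 := hSnorm e heS
    have hel : e (Fin.last d) ≠ 0 := by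
      intro h
      have h2 := hSδ e heS
      rw [h, abs_zero] at h2
      linarith
    have hsgn' : 0 ≤ ε * e (Fin.last d) := by
      obtain ⟨y, hy, rfl⟩ := heS
      rw [hSlast y hy, ← mul_assoc, mul_comm ε, mul_assoc]
      exact mul_nonneg (inv_nonneg.mpr (norm_nonneg _)) (hsgn y hy)
    rw [hmap_gmap w he1 hel]
    congr 1
    rcases hε with rfl | rfl
    · have hpos : 0 < e (Fin.last d) :=
        lt_of_le_of_ne (by simpa using hsgn') (Ne.symm hel)
      rw [abs_of_pos hpos, mul_inv_cancel₀ hel]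
    · have hneg : e (Fin.last d) < 0 := by
        have h0 : e (Fin.last d) ≤ 0 := by nlinarith
        exact lt_of_le_of_ne h0 hel
      rw [abs_of_neg hneg, neg_mul, mul_inv_cancel₀ hel]
  have himg : (fun y => perpProj (snocE w 1) (Fmap y)) '' K = gmap w '' S := by
    rw [hS, Set.image_image]
    exact Set.image_congr fun y hy => PF_eq_g w (hyprop y hy) (hyx y hy)
  have hCg : (0:ℝ) ≤ 2 * (δ⁻¹ + δ⁻¹ * δ⁻¹) := by positivity
  have lip_g : LipschitzOnWith (2 * (δ⁻¹ + δ⁻¹ * δ⁻¹)).toNNReal (gmap w) S := by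
    rw [lipschitzOnWith_iff_dist_le_mul]
    intro p hp q hq
    rw [dist_eq_norm, dist_eq_norm, Real.coe_toNNReal _ hCg]
    exact gmap_lip w hδ (hSnorm p hp) (hSnorm q hq) (hSδ p hp) (hSδ q hq)
  have le1 : dimH (gmap w '' S) ≤ dimH S := lip_g.dimH_image_le
  have lip_h : LipschitzWith (2 * (1 + ‖snocE w 1‖)).toNNReal
      (fun z => ε • hmap w z) := by
    rw [lipschitzWith_iff_dist_le_mul]
    intro p q
    rw [dist_eq_norm, dist_eq_norm, Real.coe_toNNReal _ (by positivity)]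
    have habs : ‖ε • hmap w p - ε • hmap w q‖ = ‖hmap w p - hmap w q‖ := by
      rw [← smul_sub, norm_smul, Real.norm_eq_abs]
      rcases hε with rfl | rfl <;> norm_num
    rw [habs]
    exact hmap_lip w p q
  have hsub : S ⊆ (fun z => ε • hmap w z) '' (gmap w '' S) := by
    intro e he
    refine ⟨gmap w e, Set.mem_image_of_mem _ he, ?_⟩
    show ε • hmap w (gmap w e) = e
    rw [hhg e he, smul_smul]
    rcases hε with rfl | rfl <;> norm_num
  have le2 : dimH S ≤ dimH (gmap w '' S) :=
    (dimH_mono hsub).trans (lip_h.dimH_image_le _)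
  rw [himg]
  exact le_antisymm le2 le1

end Aux5
/-- `F` maps every line through `(w,0)` not contained in `W` into a line parallel to `(w,1)`;
consequently, for compact `K ⊆ ℝ^{d+1} \ W`,
`dim_H π_{(w,0)}(K) = dim_H P_{V(w)}(F(K))` with `V(w) = (w,1)^⊥`. -/
theorem projective_transform_radial_to_orthogonal (d : ℕ) (hd : 1 ≤ d) :
    (∀ (w : Ed d) (ℓ : Set (Ed (d + 1))), IsAffineLine ℓ →
        snocE w 0 ∈ ℓ → ¬ ℓ ⊆ Wset d →
        ∃ a : Ed (d + 1),
          Fmap '' (ℓ \ Wset d) ⊆ {p | ∃ t : ℝ, p = a + t • snocE w 1}) ∧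
    (∀ (w : Ed d) (K : Set (Ed (d + 1))), IsCompact K → K ⊆ (Wset d)ᶜ →
        dimH (radProj (snocE w 0) '' K) =
        dimH (perpProj (snocE w 1) '' (Fmap '' K))) := by
  constructor
  · -- Part 1
    rintro w ℓ ⟨a₀, v₀, hv₀, rfl⟩ hx hnW
    obtain ⟨t₀, ht₀⟩ := hx
    have h0 : (0:ℝ) = a₀ (Fin.last d) + t₀ * v₀ (Fin.last d) := by
      have h := congrArg (fun z : Ed (d + 1) => z (Fin.last d)) ht₀
      simpa [snocE_apply_last, PiLp.add_apply, PiLp.smul_apply] using h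
    have hm : v₀ (Fin.last d) ≠ 0 := by
      intro hm
      apply hnW
      rintro p ⟨t, rfl⟩
      show (a₀ + t • v₀) (Fin.last d) = 0
      rw [hm] at h0
      simp [PiLp.add_apply, PiLp.smul_apply, hm]
      linarith
    have ha₀ : a₀ = snocE w 0 - t₀ • v₀ := eq_sub_of_add_eq ht₀.symm
    subst ha₀
    refine ⟨(v₀ (Fin.last d))⁻¹ • v₀ - ud d, ?_⟩
    rintro p ⟨y, ⟨⟨t, rfl⟩, hyW⟩, rfl⟩
    have hyl : (snocE w 0 - t₀ • v₀ + t • v₀) (Fin.last d)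
        = (t - t₀) * v₀ (Fin.last d) := by
      simp [PiLp.add_apply, PiLp.sub_apply, PiLp.smul_apply, snocE_apply_last]
      ring
    have hy0 : (snocE w 0 - t₀ • v₀ + t • v₀) (Fin.last d) ≠ 0 := fun h => hyW h
    have hy0' : (t - t₀) * v₀ (Fin.last d) ≠ 0 := hyl ▸ hy0
    have hs : t - t₀ ≠ 0 := (mul_ne_zero_iff.mp hy0').1
    refine ⟨((t - t₀) * v₀ (Fin.last d))⁻¹, ?_⟩
    rw [Fmap_eq hy0, hyl, ← snocE_add_ud w]
    match_scalars
    all_goals field_simp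
    all_goals (first | (left; ring) | ring)
  · -- Part 2
    intro w K hc hK
    have hpcont : Continuous fun y : Ed (d + 1) => y (Fin.last d) :=
      (EuclideanSpace.proj (Fin.last d) : Ed (d + 1) →L[ℝ] ℝ).continuous
    set Kp := K ∩ {y | 0 ≤ y (Fin.last d)} with hKp
    set Km := K ∩ {y | y (Fin.last d) ≤ 0} with hKm
    have hcp : IsCompact Kp := hc.inter_right (isClosed_le continuous_const hpcont)
    have hcm : IsCompact Km := hc.inter_right (isClosed_le hpcont continuous_const)
    have hKun : K = Kp ∪ Km := by
      ext y
      constructor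
      · intro hy
        rcases le_total 0 (y (Fin.last d)) with h | h
        · exact Or.inl ⟨hy, h⟩
        · exact Or.inr ⟨hy, h⟩
      · rintro (⟨hy, -⟩ | ⟨hy, -⟩) <;> exact hy
    have e1 := key_dim w Kp hcp (fun y hy => hK hy.1) 1 (Or.inl rfl)
      (fun y hy => by simpa using hy.2)
    have e2 := key_dim w Km hcm (fun y hy => hK hy.1) (-1) (Or.inr rfl)
      (fun y hy => by rw [neg_one_mul]; exact neg_nonneg.mpr hy.2)
    rw [show perpProj (snocE w 1) '' (Fmap '' K)
        = (fun y => perpProj (snocE w 1) (Fmap y)) '' K from Set.image_image _ _ _]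
    rw [hKun, Set.image_union, Set.image_union, dimH_union, dimH_union, e1, e2]
end
end

section
/- Let T' be a finite family of r-tubes in B² such that any two points y₁, y₂ ∈ B² lie in at most C|y₁−y₂|^{-1} tubes of T'. Suppose ν is a Borel probability measure on ℝ² and for each T ∈ T' there are sets Y_{T,1}, Y_{T,2} ⊆ T with dist(Y_{T,1}, Y_{T,2}) ≥ r^κ and ν(Y_{T,j}) ≥ r^{σ+4η} for j = 1,2. Then |T'| ≤ C' r^{−2σ−8η−κ} for a constant C' depending only on C. -/
open Metric MeasureTheory Set
open scoped ENNReal NNReal RealInnerProductSpace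

noncomputable section

/-- The "two-ends / non-concentrated" counting bound: if every tube of a family with the
standard overlap property carries two `r^κ`-separated sets of `ν`-measure `≥ r^{σ+4η}`, then
the family has at most `C' r^{−2σ−8η−κ}` tubes. -/
theorem non_concentrated_tube_count (C : ℝ) (hC : 0 < C) :
    ∃ C' : ℝ, 0 < C' ∧
      ∀ (σ η κ r : ℝ), 0 < σ → 0 < η → 0 < κ → 0 < r → r < 1 →
      ∀ (ν : Measure E2), IsProbabilityMeasure ν →
      ∀ (𝓛 : Set (Set E2)), 𝓛.Finite →
        (∀ ℓ ∈ 𝓛, IsAffineLine ℓ) →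
        (∀ y₁ y₂ : E2, y₁ ∈ closedBall (0 : E2) 1 → y₂ ∈ closedBall (0 : E2) 1 → y₁ ≠ y₂ →
          (({ℓ ∈ 𝓛 | y₁ ∈ cthickening r ℓ ∧ y₂ ∈ cthickening r ℓ}).ncard : ℝ) ≤
            C * (dist y₁ y₂)⁻¹) →
        (∀ ℓ ∈ 𝓛, ∃ Y₁ Y₂ : Set E2,
          Y₁ ⊆ cthickening r ℓ ∩ closedBall (0 : E2) 1 ∧
          Y₂ ⊆ cthickening r ℓ ∩ closedBall (0 : E2) 1 ∧
          (∀ y₁ ∈ Y₁, ∀ y₂ ∈ Y₂, r ^ κ ≤ dist y₁ y₂) ∧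
          ENNReal.ofReal (r ^ (σ + 4 * η)) ≤ ν Y₁ ∧
          ENNReal.ofReal (r ^ (σ + 4 * η)) ≤ ν Y₂) →
        (𝓛.ncard : ℝ) ≤ C' * r ^ (-(2 * σ) - 8 * η - κ) := by
  classical
  refine ⟨3 * C, by positivity, ?_⟩
  intro σ η κ r hσ hη hκ hr hr1 ν hν 𝓛 hfin hlines hover hsep
  have hrκ : (0 : ℝ) < r ^ κ := Real.rpow_pos_of_pos hr κ
  have hrm : (0 : ℝ) < r ^ (σ + 4 * η) := Real.rpow_pos_of_pos hr _
  set δ : ℝ := r ^ κ / 3 with hδdef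
  have hδpos : (0 : ℝ) < δ := by positivity
  -- choose the sets
  have hsep' : ∀ ℓ : Set E2, ∃ Y₁ Y₂ : Set E2, ℓ ∈ 𝓛 →
      (Y₁ ⊆ cthickening r ℓ ∩ closedBall (0 : E2) 1 ∧
       Y₂ ⊆ cthickening r ℓ ∩ closedBall (0 : E2) 1 ∧
       (∀ y₁ ∈ Y₁, ∀ y₂ ∈ Y₂, r ^ κ ≤ dist y₁ y₂) ∧
       ENNReal.ofReal (r ^ (σ + 4 * η)) ≤ ν Y₁ ∧
       ENNReal.ofReal (r ^ (σ + 4 * η)) ≤ ν Y₂) := by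
    intro ℓ
    by_cases h : ℓ ∈ 𝓛
    · obtain ⟨Y₁, Y₂, hh⟩ := hsep ℓ h
      exact ⟨Y₁, Y₂, fun _ => hh⟩
    · exact ⟨∅, ∅, fun h' => absurd h' h⟩
  choose Y₁ Y₂ hY using hsep'
  -- measurable hulls keeping geometry and separation
  set A : Set E2 → Set E2 := fun ℓ =>
    toMeasurable ν (Y₁ ℓ) ∩ cthickening r ℓ ∩ closedBall (0 : E2) 1 ∩ thickening δ (Y₁ ℓ)
    with hAdef
  set B : Set E2 → Set E2 := fun ℓ =>
    toMeasurable ν (Y₂ ℓ) ∩ cthickening r ℓ ∩ closedBall (0 : E2) 1 ∩ thickening δ (Y₂ ℓ)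
    with hBdef
  have measA : ∀ ℓ, MeasurableSet (A ℓ) := fun ℓ =>
    (((measurableSet_toMeasurable ν _).inter (isClosed_cthickening.measurableSet)).inter
      measurableSet_closedBall).inter isOpen_thickening.measurableSet
  have measB : ∀ ℓ, MeasurableSet (B ℓ) := fun ℓ =>
    (((measurableSet_toMeasurable ν _).inter (isClosed_cthickening.measurableSet)).inter
      measurableSet_closedBall).inter isOpen_thickening.measurableSet
  have hYA : ∀ ℓ ∈ 𝓛, Y₁ ℓ ⊆ A ℓ := by
    intro ℓ hℓ y hy
    obtain ⟨h1, _, _, _, _⟩ := hY ℓ hℓ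
    exact ⟨⟨⟨subset_toMeasurable ν _ hy, (h1 hy).1⟩, (h1 hy).2⟩,
      self_subset_thickening hδpos _ hy⟩
  have hYB : ∀ ℓ ∈ 𝓛, Y₂ ℓ ⊆ B ℓ := by
    intro ℓ hℓ y hy
    obtain ⟨_, h2, _, _, _⟩ := hY ℓ hℓ
    exact ⟨⟨⟨subset_toMeasurable ν _ hy, (h2 hy).1⟩, (h2 hy).2⟩,
      self_subset_thickening hδpos _ hy⟩
  have hνA : ∀ ℓ ∈ 𝓛, ENNReal.ofReal (r ^ (σ + 4 * η)) ≤ ν (A ℓ) := fun ℓ hℓ =>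
    le_trans (hY ℓ hℓ).2.2.2.1 (measure_mono (hYA ℓ hℓ))
  have hνB : ∀ ℓ ∈ 𝓛, ENNReal.ofReal (r ^ (σ + 4 * η)) ≤ ν (B ℓ) := fun ℓ hℓ =>
    le_trans (hY ℓ hℓ).2.2.2.2 (measure_mono (hYB ℓ hℓ))
  -- separation of the hulls
  have hsepAB : ∀ ℓ ∈ 𝓛, ∀ y₁ ∈ A ℓ, ∀ y₂ ∈ B ℓ, δ ≤ dist y₁ y₂ := by
    intro ℓ hℓ y₁ hy₁ y₂ hy₂
    obtain ⟨z₁, hz₁, hd₁⟩ := mem_thickening_iff.mp hy₁.2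
    obtain ⟨z₂, hz₂, hd₂⟩ := mem_thickening_iff.mp hy₂.2
    have hzz : r ^ κ ≤ dist z₁ z₂ := (hY ℓ hℓ).2.2.1 z₁ hz₁ z₂ hz₂
    have htri : dist z₁ z₂ ≤ dist z₁ y₁ + dist y₁ y₂ + dist y₂ z₂ :=
      dist_triangle4 z₁ y₁ y₂ z₂
    rw [dist_comm z₁ y₁] at htri
    have : r ^ κ ≤ δ + dist y₁ y₂ + δ := by
      calc r ^ κ ≤ dist z₁ z₂ := hzz
        _ ≤ dist y₁ z₁ + dist y₁ y₂ + dist y₂ z₂ := htri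
        _ ≤ δ + dist y₁ y₂ + δ := by
            gcongr
    rw [hδdef] at this ⊢
    linarith
  set s : Finset (Set E2) := hfin.toFinset with hsdef
  have hscoe : (s : Set (Set E2)) = 𝓛 := hfin.coe_toFinset
  have hmems : ∀ ℓ, ℓ ∈ s ↔ ℓ ∈ 𝓛 := fun ℓ => hfin.mem_toFinset
  -- multiplicity bound
  have hmul : ∀ p : E2 × E2,
      ((s.filter (fun ℓ => p ∈ (A ℓ) ×ˢ (B ℓ))).card : ℝ≥0∞) ≤
        ENNReal.ofReal (3 * C * r ^ (-κ)) := by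
    intro p
    rcases Finset.eq_empty_or_nonempty (s.filter (fun ℓ => p ∈ (A ℓ) ×ˢ (B ℓ))) with he | hne
    · rw [he]; simp
    · obtain ⟨ℓ₀, hℓ₀⟩ := hne
      rw [Finset.mem_filter] at hℓ₀
      obtain ⟨hℓ₀s, hp₁, hp₂⟩ := hℓ₀
      have hℓ₀L : ℓ₀ ∈ 𝓛 := (hmems ℓ₀).mp hℓ₀s
      have hball₁ : p.1 ∈ closedBall (0 : E2) 1 := hp₁.1.2
      have hball₂ : p.2 ∈ closedBall (0 : E2) 1 := hp₂.1.2
      have hdist : δ ≤ dist p.1 p.2 := hsepAB ℓ₀ hℓ₀L p.1 hp₁ p.2 hp₂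
      have hdpos : (0 : ℝ) < dist p.1 p.2 := lt_of_lt_of_le hδpos hdist
      have hne' : p.1 ≠ p.2 := by
        intro h
        rw [h, dist_self] at hdpos
        exact lt_irrefl _ hdpos
      have hcount := hover p.1 p.2 hball₁ hball₂ hne'
      -- the filter is a subset of the overlap set
      have hsubset : (s.filter (fun ℓ => p ∈ (A ℓ) ×ˢ (B ℓ))).card ≤
          ({ℓ ∈ 𝓛 | p.1 ∈ cthickening r ℓ ∧ p.2 ∈ cthickening r ℓ}).ncard := by
        have : ((s.filter (fun ℓ => p ∈ (A ℓ) ×ˢ (B ℓ))) : Set (Set E2)) ⊆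
            {ℓ ∈ 𝓛 | p.1 ∈ cthickening r ℓ ∧ p.2 ∈ cthickening r ℓ} := by
          intro ℓ hℓ
          simp only [Finset.coe_filter, Set.mem_setOf_eq] at hℓ
          exact ⟨(hmems ℓ).mp hℓ.1, hℓ.2.1.1.1.2, hℓ.2.2.1.1.2⟩
        have hfin' : ({ℓ ∈ 𝓛 | p.1 ∈ cthickening r ℓ ∧ p.2 ∈ cthickening r ℓ}).Finite :=
          hfin.subset (fun ℓ hℓ => hℓ.1)
        calc (s.filter (fun ℓ => p ∈ (A ℓ) ×ˢ (B ℓ))).card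
            = ((s.filter (fun ℓ => p ∈ (A ℓ) ×ˢ (B ℓ))) : Set (Set E2)).ncard :=
              (Set.ncard_coe_finset _).symm
          _ ≤ _ := Set.ncard_le_ncard this hfin'
      have hreal : ((s.filter (fun ℓ => p ∈ (A ℓ) ×ˢ (B ℓ))).card : ℝ) ≤
          3 * C * r ^ (-κ) := by
        calc ((s.filter (fun ℓ => p ∈ (A ℓ) ×ˢ (B ℓ))).card : ℝ)
            ≤ (({ℓ ∈ 𝓛 | p.1 ∈ cthickening r ℓ ∧ p.2 ∈ cthickening r ℓ}).ncard : ℝ) := by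
              exact_mod_cast hsubset
          _ ≤ C * (dist p.1 p.2)⁻¹ := hcount
          _ ≤ C * δ⁻¹ := by
              gcongr
          _ = 3 * C * r ^ (-κ) := by
              rw [Real.rpow_neg hr.le, hδdef]
              field_simp
      calc ((s.filter (fun ℓ => p ∈ (A ℓ) ×ˢ (B ℓ))).card : ℝ≥0∞)
          = ENNReal.ofReal ((s.filter (fun ℓ => p ∈ (A ℓ) ×ˢ (B ℓ))).card : ℝ) := by
            rw [ENNReal.ofReal_natCast]
        _ ≤ ENNReal.ofReal (3 * C * r ^ (-κ)) := ENNReal.ofReal_le_ofReal hreal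
  -- main counting estimate
  haveI : IsProbabilityMeasure (ν.prod ν) := by infer_instance
  set a : ℝ≥0∞ := ENNReal.ofReal (r ^ (σ + 4 * η)) with hadef
  have key : (s.card : ℝ≥0∞) * (a * a) ≤ ENNReal.ofReal (3 * C * r ^ (-κ)) := by
    calc (s.card : ℝ≥0∞) * (a * a) = ∑ ℓ ∈ s, a * a := by
          rw [Finset.sum_const, nsmul_eq_mul]
      _ ≤ ∑ ℓ ∈ s, (ν.prod ν) ((A ℓ) ×ˢ (B ℓ)) := by
          refine Finset.sum_le_sum fun ℓ hℓ => ?_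
          rw [Measure.prod_prod]
          exact mul_le_mul' (hνA ℓ ((hmems ℓ).mp hℓ)) (hνB ℓ ((hmems ℓ).mp hℓ))
      _ = ∑ ℓ ∈ s, ∫⁻ p, ((A ℓ) ×ˢ (B ℓ)).indicator 1 p ∂(ν.prod ν) := by
          refine Finset.sum_congr rfl fun ℓ _ => ?_
          rw [lintegral_indicator_one ((measA ℓ).prod (measB ℓ))]
      _ = ∫⁻ p, ∑ ℓ ∈ s, ((A ℓ) ×ˢ (B ℓ)).indicator 1 p ∂(ν.prod ν) := by
          rw [lintegral_finset_sum]
          intro ℓ _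
          exact measurable_const.indicator ((measA ℓ).prod (measB ℓ))
      _ ≤ ∫⁻ _, ENNReal.ofReal (3 * C * r ^ (-κ)) ∂(ν.prod ν) := by
          refine lintegral_mono fun p => ?_
          have : ∑ ℓ ∈ s, ((A ℓ) ×ˢ (B ℓ)).indicator 1 p =
              ((s.filter (fun ℓ => p ∈ (A ℓ) ×ˢ (B ℓ))).card : ℝ≥0∞) := by
            simp [Set.indicator_apply, Finset.sum_boole]
            convert (Finset.natCast_card_filter (R := ℝ≥0∞) _ _).symm
          rw [this]
          exact hmul p
      _ = ENNReal.ofReal (3 * C * r ^ (-κ)) := by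
          rw [lintegral_const, measure_univ, mul_one]
  -- convert to the real inequality
  have haa : a * a = ENNReal.ofReal (r ^ (2 * σ + 8 * η)) := by
    rw [hadef, ← ENNReal.ofReal_mul hrm.le, ← Real.rpow_add hr]
    ring_nf
  rw [haa] at key
  have hr2 : (0 : ℝ) < r ^ (2 * σ + 8 * η) := Real.rpow_pos_of_pos hr _
  have hdiv : (s.card : ℝ≥0∞) ≤
      ENNReal.ofReal (3 * C * r ^ (-κ)) / ENNReal.ofReal (r ^ (2 * σ + 8 * η)) := by
    rw [ENNReal.le_div_iff_mul_le (Or.inl (by simp [hr2])) (Or.inl ENNReal.ofReal_ne_top)]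
    exact key
  rw [← ENNReal.ofReal_div_of_pos hr2] at hdiv
  have hX : 3 * C * r ^ (-κ) / r ^ (2 * σ + 8 * η) = 3 * C * r ^ (-(2 * σ) - 8 * η - κ) := by
    rw [mul_div_assoc, ← Real.rpow_sub hr]
    ring_nf
  rw [hX] at hdiv
  have hXpos : (0:ℝ) < 3 * C * r ^ (-(2 * σ) - 8 * η - κ) :=
    mul_pos (by linarith) (Real.rpow_pos_of_pos hr _)
  have h1 : ENNReal.ofReal ((s.card : ℝ)) ≤
      ENNReal.ofReal (3 * C * r ^ (-(2 * σ) - 8 * η - κ)) := by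
    rw [ENNReal.ofReal_natCast]; exact hdiv
  have hfinal : ((s.card : ℕ) : ℝ) ≤ 3 * C * r ^ (-(2 * σ) - 8 * η - κ) :=
    (ENNReal.ofReal_le_ofReal_iff hXpos.le).mp h1
  rwa [Set.ncard_eq_toFinset_card 𝓛 hfin]
end
end

section
/- Let y ∈ ℝ², ξ ≥ r > 0, and let T'_y be a family of r-tubes all containing y, whose directions are (r/ξ)-separated, with |T'_y| ≥ N. Suppose ν is a Borel probability measure on ℝ² with ν(B(x,ρ)) ≤ Cρ^s for all x, ρ, and suppose ν(A(y,ξ,2ξ) ∩ T) ≥ m for all T ∈ T'_y, where A(y,ξ,2ξ) = {z : ξ ≤ |z−y| < 2ξ}. Then N·m ≲ C ξ^s, since the tubes have bounded overlap on ℝ² \ B(y,ξ). -/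
/-!
A point `z` with `|z - y| ≥ ξ` in the `r`-tube around the line through `y` with unit direction
`e` forces `e` to be `2r/ξ`-close to `±(z - y)/|z - y|`. As the directions are `r/ξ`-separated,
volume packing leaves at most `2 · 5²` such `e`, so every point of `B(y, 2ξ) \ B(y, ξ)` lies in
at most 50 of the tubes and `N m ≤ 50 ν(B(y, 2ξ))`. Finally `B(y, 2ξ)` is covered by `5²` balls
of radius `ξ`, each of mass at most `C ξ^s`.
-/

open Metric MeasureTheory Set
open scoped ENNReal NNReal RealInnerProductSpace

noncomputable section

open scoped Finset

theorem sum_measure_le_mul_measure_biUnion {α ι : Type*} [MeasurableSpace α] (μ : Measure α)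
    {F : Finset ι} {S : ι → Set α} [∀ x, DecidablePred (x ∈ S ·)]
    (hS : ∀ i ∈ F, MeasurableSet (S i)) {K : ℕ}
    (hK : ∀ x, #{i ∈ F | x ∈ S i} ≤ K) :
    ∑ i ∈ F, μ (S i) ≤ K * μ (⋃ i ∈ F, S i) := by
  set U := ⋃ i ∈ F, S i
  have hpoint : ∀ x, ∑ i ∈ F, (S i).indicator 1 x ≤ (K : ℝ≥0∞) * U.indicator 1 x := by
    intro x
    by_cases hx : x ∈ U
    · have hKx : (#{i ∈ F | x ∈ S i} : ℝ≥0∞) ≤ K := by exact_mod_cast hK x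
      simpa [Set.indicator_apply, hx] using hKx
    · have hxS : ∀ i ∈ F, x ∉ S i := fun i hi hxi => hx (Set.mem_biUnion hi hxi)
      simp [Set.indicator_of_notMem hx,
        Finset.sum_eq_zero fun i hi => Set.indicator_of_notMem (hxS i hi) _]
  calc ∑ i ∈ F, μ (S i) = ∑ i ∈ F, ∫⁻ x, (S i).indicator 1 x ∂μ :=
        Finset.sum_congr rfl fun i hi => (lintegral_indicator_one (hS i hi)).symm
    _ = ∫⁻ x, ∑ i ∈ F, (S i).indicator 1 x ∂μ :=
        (lintegral_finsetSum' _ fun i hi =>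
          (measurable_one.indicator (hS i hi)).aemeasurable).symm
    _ ≤ ∫⁻ x, K * U.indicator 1 x ∂μ := lintegral_mono hpoint
    _ = K * μ U := by
        rw [lintegral_const_mul' _ _ (ENNReal.natCast_ne_top K),
          lintegral_indicator_one (Finset.measurableSet_biUnion F hS)]

section NormedSpace

variable {E : Type*} [NormedAddCommGroup E] [NormedSpace ℝ E]

theorem norm_inv_norm_smul_sub_le {a e : E} (ha : a ≠ 0) (he : ‖e‖ = 1) {c : ℝ}
    (hc : 0 ≤ c) :
    ‖‖a‖⁻¹ • a - e‖ ≤ 2 * ‖a - c • e‖ / ‖a‖ := by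
  have hna : 0 < ‖a‖ := norm_pos_iff.2 ha
  have habs : |c - ‖a‖| ≤ ‖a - c • e‖ := by
    simpa [norm_smul, he, abs_of_nonneg hc, norm_sub_rev] using abs_norm_sub_norm_le (c • e) a
  rw [le_div_iff₀ hna, mul_comm]
  calc ‖a‖ * ‖‖a‖⁻¹ • a - e‖ = ‖(a - c • e) + (c - ‖a‖) • e‖ := by
        rw [← norm_norm a, ← norm_smul, norm_norm, smul_sub, smul_inv_smul₀ hna.ne', sub_smul]
        congr 1
        abel
    _ ≤ ‖a - c • e‖ + |c - ‖a‖| := by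
        simpa [norm_smul, he] using norm_add_le (a - c • e) ((c - ‖a‖) • e)
    _ ≤ 2 * ‖a - c • e‖ := by linarith

theorem isClosed_setOf_exists_eq_add_smul (y e : E) :
    IsClosed {p : E | ∃ t : ℝ, p = y + t • e} := by
  have hline : {p : E | ∃ t : ℝ, p = y + t • e} = (· - y) ⁻¹' (ℝ ∙ e) := by
    ext p
    simp [Submodule.mem_span_singleton, eq_sub_iff_add_eq, eq_comm, add_comm]
  rw [hline]
  exact (Submodule.closed_of_finiteDimensional _).preimage (by fun_prop)

def lineTube (y e : E) (r : ℝ) : Set E :=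
  cthickening r {p : E | ∃ t : ℝ, p = y + t • e}

theorem dist_radProj_le_or_dist_neg_le_of_mem_lineTube [ProperSpace E] {y z e : E} {r ξ : ℝ}
    (he : ‖e‖ = 1) (hr : 0 ≤ r) (hξ : 0 < ξ) (hz : ξ ≤ dist z y)
    (hzT : z ∈ lineTube y e r) :
    dist (radProj y z) e ≤ 2 * r / ξ ∨ dist (radProj y z) (-e) ≤ 2 * r / ξ := by
  rw [lineTube, (isClosed_setOf_exists_eq_add_smul y e).cthickening_eq_biUnion_closedBall hr]
    at hzT
  obtain ⟨_, ⟨t, rfl⟩, hzt⟩ := Set.mem_iUnion₂.1 hzT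
  have hzy : z - y ≠ 0 := sub_ne_zero.2 fun h => by simp [h] at hz; linarith
  have hbound : ∀ {c : ℝ} {e' : E}, ‖e'‖ = 1 → 0 ≤ c → c • e' = t • e →
      dist (radProj y z) e' ≤ 2 * r / ξ := by
    intro c e' he' hc hce
    calc dist (radProj y z) e' ≤ 2 * ‖(z - y) - c • e'‖ / ‖z - y‖ := by
          rw [dist_eq_norm]
          exact norm_inv_norm_smul_sub_le hzy he' hc
      _ ≤ 2 * r / ξ := by
          gcongr
          · rw [hce, sub_sub, ← dist_eq_norm]
            exact mem_closedBall.1 hzt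
          · rwa [← dist_eq_norm]
  rcases le_total 0 t with ht | ht
  · exact Or.inl (hbound he ht rfl)
  · exact Or.inr <|
      hbound (by rwa [norm_neg]) (neg_nonneg.2 ht) (by rw [smul_neg, neg_smul, neg_neg])

end NormedSpace

section FiniteDimensional

open Module

variable {E : Type*} [NormedAddCommGroup E] [NormedSpace ℝ E] [FiniteDimensional ℝ E]

theorem card_le_of_le_dist_of_subset_closedBall {δ : ℝ} (hδ : 0 < δ) (k : ℕ) (u : E)
    (G : Finset E) (hsep : ∀ a ∈ G, ∀ b ∈ G, a ≠ b → δ ≤ dist a b)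
    (hG : ∀ a ∈ G, a ∈ closedBall u (k * δ)) : #G ≤ (2 * k + 1) ^ finrank ℝ E := by
  borelize E
  set μ : Measure E := Measure.addHaar
  have hdisj : (G : Set E).PairwiseDisjoint fun a => ball a (δ / 2) := fun a ha b hb hab =>
    ball_disjoint_ball (by linarith [hsep a ha b hb hab])
  have hsub : ⋃ a ∈ G, ball a (δ / 2) ⊆ ball u ((2 * k + 1) * (δ / 2)) := by
    refine Set.iUnion₂_subset fun a ha x hx => ?_
    rw [mem_ball] at hx ⊢
    linarith [dist_triangle x a u, mem_closedBall.1 (hG a ha)]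
  have hB0 : μ (ball 0 (δ / 2)) ≠ 0 := (measure_ball_pos μ _ (by positivity)).ne'
  have hBtop : μ (ball 0 (δ / 2)) ≠ ⊤ := measure_ball_lt_top.ne
  have hvol : (#G : ℝ≥0∞) * μ (ball 0 (δ / 2)) ≤
      ((2 * k + 1) ^ finrank ℝ E : ℕ) * μ (ball 0 (δ / 2)) :=
    calc (#G : ℝ≥0∞) * μ (ball 0 (δ / 2)) = ∑ a ∈ G, μ (ball a (δ / 2)) := by
          simp [Measure.addHaar_ball_center]
      _ = μ (⋃ a ∈ G, ball a (δ / 2)) :=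
          (measure_biUnion_finset hdisj fun _ _ => measurableSet_ball).symm
      _ ≤ μ (ball u ((2 * k + 1) * (δ / 2))) := measure_mono hsub
      _ = ((2 * k + 1) ^ finrank ℝ E : ℕ) * μ (ball 0 (δ / 2)) := by
          rw [Measure.addHaar_ball_mul_of_pos μ u (by positivity), ← ENNReal.ofReal_natCast]
          push_cast
          rfl
  exact_mod_cast (ENNReal.mul_le_mul_iff_left hB0 hBtop).1 hvol

open scoped Classical in
theorem card_filter_mem_lineTube_le {y z : E} {r ξ : ℝ} (hr : 0 < r) (hξ : 0 < ξ)
    (hz : ξ ≤ dist z y) {F : Finset E} (hF : ∀ e ∈ F, ‖e‖ = 1)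
    (hsep : ∀ e ∈ F, ∀ e' ∈ F, e ≠ e' → r / ξ ≤ dist e e') :
    #{e ∈ F | z ∈ lineTube y e r} ≤ 2 * 5 ^ finrank ℝ E := by
  set u := radProj y z
  set δ := r / ξ
  have hpack : ∀ v, #{e ∈ F | e ∈ closedBall v (2 * δ)} ≤ 5 ^ finrank ℝ E := fun v => by
    simpa using card_le_of_le_dist_of_subset_closedBall (div_pos hr hξ) 2 v _
      (fun a ha b hb => hsep a (Finset.mem_filter.1 ha).1 b (Finset.mem_filter.1 hb).1)
      (fun a ha => by exact_mod_cast (Finset.mem_filter.1 ha).2)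
  have hcover : {e ∈ F | z ∈ lineTube y e r} ⊆
      {e ∈ F | e ∈ closedBall u (2 * δ)} ∪ {e ∈ F | e ∈ closedBall (-u) (2 * δ)} := by
    intro e he
    obtain ⟨heF, hzT⟩ := Finset.mem_filter.1 he
    rw [Finset.mem_union, Finset.mem_filter, Finset.mem_filter, mem_closedBall, mem_closedBall,
      ← mul_div_assoc, dist_comm e u, ← dist_neg_neg e, neg_neg, dist_comm (-e)]
    rcases dist_radProj_le_or_dist_neg_le_of_mem_lineTube (hF e heF) hr.le hξ hz hzT with h | h
    · exact Or.inl ⟨heF, h⟩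
    · exact Or.inr ⟨heF, h⟩
  calc #{e ∈ F | z ∈ lineTube y e r}
      ≤ #{e ∈ F | e ∈ closedBall u (2 * δ)} + #{e ∈ F | e ∈ closedBall (-u) (2 * δ)} :=
        (Finset.card_le_card hcover).trans (Finset.card_union_le _ _)
    _ ≤ 2 * 5 ^ finrank ℝ E := by linarith [hpack u, hpack (-u)]

theorem exists_finset_card_le_closedBall_subset_biUnion {ρ : ℝ} (hρ : 0 < ρ) (k : ℕ)
    (y : E) :
    ∃ G : Finset E, #G ≤ (2 * k + 1) ^ finrank ℝ E ∧
      closedBall y (k * ρ) ⊆ ⋃ c ∈ G, closedBall c ρ := by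
  set N := (2 * k + 1) ^ finrank ℝ E
  have hpack : packingNumber ρ.toNNReal (closedBall y (k * ρ)) ≤ N := by
    refine iSup_le fun C => iSup_le fun hCA => iSup_le fun hC => ?_
    by_contra! hlt
    obtain ⟨D, hDC, hD⟩ := Set.exists_subset_encard_eq (Order.add_one_le_of_lt hlt)
    obtain ⟨G, rfl⟩ := (Set.finite_of_encard_eq_coe hD).exists_finset_coe
    have hsep : ∀ a ∈ G, ∀ b ∈ G, a ≠ b → ρ ≤ dist a b := by
      intro a ha b hb hab
      have hab' : ENNReal.ofReal ρ < edist a b := hC (hDC ha) (hDC hb) hab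
      rw [edist_dist, ENNReal.ofReal_lt_ofReal_iff_of_nonneg hρ.le] at hab'
      exact hab'.le
    have hG := card_le_of_le_dist_of_subset_closedBall hρ k y G hsep fun a ha => hCA (hDC ha)
    norm_cast at hD
    omega
  have hcov := (coveringNumber_le_packingNumber _ _).trans hpack
  obtain ⟨_, -, hCfin, hcover, hCcard⟩ :=
    exists_set_encard_eq_coveringNumber (hcov.trans_lt (ENat.natCast_lt_top N)).ne
  obtain ⟨G, rfl⟩ := hCfin.exists_finset_coe
  refine ⟨G, ?_, ?_⟩
  · exact_mod_cast hCcard.trans_le hcov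
  · simpa [Real.coe_toNNReal _ hρ.le] using hcover.subset_iUnion_closedBall

theorem measure_closedBall_le_of_forall_measure_closedBall_le [MeasurableSpace E]
    (ν : Measure E) {ρ : ℝ} (hρ : 0 < ρ) {M : ℝ≥0∞}
    (hν : ∀ x, ν (closedBall x ρ) ≤ M) (k : ℕ) (y : E) :
    ν (closedBall y (k * ρ)) ≤ (2 * k + 1) ^ finrank ℝ E * M := by
  obtain ⟨G, hGcard, hcover⟩ := exists_finset_card_le_closedBall_subset_biUnion hρ k y
  calc ν (closedBall y (k * ρ)) ≤ ν (⋃ c ∈ G, closedBall c ρ) := measure_mono hcover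
    _ ≤ ∑ c ∈ G, ν (closedBall c ρ) := measure_biUnion_finset_le G _
    _ ≤ ∑ _c ∈ G, M := Finset.sum_le_sum fun c _ => hν c
    _ = #G * M := by rw [Finset.sum_const, nsmul_eq_mul]
    _ ≤ (2 * k + 1) ^ finrank ℝ E * M := by gcongr; exact_mod_cast hGcard

theorem card_mul_le_of_le_measure_annulus_inter_lineTube [MeasurableSpace E] [BorelSpace E]
    (ν : Measure E) {y : E} {r ξ : ℝ} (hr : 0 < r) (hξ : 0 < ξ) {M m : ℝ≥0∞}
    (hν : ∀ x, ν (closedBall x ξ) ≤ M) {F : Finset E} (hF : ∀ e ∈ F, ‖e‖ = 1)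
    (hsep : ∀ e ∈ F, ∀ e' ∈ F, e ≠ e' → r / ξ ≤ dist e e')
    (hmass : ∀ e ∈ F,
      m ≤ ν ({z | ξ ≤ dist z y ∧ dist z y < 2 * ξ} ∩ lineTube y e r)) :
    #F * m ≤ 2 * 25 ^ finrank ℝ E * M := by
  classical
  set S : E → Set E := fun e => {z | ξ ≤ dist z y ∧ dist z y < 2 * ξ} ∩ lineTube y e r
  have hS_meas : ∀ e ∈ F, MeasurableSet (S e) := fun e _ =>
    ((measurableSet_le measurable_const (measurable_id.dist measurable_const)).inter
      (measurableSet_lt (measurable_id.dist measurable_const) measurable_const)).inter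
      isClosed_cthickening.measurableSet
  have hoverlap : ∀ z, #{e ∈ F | z ∈ S e} ≤ 2 * 5 ^ finrank ℝ E := by
    intro z
    by_cases hz : ξ ≤ dist z y
    · exact (Finset.card_le_card (Finset.monotone_filter_right _ fun _ _ he => he.2)).trans
        (card_filter_mem_lineTube_le hr hξ hz hF hsep)
    · simp [S, hz]
  have hS_sub : ⋃ e ∈ F, S e ⊆ closedBall y (2 * ξ) :=
    Set.iUnion₂_subset fun e _ z hz => mem_closedBall.2 hz.1.2.le
  have hball : ν (closedBall y (2 * ξ)) ≤ 5 ^ finrank ℝ E * M := by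
    simpa [show (2 * 2 + 1 : ℝ≥0∞) = 5 by norm_num] using
      measure_closedBall_le_of_forall_measure_closedBall_le ν hξ hν 2 y
  calc #F * m = ∑ _e ∈ F, m := by simp
    _ ≤ ∑ e ∈ F, ν (S e) := Finset.sum_le_sum hmass
    _ ≤ (2 * 5 ^ finrank ℝ E : ℕ) * ν (⋃ e ∈ F, S e) :=
        sum_measure_le_mul_measure_biUnion ν hS_meas hoverlap
    _ ≤ (2 * 5 ^ finrank ℝ E : ℕ) * (5 ^ finrank ℝ E * M) := by
        gcongr
        exact (measure_mono hS_sub).trans hball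
    _ = 2 * 25 ^ finrank ℝ E * M := by
        push_cast
        rw [show (25 : ℝ≥0∞) = 5 * 5 by norm_num, mul_pow]
        ring

end FiniteDimensional

/-- Radial counting bound: a family of `r`-tubes through `y` with `(r/ξ)`-separated directions,
each carrying `ν`-mass `≥ m` in the annulus `A(y,ξ,2ξ)`, satisfies `N·m ≲ C ξ^s` for an
`s`-Frostman measure `ν`, since such tubes have bounded overlap outside `B(y,ξ)`. -/
theorem separated_tubes_through_point_count :
    ∃ A : ℝ, 0 < A ∧
      ∀ (y : E2) (r ξ s m C : ℝ), 0 < r → r ≤ ξ → 0 < s → 0 ≤ m → 0 < C →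
      ∀ (ν : Measure E2), IsProbabilityMeasure ν →
        (∀ (x : E2) (ρ : ℝ), 0 < ρ → ν (closedBall x ρ) ≤ ENNReal.ofReal (C * ρ ^ s)) →
      ∀ (F : Finset E2), (∀ e ∈ F, ‖e‖ = 1) →
        (∀ e ∈ F, ∀ e' ∈ F, e ≠ e' → r / ξ ≤ dist e e') →
        (∀ e ∈ F, ENNReal.ofReal m ≤
          ν ({z : E2 | ξ ≤ dist z y ∧ dist z y < 2 * ξ} ∩
              cthickening r {p : E2 | ∃ t : ℝ, p = y + t • e})) →
        (F.card : ℝ) * m ≤ A * C * ξ ^ s := by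
  refine ⟨1250, by norm_num, ?_⟩
  intro y r ξ s m C hr hrξ _ _ hC ν _ hfrost F hunit hsep hmass
  have hξ : 0 < ξ := hr.trans_le hrξ
  have hcount := card_mul_le_of_le_measure_annulus_inter_lineTube ν hr hξ
    (fun x => hfrost x ξ hξ) hunit hsep hmass
  rw [finrank_euclideanSpace_fin, ← ENNReal.ofReal_natCast,
    ← ENNReal.ofReal_mul (Nat.cast_nonneg _)] at hcount
  rw [← ENNReal.ofReal_le_ofReal_iff (by positivity), mul_assoc 1250,
    ENNReal.ofReal_mul (p := 1250) (by norm_num)]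
  convert hcount using 2
  norm_num
end
end
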